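/- arXiv:math/0504051 — 12 statements merged into one kernel-verified Lean document; each statement's English description precedes it below -/
import Mathlib

section
/- Let G be a finite group and let S and T be finite G-sets. If |S^H| = |T^H| holds for every subgroup H ≤ G, then S and T are isomorphic as G-sets. (This expresses the injectivity of the character map char^G : A(G) → ∏_{(H)∈ccs(G)} ℤ, [S] ↦ (|S^H|)_{(H)}, on the Burnside ring of a finite group.) -/
open MulAction

section Aux
variable {G : Type*} [Group G] {X Y : Type*} [MulAction G X] [MulAction G Y]

lemma symm_equivariant (e : X ≃ Y) (he : ∀ (g : G) x, e (g • x) = g • e x) :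
    ∀ (g : G) (y : Y), e.symm (g • y) = g • e.symm y := by
  intro g y
  apply e.injective
  rw [Equiv.apply_symm_apply, he, Equiv.apply_symm_apply]

noncomputable def fixedCongr (K : Subgroup G) (e : X ≃ Y)
    (he : ∀ (g : G) x, e (g • x) = g • e x) :
    fixedPoints K X ≃ fixedPoints K Y where
  toFun x := ⟨e x.1, fun k => by
    have hx : (k : G) • x.1 = x.1 := x.2 k
    show (k : G) • e x.1 = e x.1
    rw [← he, hx]⟩
  invFun y := ⟨e.symm y.1, fun k => by
    have hy : (k : G) • y.1 = y.1 := y.2 k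
    show (k : G) • e.symm y.1 = e.symm y.1
    rw [← symm_equivariant e he, hy]⟩
  left_inv x := Subtype.ext (e.symm_apply_apply x.1)
  right_inv y := Subtype.ext (e.apply_symm_apply y.1)

/-- the complement of an orbit, as a `G`-set -/
instance orbitComplAction (a : X) : MulAction G {x : X // x ∉ orbit G a} where
  smul g x := ⟨g • x.1, fun hc => x.2 (by
    have := mapsTo_smul_orbit g⁻¹ a hc
    simpa using this)⟩
  one_smul x := Subtype.ext (one_smul G x.1)
  mul_smul g g' x := Subtype.ext (mul_smul g g' x.1)

noncomputable def fixedSumEquiv (K : Subgroup G) (a : X) [DecidablePred (· ∈ orbit G a)] :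
    fixedPoints K X ≃
      (fixedPoints K (orbit G a) ⊕ fixedPoints K {x : X // x ∉ orbit G a}) where
  toFun x := if hx : x.1 ∈ orbit G a then
      Sum.inl ⟨⟨x.1, hx⟩, fun k => Subtype.ext (x.2 k)⟩
    else
      Sum.inr ⟨⟨x.1, hx⟩, fun k => Subtype.ext (x.2 k)⟩
  invFun := Sum.elim (fun y => ⟨y.1.1, fun k => congrArg Subtype.val (y.2 k)⟩)
      (fun y => ⟨y.1.1, fun k => congrArg Subtype.val (y.2 k)⟩)
  left_inv x := by dsimp only; split <;> rfl
  right_inv y := by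
    rcases y with y | y
    · simp only [Sum.elim_inl]
      exact dif_pos y.1.2
    · simp only [Sum.elim_inr]
      exact dif_neg y.1.2


open MulAction

section Aux2
variable {G : Type*} [Group G] {X Y : Type*} [MulAction G X] [MulAction G Y]

lemma orbitEquiv_symm_equivariant (a : X) (g : G) (q : G ⧸ stabilizer G a) :
    (orbitEquivQuotientStabilizer G a).symm (g • q) =
      g • (orbitEquivQuotientStabilizer G a).symm q := by
  obtain ⟨b, rfl⟩ := QuotientGroup.mk_surjective q
  apply Subtype.ext
  rw [MulAction.Quotient.smul_mk]
  rw [orbitEquivQuotientStabilizer_symm_apply, orbit.coe_smul,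
    orbitEquivQuotientStabilizer_symm_apply, smul_eq_mul, mul_smul]

/-- The equivariant equivalence between two orbits with equal stabilizers. -/
noncomputable def orbitCongr {a : X} {b : Y}
    (hab : stabilizer G a = stabilizer G b) : orbit G a ≃ orbit G b :=
  (orbitEquivQuotientStabilizer G a).trans
    ((Subgroup.quotientEquivOfEq hab).trans (orbitEquivQuotientStabilizer G b).symm)

lemma orbitCongr_equivariant {a : X} {b : Y} (hab : stabilizer G a = stabilizer G b)
    (g : G) (x : orbit G a) :
    orbitCongr hab (g • x) = g • orbitCongr hab x := by
  have hA : ∀ (g : G) (x : orbit G a),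
      (orbitEquivQuotientStabilizer G a) (g • x) =
        g • (orbitEquivQuotientStabilizer G a) x := by
    intro g x
    have := symm_equivariant (orbitEquivQuotientStabilizer G a).symm
      (orbitEquiv_symm_equivariant a) g x
    simpa using this
  have hQ : ∀ (g : G) (q : G ⧸ stabilizer G a),
      (Subgroup.quotientEquivOfEq hab) (g • q) =
        g • (Subgroup.quotientEquivOfEq hab) q := by
    intro g q
    obtain ⟨c, rfl⟩ := QuotientGroup.mk_surjective q
    rw [MulAction.Quotient.smul_mk, Subgroup.quotientEquivOfEq_mk,
      Subgroup.quotientEquivOfEq_mk, MulAction.Quotient.smul_mk]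
  show (orbitEquivQuotientStabilizer G b).symm
      ((Subgroup.quotientEquivOfEq hab) ((orbitEquivQuotientStabilizer G a) (g • x))) = _
  rw [hA, hQ, orbitEquiv_symm_equivariant]
  rfl

end Aux2
end Aux
theorem burnside_aux (G : Type u) [Group G] [Finite G] (n : ℕ) :
    ∀ (S : Type v) (T : Type w) [Finite S] [Finite T] [MulAction G S] [MulAction G T],
      Nat.card S = n →
      (∀ H : Subgroup G,
        Nat.card (fixedPoints H S) = Nat.card (fixedPoints H T)) →
      ∃ e : S ≃ T, ∀ (g : G) (s : S), e (g • s) = g • e s := by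
  induction n using Nat.strong_induction_on with
  | _ n ih =>
  intro S T _ _ _ _ hn h
  classical
  by_cases hS : IsEmpty S
  · -- T must be empty too
    have hT : IsEmpty T := by
      by_contra hT
      have hne : Nonempty T := not_isEmpty_iff.mp hT
      have h1 : 0 < Nat.card (fixedPoints (⊥ : Subgroup G) T) := by
        obtain ⟨t⟩ := hne
        have ht : t ∈ fixedPoints (⊥ : Subgroup G) T := by
          intro m
          have hm : (m : G) = 1 := Subgroup.mem_bot.mp m.2
          show (m : G) • t = t
          rw [hm, one_smul]
        exact Nat.card_pos_iff.mpr ⟨⟨⟨t, ht⟩⟩, inferInstance⟩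
      have h2 : Nat.card (fixedPoints (⊥ : Subgroup G) S) = 0 := by
        have : IsEmpty (fixedPoints (⊥ : Subgroup G) S) :=
          ⟨fun x => hS.elim x.1⟩
        exact Nat.card_of_isEmpty
      rw [h ⊥] at h2
      omega
    exact ⟨Equiv.equivOfIsEmpty S T, fun g s => hS.elim s⟩
  · have hSne : Nonempty S := not_isEmpty_iff.mp hS
    -- the set of subgroups with nonempty fixed-point set in S
    set M : Set (Subgroup G) := {H | (fixedPoints H S).Nonempty} with hM
    have hbot : (⊥ : Subgroup G) ∈ M := by
      obtain ⟨s⟩ := hSne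
      refine ⟨s, fun m => ?_⟩
      have hm : (m : G) = 1 := Subgroup.mem_bot.mp m.2
      show (m : G) • s = s
      rw [hm, one_smul]
    obtain ⟨H, hHM, hmax⟩ :=
      Set.Finite.exists_maximalFor id M (Set.toFinite M) ⟨⊥, hbot⟩
    obtain ⟨s, hs⟩ := hHM
    -- fixed points for T nonempty
    have hTfix : (fixedPoints H T).Nonempty := by
      have h1 : 0 < Nat.card (fixedPoints H S) :=
        Nat.card_pos_iff.mpr ⟨⟨⟨s, hs⟩⟩, inferInstance⟩
      rw [h H] at h1
      obtain ⟨⟨y, hy⟩⟩ := (Nat.card_pos_iff.mp h1).1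
      exact ⟨y, hy⟩
    obtain ⟨t, ht⟩ := hTfix
    -- stabilizers equal H
    have hstabs : stabilizer G s = H := by
      refine le_antisymm (hmax ⟨s, fun m => m.2⟩ (fun g hg => hs ⟨g, hg⟩)) (fun g hg => hs ⟨g, hg⟩)
    have hstabt : stabilizer G t = H := by
      refine le_antisymm (hmax ?_ (fun g hg => ht ⟨g, hg⟩)) (fun g hg => ht ⟨g, hg⟩)
      have h1 : 0 < Nat.card (fixedPoints (stabilizer G t) T) :=
        Nat.card_pos_iff.mpr ⟨⟨⟨t, fun m => m.2⟩⟩, inferInstance⟩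
      rw [← h (stabilizer G t)] at h1
      obtain ⟨⟨y, hy⟩⟩ := (Nat.card_pos_iff.mp h1).1
      exact ⟨y, hy⟩
    have hst : stabilizer G s = stabilizer G t := hstabs.trans hstabt.symm
    -- match the orbits
    let eo : orbit G s ≃ orbit G t := orbitCongr hst
    have heo := orbitCongr_equivariant hst
    -- complements
    have hcompl : ∀ K : Subgroup G,
        Nat.card (fixedPoints K {x : S // x ∉ orbit G s}) =
          Nat.card (fixedPoints K {x : T // x ∉ orbit G t}) := by
      intro K
      have hdS := Nat.card_congr (fixedSumEquiv K s)
      have hdT := Nat.card_congr (fixedSumEquiv K t)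
      rw [Nat.card_sum] at hdS hdT
      have horb : Nat.card (fixedPoints K (orbit G s)) =
          Nat.card (fixedPoints K (orbit G t)) :=
        Nat.card_congr (fixedCongr K eo heo)
      have := h K
      omega
    -- cardinality decreases
    have hsplit : Nat.card (orbit G s) + Nat.card {x : S // x ∉ orbit G s} = n := by
      rw [← hn, ← Nat.card_sum]
      exact Nat.card_congr (Equiv.sumCompl (· ∈ orbit G s))
    have horbpos : 0 < Nat.card (orbit G s) :=
      Nat.card_pos_iff.mpr ⟨⟨⟨s, mem_orbit_self s⟩⟩, inferInstance⟩
    obtain ⟨e₂, he₂⟩ := ih (Nat.card {x : S // x ∉ orbit G s}) (by omega)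
      {x : S // x ∉ orbit G s} {x : T // x ∉ orbit G t} rfl hcompl
    -- assemble
    refine ⟨(Equiv.sumCompl (· ∈ orbit G s)).symm.trans
      ((Equiv.sumCongr eo e₂).trans (Equiv.sumCompl (· ∈ orbit G t))), ?_⟩
    intro g x
    by_cases hx : x ∈ orbit G s
    · have hgx : g • x ∈ orbit G s := mapsTo_smul_orbit g s hx
      simp only [Equiv.trans_apply, Equiv.sumCompl_symm_apply_of_pos hgx,
        Equiv.sumCompl_symm_apply_of_pos hx, Equiv.sumCongr_apply, Sum.map_inl,
        Equiv.sumCompl_apply_inl]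
      have : (⟨g • x, hgx⟩ : orbit G s) = g • (⟨x, hx⟩ : orbit G s) := rfl
      rw [this, heo]
      rfl
    · have hgx : g • x ∉ orbit G s := fun hc => hx (by
        have := mapsTo_smul_orbit g⁻¹ s hc
        simpa using this)
      simp only [Equiv.trans_apply, Equiv.sumCompl_symm_apply_of_neg hgx,
        Equiv.sumCompl_symm_apply_of_neg hx, Equiv.sumCongr_apply, Sum.map_inr,
        Equiv.sumCompl_apply_inr]
      have : (⟨g • x, hgx⟩ : {x : S // x ∉ orbit G s}) =
          g • (⟨x, hx⟩ : {x : S // x ∉ orbit G s}) := rfl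
      rw [this, he₂]
      rfl

/-- **Injectivity of the character map of the Burnside ring of a finite group.**
If two finite `G`-sets have the same number of `H`-fixed points for every
subgroup `H ≤ G`, then they are isomorphic as `G`-sets. -/
theorem burnside_character_injective
    (G : Type*) [Group G] [Finite G]
    (S T : Type*) [Finite S] [Finite T] [MulAction G S] [MulAction G T]
    (h : ∀ H : Subgroup G,
      Nat.card (MulAction.fixedPoints H S) = Nat.card (MulAction.fixedPoints H T)) :
    ∃ e : S ≃ T, ∀ (g : G) (s : S), e (g • s) = g • e s :=
  burnside_aux G (Nat.card S) S T rfl h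
end

section
/- Let G be a finite group, H ≤ G a subgroup, and S a finite G-set. Then Σ_{C ≤ W_G(H), C cyclic} φ(|C|) · |S^{p_H^{-1}(C)}| ≡ 0 (mod |W_G(H)|), where the sum runs over all cyclic subgroups C of the Weyl group W_G(H) = N_G(H)/H, and p_H^{-1}(C) ≤ G acts on S by restricting the G-action. (Necessity direction of the Burnside ring congruences for finite groups; summing over all cyclic subgroups C is equivalent to the sum over conjugacy classes (C) of cyclic subgroups weighted by |Gen(C)|·[W_G(H):N_{W_G(H)}C], since fixed-point counts are conjugation-invariant.) -/
open MulAction Subgroup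

section Counting

variable {W : Type*} [Group W] [Finite W]

lemma aux_isCyclic_zpowers (w : W) : IsCyclic ↥(Subgroup.zpowers w) := by
  refine ⟨⟨⟨w, mem_zpowers w⟩, ?_⟩⟩
  rintro ⟨x, hx⟩
  obtain ⟨k, rfl⟩ := mem_zpowers_iff.mp hx
  exact ⟨k, by ext; simp⟩

lemma aux_zpowers_coe_eq_iff (C : Subgroup W) (x : ↥C) :
    Subgroup.zpowers (x : W) = C ↔ orderOf x = Nat.card C := by
  constructor
  · intro h
    rw [← orderOf_coe, ← Nat.card_zpowers, h]
  · intro h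
    have hle : Subgroup.zpowers (x : W) ≤ C := zpowers_le.mpr x.2
    have hcard : Nat.card (Subgroup.zpowers (x : W)) = Nat.card C := by
      rw [Nat.card_zpowers, orderOf_coe, h]
    apply SetLike.coe_injective
    refine Set.eq_of_subset_of_ncard_le hle ?_ (Set.toFinite _)
    rw [← Nat.card_coe_set_eq, ← Nat.card_coe_set_eq]
    exact le_of_eq hcard.symm

lemma aux_fiber_card [Fintype W] [DecidableEq (Subgroup W)] (C : Subgroup W)
    (hC : IsCyclic C) :
    (Finset.univ.filter fun w : W => Subgroup.zpowers w = C).card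
      = Nat.totient (Nat.card C) := by
  classical
  haveI : Fintype ↥C := Fintype.ofFinite _
  haveI := hC
  have h2 : (Finset.univ.filter fun x : ↥C => orderOf x = Fintype.card ↥C).card
      = Nat.totient (Fintype.card ↥C) :=
    IsCyclic.card_orderOf_eq_totient dvd_rfl
  rw [Nat.card_eq_fintype_card, ← h2]
  apply Finset.card_bij (fun w hw => (⟨w, by
    rw [← (Finset.mem_filter.mp hw).2]; exact mem_zpowers w⟩ : ↥C))
  · intro w hw
    have hzp := (Finset.mem_filter.mp hw).2
    simp only [Finset.mem_filter, Finset.mem_univ, true_and]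
    rw [← Nat.card_eq_fintype_card]
    exact (aux_zpowers_coe_eq_iff C _).mp hzp
  · intro a ha b hb hab
    exact congrArg Subtype.val hab
  · intro x hx
    have hx' := (Finset.mem_filter.mp hx).2
    refine ⟨(x : W), ?_, by simp⟩
    simp only [Finset.mem_filter, Finset.mem_univ, true_and]
    apply (aux_zpowers_coe_eq_iff C x).mpr
    rw [hx', Nat.card_eq_fintype_card]

lemma aux_sum_cyclic_eq (f : Subgroup W → ℕ) :
    (∑ᶠ (C : Subgroup W) (_ : IsCyclic C), Nat.totient (Nat.card C) * f C)
      = ∑ᶠ w : W, f (Subgroup.zpowers w) := by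
  classical
  haveI : Fintype W := Fintype.ofFinite _
  haveI : Fintype (Subgroup W) := Fintype.ofFinite _
  rw [finsum_eq_sum_of_fintype, finsum_eq_sum_of_fintype]
  have hif : ∀ C : Subgroup W,
      (∑ᶠ _ : IsCyclic C, Nat.totient (Nat.card C) * f C)
        = if IsCyclic C then Nat.totient (Nat.card C) * f C else 0 :=
    fun C => finsum_eq_if
  simp_rw [hif]
  rw [← Finset.sum_filter]
  have himg : (Finset.univ.filter fun C : Subgroup W => IsCyclic C)
      = Finset.univ.image fun w : W => Subgroup.zpowers w := by
    ext C
    simp only [Finset.mem_filter, Finset.mem_univ, true_and, Finset.mem_image]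
    constructor
    · intro hC
      obtain ⟨g, hg⟩ := @IsCyclic.exists_generator ↥C _ hC
      refine ⟨(g : W), ?_⟩
      exact (aux_zpowers_coe_eq_iff C g).mpr (orderOf_eq_card_of_forall_mem_zpowers hg)
    · rintro ⟨w, -, rfl⟩
      exact aux_isCyclic_zpowers w
  rw [himg, Finset.sum_comp (fun C : Subgroup W => f C) (fun w : W => Subgroup.zpowers w)]
  apply Finset.sum_congr rfl
  intro C hC
  obtain ⟨w, -, rfl⟩ := Finset.mem_image.mp hC
  rw [aux_fiber_card _ (aux_isCyclic_zpowers w), smul_eq_mul]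

end Counting

section QuotientAction

variable {N : Type*} [Group N] {S : Type*} [MulAction N S] (M : Subgroup N) [M.Normal]

/-- The action of `N` on the `M`-fixed points. -/
def auxFixAct : MulAction N (fixedPoints M S) where
  smul n t := ⟨n • (t : S), by
    intro m
    have hm : (n⁻¹ * (m : N) * n) ∈ M := by
      simpa [mul_assoc] using Subgroup.Normal.conj_mem ‹M.Normal› _ m.2 n⁻¹
    have ht : (⟨n⁻¹ * (m : N) * n, hm⟩ : M) • (t : S) = (t : S) := t.2 _
    have ht' : (n⁻¹ * (m : N) * n) • (t : S) = (t : S) := ht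
    show (m : N) • n • (t : S) = n • (t : S)
    calc (m : N) • n • (t : S) = (n * (n⁻¹ * (m : N) * n)) • (t : S) := by
          rw [smul_smul]; congr 1; group
      _ = n • (t : S) := by rw [mul_smul, ht']⟩
  one_smul t := Subtype.ext (one_smul N (t : S))
  mul_smul a b t := Subtype.ext (mul_smul a b (t : S))

theorem aux_L1 [Finite N] [Finite S] :
    Nat.card (N ⧸ M) ∣ ∑ᶠ w : N ⧸ M,
      Nat.card (fixedPoints (Subgroup.comap (QuotientGroup.mk' M) (Subgroup.zpowers w)) S) := by
  classical
  haveI : Fintype (N ⧸ M) := Fintype.ofFinite _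
  letI actN : MulAction N (fixedPoints M S) := auxFixAct M
  let φ : N ⧸ M →* Equiv.Perm (fixedPoints M S) :=
    QuotientGroup.lift M (MulAction.toPermHom N (fixedPoints M S))
      (by
        intro m hm
        ext t
        exact t.2 ⟨m, hm⟩)
  letI actW : MulAction (N ⧸ M) (fixedPoints M S) := MulAction.compHom _ φ
  have hsmul : ∀ (n : N) (t : fixedPoints M S),
      ((QuotientGroup.mk n : N ⧸ M) • t : fixedPoints M S) = n • t := fun n t => rfl
  have key : ∀ w : N ⧸ M,
      (fixedPoints (Subgroup.comap (QuotientGroup.mk' M) (Subgroup.zpowers w)) S)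
        ≃ (fixedBy (fixedPoints M S) w) := by
    intro w
    have memM : ∀ (s : S),
        s ∈ fixedPoints (Subgroup.comap (QuotientGroup.mk' M) (Subgroup.zpowers w)) S →
        s ∈ fixedPoints M S := by
      intro s hs m
      have hmem : (m : N) ∈ Subgroup.comap (QuotientGroup.mk' M) (Subgroup.zpowers w) := by
        simp only [Subgroup.mem_comap]
        have : QuotientGroup.mk' M (m : N) = 1 := (QuotientGroup.eq_one_iff _).mpr m.2
        rw [this]; exact one_mem _
      exact hs ⟨(m : N), hmem⟩
    refine ⟨fun s => ⟨⟨(s : S), memM s s.2⟩, ?_⟩, fun t => ⟨((t : fixedPoints M S) : S), ?_⟩,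
      fun s => rfl, fun t => rfl⟩
    · -- fixed by w
      obtain ⟨n, hn⟩ := QuotientGroup.mk'_surjective M w
      subst hn
      have hnmem : n ∈ Subgroup.comap (QuotientGroup.mk' M)
          (Subgroup.zpowers (QuotientGroup.mk' M n)) := by
        simp only [Subgroup.mem_comap]; exact mem_zpowers _
      exact Subtype.ext (s.2 ⟨n, hnmem⟩)
    · -- fixed by all of the preimage subgroup
      rintro ⟨x, hx⟩
      have hw : w ∈ stabilizer (N ⧸ M) (t : fixedPoints M S) := t.2
      have hx' : (QuotientGroup.mk x : N ⧸ M) ∈ Subgroup.zpowers w := hx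
      have : (QuotientGroup.mk x : N ⧸ M) ∈ stabilizer (N ⧸ M) (t : fixedPoints M S) :=
        Subgroup.zpowers_le.mpr hw hx'
      have h2 : (QuotientGroup.mk x : N ⧸ M) • (t : fixedPoints M S) = t := this
      rw [hsmul] at h2
      exact congrArg Subtype.val h2
  haveI : Fintype (fixedPoints M S) := Fintype.ofFinite _
  haveI : ∀ w : N ⧸ M, Fintype (fixedBy (fixedPoints M S) w) := fun w => Fintype.ofFinite _
  haveI : Fintype (orbitRel.Quotient (N ⧸ M) (fixedPoints M S)) := Fintype.ofFinite _
  have hb := MulAction.sum_card_fixedBy_eq_card_orbits_mul_card_group (N ⧸ M) (fixedPoints M S)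
  rw [finsum_eq_sum_of_fintype]
  have : (∑ w : N ⧸ M,
      Nat.card (fixedPoints (Subgroup.comap (QuotientGroup.mk' M) (Subgroup.zpowers w)) S))
      = ∑ w : N ⧸ M, Fintype.card (fixedBy (fixedPoints M S) w) := by
    apply Finset.sum_congr rfl
    intro w _
    rw [Nat.card_congr (key w), Nat.card_eq_fintype_card]
  rw [this, hb, Nat.card_eq_fintype_card]
  exact dvd_mul_left _ _

end QuotientAction

lemma aux_fixedPoints_map_subtype {G : Type*} [Group G] {S : Type*} [MulAction G S]
    (N : Subgroup G) (K : Subgroup ↥N) :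
    fixedPoints ↥(K.map N.subtype) S = fixedPoints ↥K S := by
  ext s
  simp only [mem_fixedPoints]
  constructor
  · intro h x
    exact h ⟨N.subtype x, Subgroup.mem_map_of_mem _ x.2⟩
  · intro h x
    obtain ⟨n, hn, hnx⟩ := Subgroup.mem_map.mp x.2
    have := h ⟨n, hn⟩
    show (x : G) • s = s
    rw [← hnx]
    exact this

/-- **Burnside ring congruences for finite groups (necessity direction).**
For a finite group `G`, a subgroup `H ≤ G` with Weyl group `W_G(H) = N_G(H)/H`
and a finite `G`-set `S`, the sum over all cyclic subgroups `C ≤ W_G(H)` of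
`φ(|C|) · |S^{p_H⁻¹(C)}|` is divisible by `|W_G(H)|`. -/
theorem burnside_congruence_finite_group
    (G : Type*) [Group G] [Finite G]
    (S : Type*) [Finite S] [MulAction G S] (H : Subgroup G) :
    Nat.card (↥(Subgroup.normalizer (H : Set G)) ⧸ H.subgroupOf (Subgroup.normalizer (H : Set G))) ∣
      ∑ᶠ (C : Subgroup (↥(Subgroup.normalizer (H : Set G)) ⧸ H.subgroupOf (Subgroup.normalizer (H : Set G)))) (_ : IsCyclic C),
        Nat.totient (Nat.card C) *
          Nat.card (MulAction.fixedPoints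
            ((C.comap (QuotientGroup.mk' (H.subgroupOf (Subgroup.normalizer (H : Set G))))).map
              (Subgroup.normalizer (H : Set G)).subtype) S) := by
  rw [aux_sum_cyclic_eq (fun C => Nat.card (MulAction.fixedPoints
      ((C.comap (QuotientGroup.mk' (H.subgroupOf (Subgroup.normalizer (H : Set G))))).map
        (Subgroup.normalizer (H : Set G)).subtype) S))]
  have heq : ∀ w : ↥(Subgroup.normalizer (H : Set G)) ⧸ H.subgroupOf (Subgroup.normalizer (H : Set G)),
      Nat.card (MulAction.fixedPoints
        (((Subgroup.zpowers w).comap (QuotientGroup.mk' (H.subgroupOf (Subgroup.normalizer (H : Set G))))).map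
          (Subgroup.normalizer (H : Set G)).subtype) S)
      = Nat.card (fixedPoints
          (Subgroup.comap (QuotientGroup.mk' (H.subgroupOf (Subgroup.normalizer (H : Set G))))
            (Subgroup.zpowers w)) S) := by
    intro w
    rw [aux_fixedPoints_map_subtype]
  simp_rw [heq]
  exact aux_L1 (H.subgroupOf (Subgroup.normalizer (H : Set G)))
end

section
/- Let G be a finite group and x a function from the set of subgroups of G to ℤ that is invariant under conjugation, i.e., x(gHg^{-1}) = x(H) for all g ∈ G and all subgroups H ≤ G. Suppose that for every subgroup H ≤ G one has Σ_{C ≤ W_G(H), C cyclic} φ(|C|) · x(p_H^{-1}(C)) ≡ 0 (mod |W_G(H)|). Then there exist finite G-sets S and T such that x(H) = |S^H| − |T^H| for every subgroup H ≤ G. (Sufficiency direction of the Burnside ring congruences for finite groups: such an x lies in the image of the character map of the Burnside ring A(G).) -/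
/-- A finite `G`-set: a finite type equipped with a `G`-action. -/
structure FiniteGSet (G : Type) [Group G] where
  carrier : Type
  [finite : Finite carrier]
  [mulAction : MulAction G carrier]

attribute [instance] FiniteGSet.finite FiniteGSet.mulAction

set_option linter.unusedSectionVars false
set_option maxHeartbeats 1000000
open MulAction Subgroup
open scoped Classical

set_option maxHeartbeats 1000000
open MulAction Subgroup
open scoped Classical

variable {G : Type} [Group G] [Finite G]

attribute [-instance] mulLeftCosetsCompSubtypeVal

noncomputable def mark (K H : Subgroup G) : ℤ :=
  Nat.card (MulAction.fixedPoints H (G ⧸ K))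

lemma mem_fixedPoints_quot_iff {K H : Subgroup G} (g : G) :
    (QuotientGroup.mk g : G ⧸ K) ∈ fixedPoints H (G ⧸ K) ↔ ∀ h ∈ H, g⁻¹ * h * g ∈ K := by
  constructor
  · intro hf h hh
    have := hf ⟨h, hh⟩
    have : ((h * g : G) : G ⧸ K) = (g : G ⧸ K) := by
      rw [← this]; rfl
    have := QuotientGroup.eq.mp this.symm
    simpa [mul_assoc] using this
  · intro hyp h
    show (h : G) • (QuotientGroup.mk g : G ⧸ K) = _
    show ((h * g : G) : G ⧸ K) = (g : G ⧸ K)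
    exact (QuotientGroup.eq.mpr (by simpa [mul_assoc] using hyp h h.2)).symm

lemma card_fixedPoints_conj (g : G) (H : Subgroup G) (X : Type) [MulAction G X] :
    Nat.card (fixedPoints (H.map (MulAut.conj g).toMonoidHom) X) =
      Nat.card (fixedPoints H X) := by
  apply Nat.card_congr
  refine Equiv.subtypeEquiv (MulAction.toPerm g⁻¹ : Equiv.Perm X) fun s => ?_
  simp only [MulAction.toPerm_apply]
  constructor
  · intro hs h
    have := hs ⟨g * h * g⁻¹, ⟨(h : G), h.2, rfl⟩⟩
    show (h : G) • g⁻¹ • s = g⁻¹ • s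
    have : (g * (h : G) * g⁻¹) • s = s := this
    rw [mul_smul, mul_smul] at this
    calc (h : G) • g⁻¹ • s = g⁻¹ • (g • (h : G) • g⁻¹ • s) := by
          rw [← mul_smul g⁻¹ g, inv_mul_cancel, one_smul]
    _ = g⁻¹ • s := by rw [this]
  · rintro hs ⟨k, ⟨h, hh, rfl⟩⟩
    have := hs ⟨h, hh⟩
    have hthis : h • g⁻¹ • s = g⁻¹ • s := this
    show (MulAut.conj g h : G) • s = s
    have : (g * h * g⁻¹) • s = g • h • g⁻¹ • s := by rw [mul_smul, mul_smul]
    rw [MulAut.conj_apply, this, hthis, ← mul_smul, mul_inv_cancel, one_smul]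



lemma mark_conj (K : Subgroup G) (g : G) (H : Subgroup G) :
    mark K (H.map (MulAut.conj g).toMonoidHom) = mark K H := by
  unfold mark; rw [card_fixedPoints_conj]

lemma mark_eq_zero (K H : Subgroup G) (hcard : Nat.card K ≤ Nat.card H)
    (hnc : ∀ g : G, K.map (MulAut.conj g).toMonoidHom ≠ H) : mark K H = 0 := by
  unfold mark
  rw [Int.natCast_eq_zero, Nat.card_eq_zero]
  left
  rw [isEmpty_subtype]
  intro q
  induction q using QuotientGroup.induction_on with
  | H g =>
  intro hf
  rw [mem_fixedPoints_quot_iff] at hf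
  have hle : H ≤ K.map (MulAut.conj g).toMonoidHom := by
    intro h hh
    exact ⟨g⁻¹ * h * g, hf h hh, by simp [MulAut.conj_apply, mul_assoc]⟩
  have hcardmap : Nat.card (K.map (MulAut.conj g).toMonoidHom) = Nat.card K :=
    (Nat.card_congr (K.equivMapOfInjective _ (MulAut.conj g).injective).toEquiv).symm
  exact hnc g (Subgroup.eq_of_le_of_card_ge hle (by omega)).symm

lemma mark_self (H : Subgroup G) :
    mark H H = Nat.card (↥(Subgroup.normalizer (H : Set G)) ⧸ H.subgroupOf (Subgroup.normalizer (H : Set G))) := by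
  unfold mark
  rw [Int.natCast_inj]
  apply Nat.card_congr
  symm
  have pf : ∀ n : (Subgroup.normalizer (H : Set G)), (QuotientGroup.mk (n : G) : G ⧸ H) ∈ fixedPoints H (G ⧸ H) := by
    intro n
    rw [mem_fixedPoints_quot_iff]
    intro h hh
    exact (Subgroup.mem_normalizer_iff''.mp n.2 h).mp hh
  refine Equiv.ofBijective
    (fun q => Quotient.liftOn' q (fun n => (⟨QuotientGroup.mk (n : G), pf n⟩ :
      fixedPoints H (G ⧸ H))) ?_) ⟨?_, ?_⟩
  · intro n m hnm
    rw [QuotientGroup.leftRel_apply] at hnm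
    exact Subtype.ext (QuotientGroup.eq.mpr hnm)
  · intro q₁ q₂
    induction q₁ using Quotient.inductionOn' with | h n =>
    induction q₂ using Quotient.inductionOn' with | h m =>
    intro hinj
    have h1 : (QuotientGroup.mk ((n : G)) : G ⧸ H) = QuotientGroup.mk (m : G) :=
      congrArg Subtype.val hinj
    have h2 : (n : G)⁻¹ * (m : G) ∈ H := QuotientGroup.eq.mp h1
    apply Quotient.sound'
    rw [QuotientGroup.leftRel_apply, Subgroup.mem_subgroupOf]
    simpa using h2
  · rintro ⟨q, hq⟩
    induction q using QuotientGroup.induction_on with | H g =>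
    rw [mem_fixedPoints_quot_iff] at hq
    have hle : H.map (MulAut.conj g⁻¹).toMonoidHom ≤ H := by
      rintro - ⟨h, hh, rfl⟩
      simpa [MulAut.conj_apply, mul_assoc] using hq h hh
    have hcardmap : Nat.card (H.map (MulAut.conj g⁻¹).toMonoidHom) = Nat.card H :=
      (Nat.card_congr (H.equivMapOfInjective _ (MulAut.conj g⁻¹).injective).toEquiv).symm
    have heq : H.map (MulAut.conj g⁻¹).toMonoidHom = H :=
      Subgroup.eq_of_le_of_card_ge hle (by omega)
    have hgn : g ∈ (Subgroup.normalizer (H : Set G)) := by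
      rw [Subgroup.mem_normalizer_iff'']
      intro h
      constructor
      · intro hh
        have : g⁻¹ * h * g ∈ H.map (MulAut.conj g⁻¹).toMonoidHom :=
          ⟨h, hh, by simp [MulAut.conj_apply, mul_assoc]⟩
        rwa [heq] at this
      · intro hh
        rw [← heq] at hh
        obtain ⟨h', hh', he⟩ := hh
        simp only [MulEquiv.coe_toMonoidHom, MulAut.conj_apply, inv_inv] at he
        have : h' = h := by
          have h3 := mul_right_cancel he
          exact mul_left_cancel h3
        rwa [← this]
    exact ⟨QuotientGroup.mk (⟨g, hgn⟩ : (Subgroup.normalizer (H : Set G))), rfl⟩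


abbrev WQ (H : Subgroup G) : Type := ↥(Subgroup.normalizer (H : Set G)) ⧸ H.subgroupOf (Subgroup.normalizer (H : Set G))

def pre (H : Subgroup G) (C : Subgroup (WQ H)) : Subgroup G :=
  (C.comap (QuotientGroup.mk' (H.subgroupOf (Subgroup.normalizer (H : Set G))))).map (Subgroup.normalizer (H : Set G)).subtype

lemma pre_bot (H : Subgroup G) : pre H ⊥ = H := by
  unfold pre
  have h1 : (⊥ : Subgroup (WQ H)).comap (QuotientGroup.mk' (H.subgroupOf (Subgroup.normalizer (H : Set G))))
      = H.subgroupOf (Subgroup.normalizer (H : Set G)) := by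
    rw [MonoidHom.comap_bot, QuotientGroup.ker_mk']
  rw [h1, subgroupOf_map_subtype]
  exact inf_eq_left.mpr le_normalizer

lemma pre_injective (H : Subgroup G) : Function.Injective (pre H) := by
  intro C D h
  unfold pre at h
  have h1 := Subgroup.map_injective (Subgroup.normalizer (H : Set G)).subtype_injective h
  exact Subgroup.comap_injective (QuotientGroup.mk'_surjective _) h1

lemma le_pre (H : Subgroup G) (C : Subgroup (WQ H)) : H ≤ pre H C := by
  have h1 : pre H ⊥ ≤ pre H C :=
    Subgroup.map_mono (Subgroup.comap_mono bot_le)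
  rwa [pre_bot] at h1

lemma card_lt_pre (H : Subgroup G) (C : Subgroup (WQ H)) (hC : C ≠ ⊥) :
    Nat.card H < Nat.card (pre H C) := by
  have hle := le_pre H C
  have h1 := Subgroup.card_le_of_le hle
  rcases h1.lt_or_eq with h | h
  · exact h
  · exfalso
    have h2 : H = pre H C := Subgroup.eq_of_le_of_card_ge hle h.ge
    have h3 : pre H ⊥ = pre H C := by rw [pre_bot]; exact h2
    exact hC (pre_injective H h3).symm

lemma mem_pre (H : Subgroup G) (C : Subgroup (WQ H)) (g : G) :
    g ∈ pre H C ↔ ∃ hg : g ∈ (Subgroup.normalizer (H : Set G)),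
      QuotientGroup.mk (⟨g, hg⟩ : (Subgroup.normalizer (H : Set G))) ∈ C := by
  unfold pre
  constructor
  · rintro ⟨⟨n, hn⟩, hmem, rfl⟩
    exact ⟨hn, hmem⟩
  · rintro ⟨hg, hmem⟩
    exact ⟨⟨g, hg⟩, hmem, rfl⟩

section WAction

variable (H : Subgroup G) (X : Type) [MulAction G X]

lemma fpsmul_mem (n : (Subgroup.normalizer (H : Set G))) (s : fixedPoints H X) :
    (n : G) • (s : X) ∈ fixedPoints H X := by
  intro h
  have h2 : (n : G)⁻¹ * h * n ∈ H := (Subgroup.mem_normalizer_iff''.mp n.2 h).mp h.2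
  show (h : G) • (n : G) • (s : X) = (n : G) • (s : X)
  have h3 : ((n : G)⁻¹ * (h : G) * (n : G)) • (s : X) = (s : X) := s.2 ⟨_, h2⟩
  calc (h : G) • (n : G) • (s : X)
      = (n : G) • ((n : G)⁻¹ * (h : G) * (n : G)) • (s : X) := by
        rw [smul_smul, smul_smul]
        congr 1
        group
    _ = (n : G) • (s : X) := by rw [h3]

noncomputable instance wAction : MulAction (WQ H) (fixedPoints H X) where
  smul w s := Quotient.liftOn' w
    (fun n => (⟨(n : G) • (s : X), fpsmul_mem H X n s⟩ : fixedPoints H X))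
    (by
      intro n m hnm
      rw [QuotientGroup.leftRel_apply, Subgroup.mem_subgroupOf] at hnm
      apply Subtype.ext
      show (n : G) • (s : X) = (m : G) • (s : X)
      have h3 : ((n : G)⁻¹ * (m : G)) • (s : X) = (s : X) := s.2 ⟨_, hnm⟩
      calc (n : G) • (s : X) = (n : G) • ((n : G)⁻¹ * (m : G)) • (s : X) := by rw [h3]
        _ = (m : G) • (s : X) := by rw [smul_smul]; congr 1; group)
  one_smul s := by
    apply Subtype.ext
    show ((1 : (Subgroup.normalizer (H : Set G))) : G) • (s : X) = (s : X)
    simp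
  mul_smul w₁ w₂ s := by
    induction w₁ using Quotient.inductionOn' with | h n =>
    induction w₂ using Quotient.inductionOn' with | h m =>
    apply Subtype.ext
    show ((n * m : (Subgroup.normalizer (H : Set G))) : G) • (s : X) = (n : G) • (m : G) • (s : X)
    rw [Subgroup.coe_mul, mul_smul]

lemma wsmul_mk (n : (Subgroup.normalizer (H : Set G))) (s : fixedPoints H X) :
    (QuotientGroup.mk n : WQ H) • s = ⟨(n : G) • (s : X), fpsmul_mem H X n s⟩ := rfl

lemma card_fixedBy_eq (w : WQ H) :
    Nat.card (fixedBy (fixedPoints H X) w) = Nat.card (fixedPoints (pre H (zpowers w)) X) := by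
  induction w using Quotient.inductionOn' with | h n =>
  apply Nat.card_congr
  have key : ∀ s : fixedPoints H X, (QuotientGroup.mk n : WQ H) • s = s ↔
      (s : X) ∈ fixedPoints (pre H (zpowers (QuotientGroup.mk n : WQ H))) X := by
    intro s
    constructor
    · intro hs
      have hn : (n : G) • (s : X) = (s : X) :=
        congrArg Subtype.val ((wsmul_mk H X n s).symm.trans hs)
      intro g
      obtain ⟨hgN, hgC⟩ := (mem_pre H _ (g : G)).mp g.2
      show (g : G) • (s : X) = (s : X)
      suffices hsuff : (g : G) ∈ stabilizer G (s : X) by exact hsuff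
      obtain ⟨k, hk⟩ := hgC
      have hk' : (QuotientGroup.mk (n ^ k) : WQ H) = QuotientGroup.mk ⟨(g : G), hgN⟩ := by
        rw [← hk]; rfl
      have hmem : ((n ^ k)⁻¹ * ⟨(g : G), hgN⟩ : (Subgroup.normalizer (H : Set G))) ∈ H.subgroupOf (Subgroup.normalizer (H : Set G)) :=
        QuotientGroup.leftRel_apply.mp (Quotient.exact' hk')
      rw [Subgroup.mem_subgroupOf] at hmem
      have hdecomp : (g : G) = ((n : G)) ^ k * (((n ^ k)⁻¹ * ⟨(g : G), hgN⟩ : (Subgroup.normalizer (H : Set G))) : G) := by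
        push_cast
        group
      rw [hdecomp]
      apply mul_mem
      · exact zpow_mem (show (n : G) ∈ stabilizer G (s : X) from hn) k
      · exact s.2 ⟨_, hmem⟩
    · intro hs
      apply Subtype.ext
      show (n : G) • (s : X) = (s : X)
      have hnmem : (n : G) ∈ pre H (zpowers (QuotientGroup.mk n : WQ H)) := by
        rw [mem_pre]
        refine ⟨n.2, ⟨1, ?_⟩⟩
        show (QuotientGroup.mk n : WQ H) ^ (1 : ℤ) = _
        rw [zpow_one]
      exact hs ⟨_, hnmem⟩
  refine Equiv.trans (Equiv.subtypeEquivRight fun s => key s) ?_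
  exact Equiv.subtypeSubtypeEquivSubtype
    (fun {x} hx => fun h => hx ⟨(h : G), le_pre H _ h.2⟩)

end WAction

lemma burnside_dvd (W Y : Type) [Group W] [Finite W] [MulAction W Y] [Finite Y]
    [Fintype W] :
    (Nat.card W : ℤ) ∣ ∑ w : W, (Nat.card (fixedBy Y w) : ℤ) := by
  letI : Fintype Y := Fintype.ofFinite Y
  letI : ∀ w : W, Fintype (fixedBy Y w) := fun w => Fintype.ofFinite _
  letI : Fintype (Quotient (orbitRel W Y)) := Fintype.ofFinite _
  have h := MulAction.sum_card_fixedBy_eq_card_orbits_mul_card_group W Y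
  have h2 : ∑ w : W, (Nat.card (fixedBy Y w) : ℤ)
      = ((∑ w : W, Fintype.card (fixedBy Y w) : ℕ) : ℤ) := by
    push_cast
    refine Finset.sum_congr rfl fun w _ => ?_
    rw [Nat.card_eq_fintype_card]
  rw [h2, h, Nat.card_eq_fintype_card]
  push_cast
  exact dvd_mul_left _ _

-- number of generators
lemma card_gen (W : Type) [Group W] [Finite W] [Fintype W]
    (C : Subgroup W) :
    (Finset.univ.filter (fun w : W => zpowers w = C)).card
      = if IsCyclic C then Nat.totient (Nat.card C) else 0 := by
  split_ifs with hc
  · letI : Fintype C := Fintype.ofFinite _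
    rw [Nat.card_eq_fintype_card,
      ← IsCyclic.card_orderOf_eq_totient (α := C) (d := Fintype.card C) dvd_rfl]
    apply Finset.card_bij (fun w hw => (⟨w, by
      rw [Finset.mem_filter] at hw
      rw [← hw.2]; exact mem_zpowers w⟩ : C))
    · intro w hw
      rw [Finset.mem_filter] at hw ⊢
      refine ⟨Finset.mem_univ _, ?_⟩
      rw [Subgroup.orderOf_mk, ← Nat.card_zpowers, hw.2, Nat.card_eq_fintype_card]

    · intro a ha b hb hab
      exact congrArg Subtype.val hab
    · intro c hc2
      rw [Finset.mem_filter] at hc2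
      refine ⟨(c : W), ?_, rfl⟩
      rw [Finset.mem_filter]
      refine ⟨Finset.mem_univ _, ?_⟩
      apply Subgroup.eq_of_le_of_card_ge (zpowers_le.mpr c.2)
      rw [Nat.card_zpowers, Nat.card_eq_fintype_card, ← hc2.2, Subgroup.orderOf_coe]
  · rw [Finset.card_eq_zero, Finset.filter_eq_empty_iff]
    intro w _
    intro hzc
    apply hc
    rw [← hzc]
    exact ⟨⟨⟨w, mem_zpowers w⟩, fun x => by
      obtain ⟨k, hk⟩ := x.2
      exact ⟨k, Subtype.ext (by rw [← hk]; push_cast; rfl)⟩⟩⟩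

lemma sum_zpowers_eq (W : Type) [Group W] [Finite W] [Fintype W] (f : Subgroup W → ℤ) :
    ∑ w : W, f (zpowers w)
      = ∑ᶠ (C : Subgroup W) (_ : IsCyclic C), (Nat.totient (Nat.card C) : ℤ) * f C := by
  letI : Fintype (Subgroup W) := Fintype.ofFinite _
  have h1 : ∀ C : Subgroup W, (∑ᶠ (_ : IsCyclic C), (Nat.totient (Nat.card C) : ℤ) * f C)
      = if IsCyclic C then (Nat.totient (Nat.card C) : ℤ) * f C else 0 := fun C => finsum_eq_if
  rw [finsum_eq_sum_of_fintype]
  simp_rw [h1]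
  have h2 : ∀ w : W, f (zpowers w) = ∑ C : Subgroup W,
      if zpowers w = C then f C else 0 := by
    intro w
    rw [Finset.sum_ite_eq Finset.univ (zpowers w) f]
    simp
  simp_rw [h2]
  rw [Finset.sum_comm]
  refine Finset.sum_congr rfl fun C _ => ?_
  rw [Finset.sum_ite, Finset.sum_const_zero, add_zero, Finset.sum_const, card_gen W C]
  split_ifs with hc
  · simp [mul_comm]
  · simp


lemma finsum_cyc (W : Type) [Group W] [Finite W] [Fintype (Subgroup W)]
    (g : Subgroup W → ℤ) :
    (∑ᶠ (C : Subgroup W) (_ : IsCyclic C), g C)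
      = ∑ C : Subgroup W, if IsCyclic C then g C else 0 := by
  rw [finsum_eq_sum_of_fintype]
  refine Finset.sum_congr rfl fun C _ => ?_
  exact finsum_eq_if

lemma mark_cong (K H : Subgroup G) :
    (Nat.card (WQ H) : ℤ) ∣ ∑ᶠ (C : Subgroup (WQ H)) (_ : IsCyclic C),
      (Nat.totient (Nat.card C) : ℤ) * mark K (pre H C) := by
  letI : Fintype (WQ H) := Fintype.ofFinite _
  rw [← sum_zpowers_eq (WQ H) (fun C => mark K (pre H C))]
  have h1 : ∀ w : WQ H, mark K (pre H (zpowers w))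
      = (Nat.card (fixedBy (fixedPoints H (G ⧸ K)) w) : ℤ) := by
    intro w
    unfold mark
    rw [card_fixedBy_eq]
  simp_rw [h1]
  exact burnside_dvd (WQ H) (fixedPoints H (G ⧸ K))

lemma Scong_sub (H K : Subgroup G) (y : Subgroup G → ℤ) (c : ℤ) :
    (∑ᶠ (C : Subgroup (WQ H)) (_ : IsCyclic C),
        (Nat.totient (Nat.card C) : ℤ) * (y (pre H C) - c * mark K (pre H C)))
      = (∑ᶠ (C : Subgroup (WQ H)) (_ : IsCyclic C),
          (Nat.totient (Nat.card C) : ℤ) * y (pre H C))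
        - c * (∑ᶠ (C : Subgroup (WQ H)) (_ : IsCyclic C),
          (Nat.totient (Nat.card C) : ℤ) * mark K (pre H C)) := by
  letI : Fintype (Subgroup (WQ H)) := Fintype.ofFinite _
  rw [finsum_cyc, finsum_cyc, finsum_cyc, Finset.mul_sum, ← Finset.sum_sub_distrib]
  refine Finset.sum_congr rfl fun C _ => ?_
  split_ifs with hc
  · ring
  · ring

lemma scong_eq_self (y : Subgroup G → ℤ) (K : Subgroup G)
    (hvan : ∀ H : Subgroup G, Nat.card K < Nat.card H → y H = 0) :
    (∑ᶠ (C : Subgroup (WQ K)) (_ : IsCyclic C),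
        (Nat.totient (Nat.card C) : ℤ) * y (pre K C)) = y K := by
  letI : Fintype (Subgroup (WQ K)) := Fintype.ofFinite _
  rw [finsum_cyc]
  rw [Finset.sum_eq_single ⊥]
  · rw [if_pos Bot.isCyclic]
    rw [pre_bot, Subgroup.card_bot, Nat.totient_one]
    ring
  · intro C _ hC
    split_ifs with hc
    · rw [hvan _ (card_lt_pre K C hC), mul_zero]
    · rfl
  · intro h
    exact absurd (Finset.mem_univ _) h

lemma conj_one (K : Subgroup G) : K.map (MulAut.conj (1 : G)).toMonoidHom = K := by
  have : (MulAut.conj (1 : G)).toMonoidHom = MonoidHom.id G := by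
    ext g
    simp
  rw [this]
  exact K.map_id

lemma main_induction [Fintype (Subgroup G)] (n : ℕ) :
    ∀ y : Subgroup G → ℤ,
    (∀ (g : G) (H : Subgroup G), y (H.map (MulAut.conj g).toMonoidHom) = y H) →
    (∀ H : Subgroup G, (Nat.card (WQ H) : ℤ) ∣
      ∑ᶠ (C : Subgroup (WQ H)) (_ : IsCyclic C),
        (Nat.totient (Nat.card C) : ℤ) * y (pre H C)) →
    (∑ H ∈ Finset.univ.filter (fun H => y H ≠ 0),
      (Fintype.card (Subgroup G) + 1) ^ (Nat.card H)) ≤ n →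
    ∃ a : Subgroup G → ℤ, ∀ H, y H = ∑ K : Subgroup G, a K * mark K H := by
  set D := Fintype.card (Subgroup G) with hD
  induction n with
  | zero =>
    intro y hconj hcong hn
    refine ⟨0, fun H => ?_⟩
    have h0 : ∀ H : Subgroup G, y H = 0 := by
      intro H
      by_contra hne
      have hmem : H ∈ Finset.univ.filter (fun H => y H ≠ 0) := by
        simp [hne]
      have h5 : (D + 1) ^ (Nat.card H) ≤ 0 := le_trans (Finset.single_le_sum
        (f := fun H : Subgroup G => (D + 1) ^ (Nat.card H))
        (fun _ _ => Nat.zero_le _) hmem) hn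
      have hpos : 0 < (D + 1) ^ (Nat.card H) := pow_pos (Nat.succ_pos D) _
      omega
    rw [h0 H]
    simp
  | succ n ih =>
    intro y hconj hcong hn
    set B := Finset.univ.filter (fun H => y H ≠ 0) with hB
    by_cases hBne : B.Nonempty
    · obtain ⟨K, hKB, hmax⟩ := Finset.exists_max_image B (fun H => Nat.card H) hBne
      have hvan : ∀ H : Subgroup G, Nat.card K < Nat.card H → y H = 0 := by
        intro H hlt
        by_contra hne
        have : H ∈ B := by simp [hB, hne]
        exact absurd (hmax H this) (by omega)
      have hdvdK : (Nat.card (WQ K) : ℤ) ∣ y K := by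
        have := hcong K
        rwa [scong_eq_self y K hvan] at this
      set c := y K / (Nat.card (WQ K) : ℤ) with hc
      have hcc : (Nat.card (↥(Subgroup.normalizer (K : Set G)) ⧸ K.subgroupOf (Subgroup.normalizer (K : Set G))) : ℤ) * c = y K :=
        Int.mul_ediv_cancel' hdvdK
      set y' := fun L => y L - c * mark K L with hy'
      have hconj' : ∀ (g : G) (H : Subgroup G),
          y' (H.map (MulAut.conj g).toMonoidHom) = y' H := by
        intro g H
        simp only [hy', hconj, mark_conj]
      have hcong' : ∀ H : Subgroup G, (Nat.card (WQ H) : ℤ) ∣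
          ∑ᶠ (C : Subgroup (WQ H)) (_ : IsCyclic C),
            (Nat.totient (Nat.card C) : ℤ) * y' (pre H C) := by
        intro H
        simp only [hy']
        rw [Scong_sub]
        exact dvd_sub (hcong H) (Dvd.dvd.mul_left (mark_cong K H) c)
      -- y' vanishes on conjugates of K
      have hconjK : ∀ g : G, y' (K.map (MulAut.conj g).toMonoidHom) = 0 := by
        intro g
        simp only [hy']
        rw [hconj, mark_conj, mark_self, ← hcc]
        ring
      have hKzero : y' K = 0 := by
        have := hconjK 1
        rwa [conj_one] at this
      -- properties of new bad set
      set B' := Finset.univ.filter (fun H => y' H ≠ 0) with hB'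
      have hf1 : ∀ H ∈ B', Nat.card H ≤ Nat.card K := by
        intro H hH
        rw [hB', Finset.mem_filter] at hH
        by_contra hlt
        push_neg at hlt
        have hnc : ∀ g : G, K.map (MulAut.conj g).toMonoidHom ≠ H := by
          intro g heq
          have hcardmap : Nat.card (K.map (MulAut.conj g).toMonoidHom) = Nat.card K :=
            (Nat.card_congr (K.equivMapOfInjective _ (MulAut.conj g).injective).toEquiv).symm
          rw [heq] at hcardmap
          omega
        have hm0 : mark K H = 0 := mark_eq_zero K H (by omega) hnc
        have : y' H = y H := by rw [hy']; simp [hm0]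
        rw [this] at hH
        exact absurd (hvan H hlt) hH.2
      have hf2 : ∀ H ∈ B', Nat.card H = Nat.card K → H ∈ B.erase K := by
        intro H hH hcard
        rw [hB', Finset.mem_filter] at hH
        have hnc : ∀ g : G, K.map (MulAut.conj g).toMonoidHom ≠ H := by
          intro g heq
          apply hH.2
          rw [← heq]
          exact hconjK g
        have hm0 : mark K H = 0 := mark_eq_zero K H (by omega) hnc
        have hyy : y' H = y H := by rw [hy']; simp [hm0]
        rw [Finset.mem_erase]
        constructor
        · intro heq
          exact hnc 1 (by rw [conj_one, heq])
        · rw [hB, Finset.mem_filter]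
          exact ⟨Finset.mem_univ _, by rw [← hyy]; exact hH.2⟩
      -- measure decreases
      have hKpos : 1 ≤ Nat.card K := Nat.one_le_iff_ne_zero.mpr Nat.card_pos.ne'
      have hsplit : ∑ H ∈ B', (D + 1) ^ (Nat.card H)
          = (∑ H ∈ B'.filter (fun H : Subgroup G => Nat.card H = Nat.card K), (D + 1) ^ (Nat.card H))
          + ∑ H ∈ B'.filter (fun H : Subgroup G => ¬ Nat.card H = Nat.card K), (D + 1) ^ (Nat.card H) :=
        (Finset.sum_filter_add_sum_filter_not _ _ _).symm
      have hs1 : (∑ H ∈ B'.filter (fun H : Subgroup G => Nat.card H = Nat.card K), (D + 1) ^ (Nat.card H))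
          ≤ ∑ H ∈ B.erase K, (D + 1) ^ (Nat.card H) := by
        apply Finset.sum_le_sum_of_subset
        intro H hH
        rw [Finset.mem_filter] at hH
        exact hf2 H hH.1 hH.2
      have hs2 : (∑ H ∈ B'.filter (fun H : Subgroup G => ¬ Nat.card H = Nat.card K), (D + 1) ^ (Nat.card H))
          ≤ D * (D + 1) ^ (Nat.card K - 1) := by
        calc (∑ H ∈ B'.filter (fun H : Subgroup G => ¬ Nat.card H = Nat.card K), (D + 1) ^ (Nat.card H))
            ≤ (B'.filter (fun H : Subgroup G => ¬ Nat.card H = Nat.card K)).card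
              * (D + 1) ^ (Nat.card K - 1) := by
              apply Finset.sum_le_card_nsmul
              intro H hH
              rw [Finset.mem_filter] at hH
              have h1 := hf1 H hH.1
              exact Nat.pow_le_pow_right (Nat.succ_pos D) (by omega)
          _ ≤ D * (D + 1) ^ (Nat.card K - 1) := by
              apply Nat.mul_le_mul_right
              calc (B'.filter (fun H : Subgroup G => ¬ Nat.card H = Nat.card K)).card
                  ≤ Finset.univ.card := Finset.card_le_univ _
                _ = D := rfl
      have hwKle : (D + 1) ^ (Nat.card K) ≤ ∑ H ∈ B, (D + 1) ^ (Nat.card H) :=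
        Finset.single_le_sum (f := fun H : Subgroup G => (D + 1) ^ (Nat.card H))
          (fun _ _ => Nat.zero_le _) hKB
      have herase : (∑ H ∈ B.erase K, (D + 1) ^ (Nat.card H))
          + (D + 1) ^ (Nat.card K) = ∑ H ∈ B, (D + 1) ^ (Nat.card H) :=
        Finset.sum_erase_add B _ hKB
      have hDlt : D * (D + 1) ^ (Nat.card K - 1) < (D + 1) ^ (Nat.card K) := by
        have h3 : (D + 1) ^ (Nat.card K) = (D + 1) ^ (Nat.card K - 1) * (D + 1) := by
          rw [← pow_succ]
          congr 1
          omega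
        rw [h3]
        have hp : 0 < (D + 1) ^ (Nat.card K - 1) := Nat.pow_pos (Nat.succ_pos D)
        calc D * (D + 1) ^ (Nat.card K - 1)
            = (D + 1) ^ (Nat.card K - 1) * D := by ring
          _ < (D + 1) ^ (Nat.card K - 1) * (D + 1) := by
              exact (Nat.mul_lt_mul_left hp).mpr (by omega)
      have hmeas : (∑ H ∈ B', (D + 1) ^ (Nat.card H)) ≤ n := by omega
      obtain ⟨a', ha'⟩ := ih y' hconj' hcong' hmeas
      refine ⟨fun L => a' L + (if L = K then c else 0), fun H => ?_⟩
      have h4 : y H = y' H + c * mark K H := by rw [hy']; ring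
      rw [h4, ha' H]
      rw [Finset.sum_congr rfl (fun L _ => add_mul (a' L) _ (mark L H)),
        Finset.sum_add_distrib]
      congr 1
      rw [Finset.sum_congr rfl (fun L _ => ite_zero_mul (L = K) c (mark L H))]
      rw [Finset.sum_ite_eq' Finset.univ K (fun L => c * mark L H)]
      simp
    · refine ⟨0, fun H => ?_⟩
      have : y H = 0 := by
        by_contra hne
        exact hBne ⟨H, by simp [hB, hne]⟩
      rw [this]
      simp

abbrev GSigma (a : Subgroup G → ℕ) : Type := Σ K : Subgroup G, Fin (a K) × (G ⧸ K)

instance (a : Subgroup G → ℕ) : MulAction G (GSigma a) where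
  smul g s := ⟨s.1, (s.2.1, g • s.2.2)⟩
  one_smul s := by
    rcases s with ⟨K, i, q⟩
    show (⟨K, (i, (1 : G) • q)⟩ : GSigma a) = ⟨K, (i, q)⟩
    rw [one_smul]
  mul_smul g h s := by
    rcases s with ⟨K, i, q⟩
    show (⟨K, (i, (g * h) • q)⟩ : GSigma a) = ⟨K, (i, g • h • q)⟩
    rw [mul_smul]

noncomputable def fixedPointsGSigmaEquiv (a : Subgroup G → ℕ) (H : Subgroup G) :
    fixedPoints H (GSigma a) ≃ Σ K : Subgroup G, Fin (a K) × fixedPoints H (G ⧸ K) where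
  toFun s := ⟨(s : GSigma a).1, ((s : GSigma a).2.1, ⟨(s : GSigma a).2.2, by
    intro h
    have hs : (⟨(s : GSigma a).1, ((s : GSigma a).2.1, (h : G) • (s : GSigma a).2.2)⟩ : GSigma a)
        = (s : GSigma a) := s.2 h
    have h2 : HEq (((s : GSigma a).2.1, (h : G) • (s : GSigma a).2.2))
        ((s : GSigma a).2 : Fin (a (s : GSigma a).1) × G ⧸ (s : GSigma a).1) :=
      (Sigma.mk.inj_iff.mp hs).2
    have h3 : (((s : GSigma a).2.1, (h : G) • (s : GSigma a).2.2)
        : Fin (a (s : GSigma a).1) × G ⧸ (s : GSigma a).1) = (s : GSigma a).2 := eq_of_heq h2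
    exact congrArg Prod.snd h3⟩)⟩
  invFun t := ⟨⟨t.1, (t.2.1, (t.2.2 : G ⧸ t.1))⟩, by
    intro h
    exact congrArg (fun p : G ⧸ t.1 => (⟨t.1, (t.2.1, p)⟩ : GSigma a)) (t.2.2.2 h)⟩
  left_inv s := rfl
  right_inv t := rfl

lemma card_fixedPoints_gsigma [Fintype (Subgroup G)] (a : Subgroup G → ℕ) (H : Subgroup G) :
    (Nat.card (fixedPoints H (GSigma a)) : ℤ)
      = ∑ K : Subgroup G, (a K : ℤ) * mark K H := by
  rw [Nat.card_congr (fixedPointsGSigmaEquiv a H)]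
  letI : ∀ K : Subgroup G, Fintype (fixedPoints H (G ⧸ K)) := fun K => Fintype.ofFinite _
  rw [Nat.card_eq_fintype_card, Fintype.card_sigma]
  push_cast
  refine Finset.sum_congr rfl fun K _ => ?_
  rw [Fintype.card_prod, Fintype.card_fin]
  unfold mark
  rw [Nat.card_eq_fintype_card]
  push_cast
  ring

/-- **Burnside ring congruences for finite groups (sufficiency direction).**
A conjugation-invariant integer-valued function on the subgroups of a finite
group `G` satisfying the Burnside congruences at every subgroup `H` is of the
form `H ↦ |S^H| - |T^H|` for finite `G`-sets `S`, `T`. -/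
theorem burnside_congruences_sufficient
    (G : Type) [Group G] [Finite G] (x : Subgroup G → ℤ)
    (hconj : ∀ (g : G) (H : Subgroup G), x (H.map (MulAut.conj g).toMonoidHom) = x H)
    (hcong : ∀ H : Subgroup G,
      (Nat.card (↥(Subgroup.normalizer (H : Set G)) ⧸ H.subgroupOf (Subgroup.normalizer (H : Set G))) : ℤ) ∣
        ∑ᶠ (C : Subgroup (↥(Subgroup.normalizer (H : Set G)) ⧸ H.subgroupOf (Subgroup.normalizer (H : Set G)))) (_ : IsCyclic C),
          (Nat.totient (Nat.card C) : ℤ) *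
            x ((C.comap (QuotientGroup.mk' (H.subgroupOf (Subgroup.normalizer (H : Set G))))).map
              (Subgroup.normalizer (H : Set G)).subtype)) :
    ∃ S T : FiniteGSet G, ∀ H : Subgroup G,
      x H = (Nat.card (MulAction.fixedPoints H S.carrier) : ℤ)
          - (Nat.card (MulAction.fixedPoints H T.carrier) : ℤ) := by
  letI : Fintype (Subgroup G) := Fintype.ofFinite _
  have hcong' : ∀ H : Subgroup G, (Nat.card (WQ H) : ℤ) ∣
      ∑ᶠ (C : Subgroup (WQ H)) (_ : IsCyclic C),
        (Nat.totient (Nat.card C) : ℤ) * x (pre H C) := fun H => hcong H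
  obtain ⟨a, ha⟩ := main_induction
    (∑ H ∈ Finset.univ.filter (fun H => x H ≠ 0),
      (Fintype.card (Subgroup G) + 1) ^ (Nat.card H))
    x hconj hcong' le_rfl
  refine ⟨⟨GSigma (fun K => (a K).toNat)⟩, ⟨GSigma (fun K => (-a K).toNat)⟩, fun H => ?_⟩
  show x H = (Nat.card (fixedPoints H (GSigma (fun K => (a K).toNat))) : ℤ)
    - (Nat.card (fixedPoints H (GSigma (fun K => (-a K).toNat))) : ℤ)
  rw [card_fixedPoints_gsigma, card_fixedPoints_gsigma, ha H, ← Finset.sum_sub_distrib]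
  refine Finset.sum_congr rfl fun K _ => ?_
  rw [← sub_mul]
  congr 1
  omega
end

section
/- Let G be a (possibly infinite) group and x a conjugation-invariant function from the set of subgroups of G to ℤ. Suppose: (i) there exists a normal subgroup K ⊴ G of finite index such that x(H) = x(H·K) for every subgroup H ≤ G, where H·K = {hk : h ∈ H, k ∈ K} (a subgroup since K is normal); and (ii) for every subgroup H ≤ G of finite index, Σ_{C ≤ W_G(H), C cyclic} φ(|C|) · x(p_H^{-1}(C)) ≡ 0 (mod |W_G(H)|). Then there exist finite G-sets S and T such that x(H) = |S^H| − |T^H| for every subgroup H ≤ G. (Sufficiency direction of the Burnside ring congruences for the finite-G-set version \overline{A}(G): such an x lies in the image of the character map.) -/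
namespace BAux
open MulAction Subgroup
variable {G : Type} [Group G]

lemma mem_fp_iff {A : Type} [MulAction G A] {H : Subgroup G} {a : A} :
    a ∈ fixedPoints (↥H) A ↔ ∀ g ∈ H, g • a = a := by
  constructor
  · intro h g hg; exact h ⟨g, hg⟩
  · rintro h ⟨g, hg⟩; exact h g hg

lemma index_map_conj (g : G) (H : Subgroup G) :
    (H.map (MulAut.conj g).toMonoidHom).index = H.index := by
  rw [MulEquiv.toMonoidHom_eq_coe, Subgroup.map_equiv_eq_comap_symm]
  exact Subgroup.index_comap_of_surjective _ (MulEquiv.surjective _)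

lemma eq_of_le_of_index_eq {A B : Subgroup G} (h : A ≤ B) (hidx : A.index = B.index)
    (hfin : A.index ≠ 0) : A = B := by
  have h1 := Subgroup.relIndex_mul_index h
  rw [hidx] at h1
  have hB : B.index ≠ 0 := by rwa [hidx] at hfin
  have h2 : A.relIndex B = 1 :=
    Nat.eq_of_mul_eq_mul_right (Nat.pos_of_ne_zero hB) (h1.trans (one_mul B.index).symm)
  exact le_antisymm h (Subgroup.relIndex_eq_one.mp h2)

lemma map_conj_map_conj_inv (g : G) (L : Subgroup G) :
    (L.map (MulAut.conj g⁻¹).toMonoidHom).map (MulAut.conj g).toMonoidHom = L := by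
  rw [Subgroup.map_map]
  have : (MulAut.conj g).toMonoidHom.comp (MulAut.conj g⁻¹).toMonoidHom = MonoidHom.id G := by
    ext x
    simp [MulAut.conj_apply]
    group
  rw [this, Subgroup.map_id]

lemma fixed_mk_iff {H L : Subgroup G} (g : G) :
    ((g : G ⧸ H) ∈ fixedPoints (↥L) (G ⧸ H)) ↔ L.map (MulAut.conj g⁻¹).toMonoidHom ≤ H := by
  refine Iff.trans mem_fp_iff ?_
  constructor
  · intro h y hy
    rw [Subgroup.mem_map] at hy
    obtain ⟨l, hl, rfl⟩ := hy
    have h2 := h l hl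
    rw [MulAction.Quotient.smul_mk, QuotientGroup.eq] at h2
    simp only [MulEquiv.coe_toMonoidHom, MulAut.conj_apply, inv_inv]
    have heq : (l • g)⁻¹ * g = g⁻¹ * l⁻¹ * g := by
      simp only [smul_eq_mul]; group
    rw [heq] at h2
    have h3 : (g⁻¹ * l⁻¹ * g)⁻¹ ∈ H := H.inv_mem h2
    have heq2 : (g⁻¹ * l⁻¹ * g)⁻¹ = g⁻¹ * l * g := by group
    rwa [heq2] at h3
  · intro h l hl
    rw [MulAction.Quotient.smul_mk, QuotientGroup.eq]
    have h2 : (MulAut.conj g⁻¹).toMonoidHom l⁻¹ ∈ H := h (Subgroup.mem_map_of_mem _ (L.inv_mem hl))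
    simp only [MulEquiv.coe_toMonoidHom, MulAut.conj_apply, inv_inv] at h2
    have heq : (l • g)⁻¹ * g = g⁻¹ * l⁻¹ * g := by simp only [smul_eq_mul]; group
    rwa [heq]

lemma fp_quotient_isEmpty {H L : Subgroup G} (hlt : L.index < H.index) (hLfin : L.index ≠ 0) :
    IsEmpty (fixedPoints (↥L) (G ⧸ H)) := by
  constructor
  rintro ⟨q, hq⟩
  obtain ⟨g, rfl⟩ := QuotientGroup.mk_surjective q
  rw [fixed_mk_iff] at hq
  have h0 : (L.map (MulAut.conj g⁻¹).toMonoidHom).index ≠ 0 := by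
    rwa [index_map_conj]
  have h1 : H.index ≤ (L.map (MulAut.conj g⁻¹).toMonoidHom).index :=
    Nat.le_of_dvd (Nat.pos_of_ne_zero h0) (Subgroup.index_dvd_of_le hq)
  rw [index_map_conj] at h1
  omega

lemma conj_of_fixed {H L : Subgroup G} (hidx : L.index = H.index) (hfin : L.index ≠ 0)
    {g : G} (hq : ((g : G ⧸ H) ∈ fixedPoints (↥L) (G ⧸ H))) :
    H.map (MulAut.conj g).toMonoidHom = L := by
  rw [fixed_mk_iff] at hq
  have h1 : L.map (MulAut.conj g⁻¹).toMonoidHom = H :=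
    eq_of_le_of_index_eq hq (by rw [index_map_conj, hidx]) (by rwa [index_map_conj])
  rw [← h1, map_conj_map_conj_inv]

lemma mem_normalizer_iff_map_conj {g : G} {H : Subgroup G} :
    g ∈ (Subgroup.normalizer (H : Set G)) ↔ H.map (MulAut.conj g).toMonoidHom = H := by
  rw [Subgroup.mem_normalizer_iff]
  constructor
  · intro h
    ext x
    rw [Subgroup.mem_map]
    constructor
    · rintro ⟨y, hy, rfl⟩
      simpa [MulAut.conj_apply] using (h y).mp hy
    · intro hx
      refine ⟨g⁻¹ * x * g, ?_, by simp [MulAut.conj_apply]; group⟩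
      apply (h (g⁻¹ * x * g)).mpr
      have heq : g * (g⁻¹ * x * g) * g⁻¹ = x := by group
      rwa [heq]
  · intro h y
    constructor
    · intro hy
      have h2 : g * y * g⁻¹ ∈ H.map (MulAut.conj g).toMonoidHom :=
        ⟨y, hy, by simp [MulAut.conj_apply]⟩
      rwa [h] at h2
    · intro hy
      rw [← h, Subgroup.mem_map] at hy
      obtain ⟨z, hz, hzz⟩ := hy
      simp only [MulEquiv.coe_toMonoidHom, MulAut.conj_apply] at hzz
      have heq : z = y := by
        have : y = g⁻¹ * (g * z * g⁻¹) * g := by rw [hzz]; group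
        rw [this]; group
      rwa [← heq]

lemma card_fp_self {H : Subgroup G} (hfin : H.index ≠ 0) :
    Nat.card (fixedPoints (↥H) (G ⧸ H))
      = Nat.card (↥(Subgroup.normalizer (H : Set G)) ⧸ H.subgroupOf (Subgroup.normalizer (H : Set G))) := by
  symm
  have key : ∀ n : ↥(Subgroup.normalizer (H : Set G)), ((n : G) : G ⧸ H) ∈ fixedPoints (↥H) (G ⧸ H) := by
    intro n
    rw [fixed_mk_iff]
    have h1 : ((n : G))⁻¹ ∈ (Subgroup.normalizer (H : Set G)) := (Subgroup.normalizer (H : Set G)).inv_mem n.2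
    rw [mem_normalizer_iff_map_conj] at h1
    rw [h1]
  have sound : ∀ a b : ↥(Subgroup.normalizer (H : Set G)),
      @Setoid.r _ (QuotientGroup.leftRel (H.subgroupOf (Subgroup.normalizer (H : Set G)))) a b →
      (⟨((a : G) : G ⧸ H), key a⟩ : fixedPoints (↥H) (G ⧸ H))
        = ⟨((b : G) : G ⧸ H), key b⟩ := by
    intro a b hab
    rw [QuotientGroup.leftRel_apply] at hab
    exact Subtype.ext (QuotientGroup.eq.mpr hab)
  refine Nat.card_eq_of_bijective
    (fun q => Quotient.liftOn' q (fun n => ⟨((n : G) : G ⧸ H), key n⟩) sound) ⟨?_, ?_⟩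
  · intro q1 q2
    obtain ⟨n1, rfl⟩ := QuotientGroup.mk_surjective q1
    obtain ⟨n2, rfl⟩ := QuotientGroup.mk_surjective q2
    intro h
    have h2 : ((n1 : G) : G ⧸ H) = ((n2 : G) : G ⧸ H) := congrArg Subtype.val h
    rw [QuotientGroup.eq] at h2
    exact (QuotientGroup.eq (s := H.subgroupOf (Subgroup.normalizer (H : Set G)))).mpr h2
  · rintro ⟨q, hq⟩
    obtain ⟨g, rfl⟩ := QuotientGroup.mk_surjective q
    have hconj : H.map (MulAut.conj g).toMonoidHom = H := conj_of_fixed rfl hfin hq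
    have hg : g ∈ (Subgroup.normalizer (H : Set G)) := mem_normalizer_iff_map_conj.mpr hconj
    exact ⟨QuotientGroup.mk ⟨g, hg⟩, rfl⟩


lemma mem_fp_iff_le_stabilizer {A : Type} [MulAction G A] {H : Subgroup G} {a : A} :
    a ∈ fixedPoints (↥H) A ↔ H ≤ stabilizer G a := by
  rw [mem_fp_iff]
  exact ⟨fun h g hg => h g hg, fun h g hg => h hg⟩

/-- Fixed-point counts are invariant under conjugation of the subgroup. -/
lemma card_fp_conj {A : Type} [MulAction G A] (g : G) (H : Subgroup G) :
    Nat.card (fixedPoints (↥(H.map (MulAut.conj g).toMonoidHom)) A)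
      = Nat.card (fixedPoints (↥H) A) := by
  apply Nat.card_congr
  refine ⟨fun a => ⟨g⁻¹ • a.1, ?_⟩, fun a => ⟨g • a.1, ?_⟩, fun a => Subtype.ext (by simp), fun a => by simp⟩
  · rw [mem_fp_iff]
    intro h hh
    have h2 := (mem_fp_iff.mp a.2) (g * h * g⁻¹) (by
      rw [Subgroup.mem_map]
      exact ⟨h, hh, by simp [MulAut.conj_apply]⟩)
    calc h • g⁻¹ • a.1 = (h * g⁻¹) • a.1 := (mul_smul _ _ _).symm
      _ = (g⁻¹ * (g * h * g⁻¹)) • a.1 := by group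
      _ = g⁻¹ • ((g * h * g⁻¹) • a.1) := mul_smul _ _ _
      _ = g⁻¹ • a.1 := by rw [h2]
  · rw [mem_fp_iff]
    rintro h' hh'
    rw [Subgroup.mem_map] at hh'
    obtain ⟨h, hh, rfl⟩ := hh'
    have h2 := (mem_fp_iff.mp a.2) h hh
    simp only [MulEquiv.coe_toMonoidHom, MulAut.conj_apply]
    calc (g * h * g⁻¹) • g • a.1 = (g * h * g⁻¹ * g) • a.1 := (mul_smul _ _ _).symm
      _ = (g * h) • a.1 := by group
      _ = g • (h • a.1) := mul_smul _ _ _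
      _ = g • a.1 := by rw [h2]

/-- If `K` acts trivially, fixed points of `L ⊔ K` are those of `L`. -/
lemma fp_sup_of_trivial {A : Type} [MulAction G A] {K L : Subgroup G}
    (hK : ∀ k ∈ K, ∀ a : A, k • a = a) :
    fixedPoints (↥(L ⊔ K)) A = fixedPoints (↥L) A := by
  ext a
  rw [mem_fp_iff_le_stabilizer, mem_fp_iff_le_stabilizer]
  constructor
  · exact fun h => le_trans le_sup_left h
  · intro h
    exact sup_le h (fun k hk => mem_stabilizer_iff.mpr (hK k hk a))


section Necessity

variable (A : Type) [Finite A] [MulAction G A] (H : Subgroup G)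

lemma smul_mem_fp (n : ↥(Subgroup.normalizer (H : Set G))) {a : A} (ha : a ∈ fixedPoints (↥H) A) :
    (n : G) • a ∈ fixedPoints (↥H) A := by
  rw [mem_fp_iff] at *
  intro h hh
  have h2 : (n : G)⁻¹ * h * (n : G) ∈ H := by
    have h3 := (Subgroup.mem_normalizer_iff.mp ((Subgroup.normalizer (H : Set G)).inv_mem n.2)) h
    simpa using h3.mp hh
  calc h • (n : G) • a = (h * (n : G)) • a := (mul_smul _ _ _).symm
    _ = ((n : G) * ((n : G)⁻¹ * h * (n : G))) • a := by
        rw [show h * (n : G) = (n : G) * ((n : G)⁻¹ * h * (n : G)) by group]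
    _ = (n : G) • (((n : G)⁻¹ * h * (n : G)) • a) := mul_smul _ _ _
    _ = (n : G) • a := by rw [ha _ h2]

/-- Action of the normalizer on the `H`-fixed points, as permutations. -/
def rho0 : ↥(Subgroup.normalizer (H : Set G)) →* Equiv.Perm ↥(fixedPoints (↥H) A) where
  toFun n :=
    { toFun := fun a => ⟨(n : G) • a.1, smul_mem_fp A H n a.2⟩
      invFun := fun a => ⟨((n : G))⁻¹ • a.1, smul_mem_fp A H n⁻¹ a.2⟩
      left_inv := fun a => Subtype.ext (inv_smul_smul _ _)
      right_inv := fun a => Subtype.ext (smul_inv_smul _ _) }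
  map_one' := Equiv.ext fun a => Subtype.ext (one_smul G a.1)
  map_mul' m n := Equiv.ext fun a => Subtype.ext (mul_smul (m : G) (n : G) a.1)

/-- The induced action of the Weyl group on the `H`-fixed points. -/
def rho : (↥(Subgroup.normalizer (H : Set G)) ⧸ H.subgroupOf (Subgroup.normalizer (H : Set G))) →* Equiv.Perm ↥(fixedPoints (↥H) A) :=
  QuotientGroup.lift (H.subgroupOf (Subgroup.normalizer (H : Set G))) (rho0 A H) (by
    intro n hn
    rw [MonoidHom.mem_ker]
    apply Equiv.ext
    intro a
    apply Subtype.ext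
    exact (mem_fp_iff.mp a.2) (n : G) ((Subgroup.mem_subgroupOf).mp hn))

lemma rho_mk (n : ↥(Subgroup.normalizer (H : Set G))) (a : ↥(fixedPoints (↥H) A)) :
    rho A H (QuotientGroup.mk n) a = ⟨(n : G) • a.1, smul_mem_fp A H n a.2⟩ := rfl

lemma H_le_DD (C : Subgroup (↥(Subgroup.normalizer (H : Set G)) ⧸ H.subgroupOf (Subgroup.normalizer (H : Set G)))) :
    H ≤ (C.comap (QuotientGroup.mk' (H.subgroupOf (Subgroup.normalizer (H : Set G))))).map (Subgroup.normalizer (H : Set G)).subtype := by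
  intro h hh
  rw [Subgroup.mem_map]
  refine ⟨⟨h, Subgroup.le_normalizer hh⟩, ?_, rfl⟩
  rw [Subgroup.mem_comap]
  have : (QuotientGroup.mk' (H.subgroupOf (Subgroup.normalizer (H : Set G)))) ⟨h, Subgroup.le_normalizer hh⟩ = 1 := by
    rw [QuotientGroup.mk'_apply, QuotientGroup.eq_one_iff]
    exact Subgroup.mem_subgroupOf.mpr hh
  rw [this]
  exact C.one_mem

lemma card_fixed_DD (C : Subgroup (↥(Subgroup.normalizer (H : Set G)) ⧸ H.subgroupOf (Subgroup.normalizer (H : Set G)))) :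
    Nat.card (fixedPoints
        (↥((C.comap (QuotientGroup.mk' (H.subgroupOf (Subgroup.normalizer (H : Set G))))).map (Subgroup.normalizer (H : Set G)).subtype)) A)
      = Nat.card {b : ↥(fixedPoints (↥H) A) // ∀ c ∈ C, rho A H c b = b} := by
  apply Nat.card_congr
  refine ⟨fun a => ⟨⟨a.1, ?_⟩, ?_⟩, fun b => ⟨b.1.1, ?_⟩, fun a => Subtype.ext rfl,
    fun b => Subtype.ext (Subtype.ext rfl)⟩
  · exact mem_fp_iff.mpr fun g hg => mem_fp_iff.mp a.2 g (H_le_DD H C hg)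
  · intro c hc
    obtain ⟨n, rfl⟩ := QuotientGroup.mk'_surjective (H.subgroupOf (Subgroup.normalizer (H : Set G))) c
    apply Subtype.ext
    rw [QuotientGroup.mk'_apply, rho_mk]
    exact mem_fp_iff.mp a.2 (n : G) ⟨n, Subgroup.mem_comap.mpr hc, rfl⟩
  · rw [mem_fp_iff]
    rintro g ⟨n, hn, rfl⟩
    have h2 := b.2 (QuotientGroup.mk' (H.subgroupOf (Subgroup.normalizer (H : Set G))) n) (Subgroup.mem_comap.mp hn)
    rw [QuotientGroup.mk'_apply, rho_mk] at h2
    exact congrArg Subtype.val h2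

/-- `zpowers w` is cyclic. -/
lemma isCyclic_zpowers {W : Type} [Group W] (w : W) : IsCyclic ↥(Subgroup.zpowers w) := by
  constructor
  refine ⟨⟨w, Subgroup.mem_zpowers w⟩, ?_⟩
  rintro ⟨x, hx⟩
  obtain ⟨k, hk⟩ := Subgroup.mem_zpowers_iff.mp hx
  exact ⟨k, Subtype.ext (by rw [Subgroup.coe_zpow]; exact hk)⟩

lemma card_filter_zpowers_eq {W : Type} [Group W] [Fintype W]
    (C : Subgroup W) [DecidablePred fun w : W => Subgroup.zpowers w = C]
    [Decidable (IsCyclic ↥C)] :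
    (Finset.univ.filter fun w : W => Subgroup.zpowers w = C).card
      = if IsCyclic ↥C then (Nat.card ↥C).totient else 0 := by
  split
  · next hcyc =>
    letI : Fintype ↥C := Fintype.ofFinite _
    rw [Nat.card_eq_fintype_card, ← IsCyclic.card_orderOf_eq_totient (α := ↥C) dvd_rfl]
    apply Finset.card_bij (fun w hw => (⟨w, by
      rw [← (Finset.mem_filter.mp hw).2]; exact Subgroup.mem_zpowers w⟩ : ↥C))
    · intro w hw
      rw [Finset.mem_filter]
      refine ⟨Finset.mem_univ _, ?_⟩
      rw [Subgroup.orderOf_mk, ← Nat.card_zpowers, (Finset.mem_filter.mp hw).2,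
        Nat.card_eq_fintype_card]
    · intro w1 h1 w2 h2 hee
      exact congrArg Subtype.val hee
    · intro c hc
      have hc2 := (Finset.mem_filter.mp hc).2
      have hle : Subgroup.zpowers (c : W) ≤ C := Subgroup.zpowers_le.mpr c.2
      have hcard : Nat.card ↥C ≤ Nat.card ↥(Subgroup.zpowers (c : W)) := by
        rw [Nat.card_zpowers, Subgroup.orderOf_coe, hc2, Nat.card_eq_fintype_card]
      have heq : Subgroup.zpowers (c : W) = C := Subgroup.eq_of_le_of_card_ge hle hcard
      exact ⟨(c : W), Finset.mem_filter.mpr ⟨Finset.mem_univ _, heq⟩, Subtype.ext rfl⟩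
  · next hncyc =>
    rw [Finset.card_eq_zero, Finset.filter_eq_empty_iff]
    intro w _
    intro hw
    exact hncyc (hw ▸ isCyclic_zpowers w)


theorem necessity (hH : H.FiniteIndex) :
    (Nat.card (↥(Subgroup.normalizer (H : Set G)) ⧸ H.subgroupOf (Subgroup.normalizer (H : Set G))) : ℤ) ∣
      ∑ᶠ (C : Subgroup (↥(Subgroup.normalizer (H : Set G)) ⧸ H.subgroupOf (Subgroup.normalizer (H : Set G)))) (_ : IsCyclic C),
        (Nat.totient (Nat.card C) : ℤ) *
          (Nat.card (fixedPoints
            (↥((C.comap (QuotientGroup.mk' (H.subgroupOf (Subgroup.normalizer (H : Set G))))).map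
              (Subgroup.normalizer (H : Set G)).subtype)) A) : ℤ) := by
  classical
  haveI := hH
  letI : Fintype (↥(Subgroup.normalizer (H : Set G)) ⧸ H.subgroupOf (Subgroup.normalizer (H : Set G))) := Fintype.ofFinite _
  letI : Fintype (Subgroup (↥(Subgroup.normalizer (H : Set G)) ⧸ H.subgroupOf (Subgroup.normalizer (H : Set G)))) := Fintype.ofFinite _
  letI : Fintype ↥(fixedPoints (↥H) A) := Fintype.ofFinite _
  letI : MulAction (↥(Subgroup.normalizer (H : Set G)) ⧸ H.subgroupOf (Subgroup.normalizer (H : Set G))) ↥(fixedPoints (↥H) A) :=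
    MulAction.compHom _ (rho A H)
  letI : ∀ w : ↥(Subgroup.normalizer (H : Set G)) ⧸ H.subgroupOf (Subgroup.normalizer (H : Set G)),
      Fintype ↥(fixedBy ↥(fixedPoints (↥H) A) w) := fun w => Fintype.ofFinite _
  letI : Fintype (Quotient (orbitRel (↥(Subgroup.normalizer (H : Set G)) ⧸ H.subgroupOf (Subgroup.normalizer (H : Set G)))
      ↥(fixedPoints (↥H) A))) := Fintype.ofFinite _
  rw [finsum_eq_sum_of_fintype]
  have h2 : ∀ w : ↥(Subgroup.normalizer (H : Set G)) ⧸ H.subgroupOf (Subgroup.normalizer (H : Set G)),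
      (Nat.card {b : ↥(fixedPoints (↥H) A) // ∀ c ∈ Subgroup.zpowers w, rho A H c b = b} : ℤ)
        = (Fintype.card ↥(fixedBy ↥(fixedPoints (↥H) A) w) : ℤ) := by
    intro w
    rw [← Nat.card_eq_fintype_card]
    congr 1
    apply Nat.card_congr
    apply Equiv.subtypeEquivRight
    intro b
    constructor
    · intro hb
      exact hb w (Subgroup.mem_zpowers w)
    · intro hb c hc
      have hsub : Subgroup.zpowers w ≤ stabilizer (↥(Subgroup.normalizer (H : Set G)) ⧸ H.subgroupOf (Subgroup.normalizer (H : Set G))) b :=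
        Subgroup.zpowers_le.mpr (mem_stabilizer_iff.mpr hb)
      exact (hsub hc : c • b = b)
  have key : (∑ C : Subgroup (↥(Subgroup.normalizer (H : Set G)) ⧸ H.subgroupOf (Subgroup.normalizer (H : Set G))),
      ∑ᶠ (_ : IsCyclic C), (Nat.totient (Nat.card C) : ℤ) *
          (Nat.card (fixedPoints
            (↥((C.comap (QuotientGroup.mk' (H.subgroupOf (Subgroup.normalizer (H : Set G))))).map
              (Subgroup.normalizer (H : Set G)).subtype)) A) : ℤ))
      = ((Fintype.card (Quotient (orbitRel (↥(Subgroup.normalizer (H : Set G)) ⧸ H.subgroupOf (Subgroup.normalizer (H : Set G)))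
          ↥(fixedPoints (↥H) A))) * Fintype.card (↥(Subgroup.normalizer (H : Set G)) ⧸ H.subgroupOf (Subgroup.normalizer (H : Set G)))
          : ℕ) : ℤ) := by
    calc
      _ = ∑ C : Subgroup (↥(Subgroup.normalizer (H : Set G)) ⧸ H.subgroupOf (Subgroup.normalizer (H : Set G))),
          ∑ w ∈ Finset.univ.filter fun w => Subgroup.zpowers w = C,
            (Nat.card {b : ↥(fixedPoints (↥H) A) // ∀ c ∈ C, rho A H c b = b} : ℤ) := by
        refine Finset.sum_congr rfl fun C _ => ?_
        rw [finsum_eq_if, card_fixed_DD, Finset.sum_const, nsmul_eq_mul]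
        by_cases hc : IsCyclic C
        · rw [if_pos hc, card_filter_zpowers_eq, if_pos hc]
        · rw [if_neg hc, card_filter_zpowers_eq, if_neg hc]
          simp
      _ = ∑ w : ↥(Subgroup.normalizer (H : Set G)) ⧸ H.subgroupOf (Subgroup.normalizer (H : Set G)),
            (Nat.card {b : ↥(fixedPoints (↥H) A) //
              ∀ c ∈ Subgroup.zpowers w, rho A H c b = b} : ℤ) :=
        Finset.sum_fiberwise' Finset.univ (fun w => Subgroup.zpowers w) _
      _ = ∑ w : ↥(Subgroup.normalizer (H : Set G)) ⧸ H.subgroupOf (Subgroup.normalizer (H : Set G)),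
            (Fintype.card ↥(fixedBy ↥(fixedPoints (↥H) A) w) : ℤ) :=
        Finset.sum_congr rfl fun w _ => h2 w
      _ = _ := by
        rw [← MulAction.sum_card_fixedBy_eq_card_orbits_mul_card_group]
        push_cast
        rfl
  rw [key, Nat.card_eq_fintype_card]
  exact_mod_cast Dvd.intro_left _ rfl

end Necessity

/-- Disjoint-sum action. -/
def sumAction (α β : Type) [MulAction G α] [MulAction G β] : MulAction G (α ⊕ β) where
  smul g x := Sum.map (fun a => g • a) (fun b => g • b) x
  one_smul x := by
    cases x with
    | inl a => show Sum.inl ((1 : G) • a) = Sum.inl a; rw [one_smul]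
    | inr b => show Sum.inr ((1 : G) • b) = Sum.inr b; rw [one_smul]
  mul_smul g h x := by
    cases x with
    | inl a => show Sum.inl ((g * h) • a) = Sum.inl (g • h • a); rw [mul_smul]
    | inr b => show Sum.inr ((g * h) • b) = Sum.inr (g • h • b); rw [mul_smul]

/-- Action on `k` copies. -/
def copiesAction (k : ℕ) (α : Type) [MulAction G α] : MulAction G (Fin k × α) where
  smul g p := (p.1, g • p.2)
  one_smul p := by
    show (p.1, (1 : G) • p.2) = p
    rw [one_smul]
  mul_smul g h p := by
    show (p.1, (g * h) • p.2) = (p.1, g • h • p.2)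
    rw [mul_smul]

def gsum (S T : FiniteGSet G) : FiniteGSet G :=
  @FiniteGSet.mk G _ (S.carrier ⊕ T.carrier) inferInstance (sumAction _ _)

def gcopies (k : ℕ) (A : FiniteGSet G) : FiniteGSet G :=
  @FiniteGSet.mk G _ (Fin k × A.carrier) inferInstance (copiesAction k _)

def gtriv : FiniteGSet G :=
  @FiniteGSet.mk G _ PUnit inferInstance PUnit.mulAction

lemma card_fp_gsum (H : Subgroup G) (S T : FiniteGSet G) :
    Nat.card (fixedPoints (↥H) (gsum S T).carrier)
      = Nat.card (fixedPoints (↥H) S.carrier) + Nat.card (fixedPoints (↥H) T.carrier) := by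
  rw [← Nat.card_sum]
  apply Nat.card_congr
  refine
    { toFun := fun x => match x with
        | ⟨.inl a, h⟩ => .inl ⟨a, fun g => Sum.inl.inj (h g)⟩
        | ⟨.inr b, h⟩ => .inr ⟨b, fun g => Sum.inr.inj (h g)⟩
      invFun := fun x => match x with
        | .inl ⟨a, h⟩ => ⟨.inl a, fun g => congrArg Sum.inl (h g)⟩
        | .inr ⟨b, h⟩ => ⟨.inr b, fun g => congrArg Sum.inr (h g)⟩
      left_inv := ?_
      right_inv := ?_ }
  · rintro ⟨(a | b), h⟩ <;> rfl
  · rintro ((⟨a, h⟩) | (⟨b, h⟩)) <;> rfl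

lemma card_fp_gcopies (H : Subgroup G) (k : ℕ) (A : FiniteGSet G) :
    Nat.card (fixedPoints (↥H) (gcopies k A).carrier)
      = k * Nat.card (fixedPoints (↥H) A.carrier) := by
  have : k * Nat.card (fixedPoints (↥H) A.carrier)
      = Nat.card (Fin k × ↥(fixedPoints (↥H) A.carrier)) := by
    rw [Nat.card_prod]
    simp
  rw [this]
  apply Nat.card_congr
  refine
    { toFun := fun x => (x.1.1, ⟨x.1.2, fun g => congrArg Prod.snd (x.2 g)⟩)
      invFun := fun p => ⟨(p.1, p.2.1), fun g => Prod.ext rfl (p.2.2 g)⟩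
      left_inv := ?_
      right_inv := ?_ }
  · rintro ⟨⟨i, a⟩, h⟩; rfl
  · rintro ⟨i, ⟨a, h⟩⟩; rfl

/-- "x is a virtual mark homomorphism of a pair of finite G-sets". -/
def IsVM (x : Subgroup G → ℤ) : Prop :=
  ∃ S T : FiniteGSet G, ∀ H : Subgroup G,
    x H = (Nat.card (fixedPoints H S.carrier) : ℤ)
        - (Nat.card (fixedPoints H T.carrier) : ℤ)

lemma isVM_of_eq {x y : Subgroup G → ℤ} (h : IsVM y) (he : ∀ H, x H = y H) : IsVM x := by
  obtain ⟨S, T, hST⟩ := h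
  exact ⟨S, T, fun H => (he H).trans (hST H)⟩

lemma isVM_add_mark {y : Subgroup G → ℤ} (hy : IsVM y) (c : ℤ) (A : FiniteGSet G) :
    IsVM (fun H => y H + c * (Nat.card (fixedPoints (↥H) A.carrier) : ℤ)) := by
  obtain ⟨S, T, hST⟩ := hy
  rcases le_or_gt 0 c with hc | hc
  · refine ⟨gsum S (gcopies c.toNat A), T, fun H => ?_⟩
    simp only []
    rw [card_fp_gsum, card_fp_gcopies, hST H]
    push_cast
    rw [Int.toNat_of_nonneg hc]
    ring
  · refine ⟨S, gsum T (gcopies (-c).toNat A), fun H => ?_⟩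
    simp only []
    rw [card_fp_gsum, card_fp_gcopies, hST H]
    push_cast
    rw [Int.toNat_of_nonneg (by omega)]
    ring

lemma finite_lattice (K : Subgroup G) [K.Normal] (hfin : K.index ≠ 0) :
    {H : Subgroup G | K ≤ H}.Finite := by
  haveI : K.FiniteIndex := ⟨hfin⟩
  have hinj : Function.Injective
      (fun H : ↥{H : Subgroup G | K ≤ H} => Subgroup.map (QuotientGroup.mk' K) H.1) := by
    intro H1 H2 hmap
    apply Subtype.ext
    have h1 := congrArg (Subgroup.comap (QuotientGroup.mk' K)) hmap
    rwa [Subgroup.comap_map_eq, Subgroup.comap_map_eq, QuotientGroup.ker_mk',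
      sup_eq_left.mpr H1.2, sup_eq_left.mpr H2.2] at h1
  have : Finite ↥{H : Subgroup G | K ≤ H} := Finite.of_injective _ hinj
  exact Set.finite_coe_iff.mp this



section Main

variable (K : Subgroup G) [hKn : K.Normal]

theorem main_aux (m : ℕ) :
    ∀ (x : Subgroup G → ℤ),
    (∀ (g : G) (H : Subgroup G), x (H.map (MulAut.conj g).toMonoidHom) = x H) →
    K.index ≠ 0 →
    (∀ H : Subgroup G, x (H ⊔ K) = x H) →
    (∀ H : Subgroup G, H.FiniteIndex →
      (Nat.card (↥(Subgroup.normalizer (H : Set G)) ⧸ H.subgroupOf (Subgroup.normalizer (H : Set G))) : ℤ) ∣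
        ∑ᶠ (C : Subgroup (↥(Subgroup.normalizer (H : Set G)) ⧸ H.subgroupOf (Subgroup.normalizer (H : Set G)))) (_ : IsCyclic C),
          (Nat.totient (Nat.card C) : ℤ) *
            x ((C.comap (QuotientGroup.mk' (H.subgroupOf (Subgroup.normalizer (H : Set G))))).map
              (Subgroup.normalizer (H : Set G)).subtype)) →
    ∀ n : ℕ, K.index < n + m →
    (∀ H : Subgroup G, K ≤ H → H.index < n → x H = 0) →
    IsVM x := by
  induction m with
  | zero =>
    intro x hconj hKfin hKx hcong n hm hvan
    refine ⟨gtriv, gtriv, fun H => ?_⟩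
    have h0 : x H = 0 := by
      rw [← hKx H]
      apply hvan _ le_sup_right
      have h1 : (H ⊔ K).index ∣ K.index := Subgroup.index_dvd_of_le le_sup_right
      have h2 := Nat.le_of_dvd (Nat.pos_of_ne_zero hKfin) h1
      omega
    rw [h0]
    simp
  | succ m ih =>
    intro x hconj hKfin hKx hcong n hm hvan
    classical
    have hidxne : ∀ L : Subgroup G, K ≤ L → L.index ≠ 0 := fun L hL h0 =>
      hKfin (Nat.eq_zero_of_zero_dvd (h0 ▸ Subgroup.index_dvd_of_le hL))
    suffices hinner : ∀ (k : ℕ) (x : Subgroup G → ℤ),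
        (∀ (g : G) (H : Subgroup G), x (H.map (MulAut.conj g).toMonoidHom) = x H) →
        (∀ H : Subgroup G, x (H ⊔ K) = x H) →
        (∀ H : Subgroup G, H.FiniteIndex →
          (Nat.card (↥(Subgroup.normalizer (H : Set G)) ⧸ H.subgroupOf (Subgroup.normalizer (H : Set G))) : ℤ) ∣
            ∑ᶠ (C : Subgroup (↥(Subgroup.normalizer (H : Set G)) ⧸ H.subgroupOf (Subgroup.normalizer (H : Set G)))) (_ : IsCyclic C),
              (Nat.totient (Nat.card C) : ℤ) *
                x ((C.comap (QuotientGroup.mk' (H.subgroupOf (Subgroup.normalizer (H : Set G))))).map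
                  (Subgroup.normalizer (H : Set G)).subtype)) →
        (∀ H : Subgroup G, K ≤ H → H.index < n → x H = 0) →
        {H : Subgroup G | K ≤ H ∧ H.index = n ∧ x H ≠ 0}.ncard ≤ k →
        IsVM x by
      exact hinner _ x hconj hKx hcong hvan le_rfl
    intro k
    induction k with
    | zero =>
      intro x hconj hKx hcong hvan hcard
      apply ih x hconj hKfin hKx hcong (n + 1) (by omega)
      intro H hKH hidx
      rcases Nat.lt_or_ge H.index n with h | h
      · exact hvan H hKH h
      · have hidxn : H.index = n := by omega
        by_contra hne
        have hfin : {H : Subgroup G | K ≤ H ∧ H.index = n ∧ x H ≠ 0}.Finite :=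
          (finite_lattice K hKfin).subset (fun L hL => hL.1)
        have hpos := (Set.ncard_pos hfin).mpr ⟨H, hKH, hidxn, hne⟩
        omega
    | succ k ihk =>
      intro x hconj hKx hcong hvan hcard
      rcases Set.eq_empty_or_nonempty {H : Subgroup G | K ≤ H ∧ H.index = n ∧ x H ≠ 0} with
        he | ⟨H0, hKH0, hidx0, hx0⟩
      · exact ihk x hconj hKx hcong hvan (by rw [he]; simp)
      -- core step
      have hH0ne : H0.index ≠ 0 := hidxne H0 hKH0
      haveI hH0fin : H0.FiniteIndex := ⟨hH0ne⟩
      have hnne : n ≠ 0 := hidx0 ▸ hH0ne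
      haveI : Finite (G ⧸ H0) := inferInstance
      letI : Fintype (Subgroup (↥(Subgroup.normalizer (H0 : Set G)) ⧸ H0.subgroupOf (Subgroup.normalizer (H0 : Set G)))) :=
        Fintype.ofFinite _
      -- x vanishes on the proper pullbacks appearing in the congruence at H0
      have hDD : ∀ C : Subgroup (↥(Subgroup.normalizer (H0 : Set G)) ⧸ H0.subgroupOf (Subgroup.normalizer (H0 : Set G))), C ≠ ⊥ →
          x ((C.comap (QuotientGroup.mk' (H0.subgroupOf (Subgroup.normalizer (H0 : Set G))))).map
            (Subgroup.normalizer (H0 : Set G)).subtype) = 0 := by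
        intro C hC
        have hH0D : H0 ≤ (C.comap (QuotientGroup.mk' (H0.subgroupOf (Subgroup.normalizer (H0 : Set G))))).map
            (Subgroup.normalizer (H0 : Set G)).subtype := H_le_DD H0 C
        have hKD : K ≤ _ := le_trans hKH0 hH0D
        have hDne : (C.comap (QuotientGroup.mk' (H0.subgroupOf (Subgroup.normalizer (H0 : Set G))))).map
            (Subgroup.normalizer (H0 : Set G)).subtype ≠ H0 := by
          intro he
          apply hC
          have h1 : C.comap (QuotientGroup.mk' (H0.subgroupOf (Subgroup.normalizer (H0 : Set G))))
              = H0.subgroupOf (Subgroup.normalizer (H0 : Set G)) := by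
            apply Subgroup.map_injective (Subgroup.normalizer (H0 : Set G)).subtype_injective
            rw [he, Subgroup.subgroupOf_map_subtype, inf_eq_left.mpr Subgroup.le_normalizer]
          have h2 : C = (C.comap (QuotientGroup.mk'
              (H0.subgroupOf (Subgroup.normalizer (H0 : Set G))))).map (QuotientGroup.mk' _) :=
            (Subgroup.map_comap_eq_self_of_surjective
              (QuotientGroup.mk'_surjective _) C).symm
          rw [h2, h1, (Subgroup.map_eq_bot_iff _).mpr (by rw [QuotientGroup.ker_mk'])]
        have hd1 : ((C.comap (QuotientGroup.mk' (H0.subgroupOf (Subgroup.normalizer (H0 : Set G))))).map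
            (Subgroup.normalizer (H0 : Set G)).subtype).index ∣ n := hidx0 ▸ Subgroup.index_dvd_of_le hH0D
        have hdn : ((C.comap (QuotientGroup.mk' (H0.subgroupOf (Subgroup.normalizer (H0 : Set G))))).map
            (Subgroup.normalizer (H0 : Set G)).subtype).index ≠ n := by
          intro heq
          exact hDne (eq_of_le_of_index_eq hH0D (by rw [heq, hidx0]) hH0ne).symm
        have hle := Nat.le_of_dvd (Nat.pos_of_ne_zero hnne) hd1
        exact hvan _ hKD (by omega)
      -- evaluate the congruence at H0
      have hsum : (∑ᶠ (C : Subgroup (↥(Subgroup.normalizer (H0 : Set G)) ⧸ H0.subgroupOf (Subgroup.normalizer (H0 : Set G))))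
          (_ : IsCyclic C), (Nat.totient (Nat.card C) : ℤ) *
            x ((C.comap (QuotientGroup.mk' (H0.subgroupOf (Subgroup.normalizer (H0 : Set G))))).map
              (Subgroup.normalizer (H0 : Set G)).subtype)) = x H0 := by
        rw [finsum_eq_sum_of_fintype]
        rw [Finset.sum_eq_single ⊥ (fun C _ hC => by
            rw [finsum_eq_if]
            split
            · rw [hDD C hC, mul_zero]
            · rfl)
          (fun h => absurd (Finset.mem_univ _) h)]
        have hbot : (((⊥ : Subgroup (↥(Subgroup.normalizer (H0 : Set G)) ⧸ H0.subgroupOf (Subgroup.normalizer (H0 : Set G)))).comap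
            (QuotientGroup.mk' (H0.subgroupOf (Subgroup.normalizer (H0 : Set G))))).map (Subgroup.normalizer (H0 : Set G)).subtype)
            = H0 := by
          rw [MonoidHom.comap_bot, QuotientGroup.ker_mk', Subgroup.subgroupOf_map_subtype,
            inf_eq_left.mpr Subgroup.le_normalizer]
        rw [finsum_eq_if, if_pos (inferInstance : IsCyclic
          (⊥ : Subgroup (↥(Subgroup.normalizer (H0 : Set G)) ⧸ H0.subgroupOf (Subgroup.normalizer (H0 : Set G))))), hbot,
          Subgroup.card_bot, Nat.totient_one]
        simp
      have hdvd := hcong H0 hH0fin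
      rw [hsum] at hdvd
      obtain ⟨c, hc⟩ := hdvd
      -- the corrected function x'
      set x' : Subgroup G → ℤ :=
        fun L => x L - c * (Nat.card (fixedPoints (↥L) (G ⧸ H0)) : ℤ) with hx'
      -- triviality of the K-action on G ⧸ H0
      have htriv : ∀ k ∈ K, ∀ q : G ⧸ H0, k • q = q := by
        intro k hk q
        obtain ⟨g, rfl⟩ := QuotientGroup.mk_surjective q
        rw [MulAction.Quotient.smul_mk, QuotientGroup.eq]
        have heq : (k • g)⁻¹ * g = g⁻¹ * k⁻¹ * g := by simp only [smul_eq_mul]; group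
        rw [heq]
        apply hKH0
        have hmem := hKn.conj_mem k⁻¹ (K.inv_mem hk) g⁻¹
        rwa [inv_inv] at hmem
      -- hypotheses for x'
      have hconj' : ∀ (g : G) (H : Subgroup G),
          x' (H.map (MulAut.conj g).toMonoidHom) = x' H := by
        intro g H
        rw [hx']
        simp only []
        rw [hconj g H]; erw [card_fp_conj]; rfl
      have hKx' : ∀ H : Subgroup G, x' (H ⊔ K) = x' H := by
        intro H
        rw [hx']
        simp only []
        rw [hKx H]; erw [fp_sup_of_trivial htriv]; rfl
      have hcong' : ∀ H : Subgroup G, H.FiniteIndex →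
          (Nat.card (↥(Subgroup.normalizer (H : Set G)) ⧸ H.subgroupOf (Subgroup.normalizer (H : Set G))) : ℤ) ∣
            ∑ᶠ (C : Subgroup (↥(Subgroup.normalizer (H : Set G)) ⧸ H.subgroupOf (Subgroup.normalizer (H : Set G)))) (_ : IsCyclic C),
              (Nat.totient (Nat.card C) : ℤ) *
                x' ((C.comap (QuotientGroup.mk' (H.subgroupOf (Subgroup.normalizer (H : Set G))))).map
                  (Subgroup.normalizer (H : Set G)).subtype) := by
        intro H hH
        haveI := hH
        letI : Fintype (Subgroup (↥(Subgroup.normalizer (H : Set G)) ⧸ H.subgroupOf (Subgroup.normalizer (H : Set G)))) :=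
          Fintype.ofFinite _
        have h1 : (∑ᶠ (C : Subgroup (↥(Subgroup.normalizer (H : Set G)) ⧸ H.subgroupOf (Subgroup.normalizer (H : Set G))))
            (_ : IsCyclic C), (Nat.totient (Nat.card C) : ℤ) *
              x' ((C.comap (QuotientGroup.mk' (H.subgroupOf (Subgroup.normalizer (H : Set G))))).map
                (Subgroup.normalizer (H : Set G)).subtype))
            = (∑ C : Subgroup (↥(Subgroup.normalizer (H : Set G)) ⧸ H.subgroupOf (Subgroup.normalizer (H : Set G))),
                ∑ᶠ (_ : IsCyclic C), (Nat.totient (Nat.card C) : ℤ) *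
                  x ((C.comap (QuotientGroup.mk' (H.subgroupOf (Subgroup.normalizer (H : Set G))))).map
                    (Subgroup.normalizer (H : Set G)).subtype))
              - c * (∑ C : Subgroup (↥(Subgroup.normalizer (H : Set G)) ⧸ H.subgroupOf (Subgroup.normalizer (H : Set G))),
                ∑ᶠ (_ : IsCyclic C), (Nat.totient (Nat.card C) : ℤ) *
                  (Nat.card (fixedPoints
                    (↥((C.comap (QuotientGroup.mk' (H.subgroupOf (Subgroup.normalizer (H : Set G))))).map
                      (Subgroup.normalizer (H : Set G)).subtype)) (G ⧸ H0)) : ℤ)) := by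
          rw [finsum_eq_sum_of_fintype, Finset.mul_sum, ← Finset.sum_sub_distrib]
          apply Finset.sum_congr rfl
          intro C _
          rw [finsum_eq_if, finsum_eq_if, finsum_eq_if]
          split
          · rw [hx']; ring
          · simp
        rw [h1]
        apply dvd_sub
        · have h2 := hcong H hH
          rwa [finsum_eq_sum_of_fintype] at h2
        · have h3 := necessity (G ⧸ H0) H hH
          rw [finsum_eq_sum_of_fintype] at h3
          exact h3.mul_left c
      have hvan' : ∀ H : Subgroup G, K ≤ H → H.index < n → x' H = 0 := by
        intro L hKL hLn
        rw [hx']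
        simp only []
        haveI : IsEmpty (fixedPoints (↥L) (G ⧸ H0)) :=
          fp_quotient_isEmpty (by omega) (hidxne L hKL)
        rw [hvan L hKL hLn, Nat.card_of_isEmpty]
        ring
      -- the set of bad subgroups at level n has shrunk
      have hlatfin : {H : Subgroup G | K ≤ H ∧ H.index = n ∧ x H ≠ 0}.Finite :=
        (finite_lattice K hKfin).subset (fun L hL => hL.1)
      have hH0mem : H0 ∈ {H : Subgroup G | K ≤ H ∧ H.index = n ∧ x H ≠ 0} :=
        ⟨hKH0, hidx0, hx0⟩
      have hsub : {H : Subgroup G | K ≤ H ∧ H.index = n ∧ x' H ≠ 0}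
          ⊆ {H : Subgroup G | K ≤ H ∧ H.index = n ∧ x H ≠ 0} \ {H0} := by
        rintro L ⟨hKL, hLn, hxL'⟩
        rcases Set.eq_empty_or_nonempty (fixedPoints (↥L) (G ⧸ H0)) with hem | ⟨q, hq⟩
        · -- no fixed points : x' L = x L, and L is not conjugate to H0, in particular ≠ H0
          have hmark : Nat.card (fixedPoints (↥L) (G ⧸ H0)) = 0 := by rw [hem]; simp
          have hxLeq : x' L = x L := by rw [hx']; simp only []; rw [hmark]; push_cast; ring
          refine ⟨⟨hKL, hLn, by rwa [hxLeq] at hxL'⟩, ?_⟩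
          intro heq
          rw [Set.mem_singleton_iff] at heq
          subst heq
          have hone : ((1 : G) : G ⧸ L) ∈ fixedPoints (↥L) (G ⧸ L) := by
            refine mem_fp_iff.mpr ?_
            intro g hg
            rw [MulAction.Quotient.smul_mk, QuotientGroup.eq]
            simpa using L.inv_mem hg
          rw [hem] at hone
          exact hone
        · -- a fixed point exists : L is conjugate to H0 and x' L = 0, contradiction
          exfalso
          obtain ⟨g, rfl⟩ := QuotientGroup.mk_surjective q
          have hLc : H0.map (MulAut.conj g).toMonoidHom = L :=
            conj_of_fixed (by rw [hLn, hidx0]) (hidxne L hKL) hq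
          have hxL : x L = x H0 := by rw [← hLc, hconj]
          have hmL : Nat.card (fixedPoints (↥L) (G ⧸ H0))
              = Nat.card (↥(Subgroup.normalizer (H0 : Set G)) ⧸ H0.subgroupOf (Subgroup.normalizer (H0 : Set G))) := by
            rw [← hLc]; erw [card_fp_conj, card_fp_self hH0ne]
          apply hxL'
          rw [hx']
          simp only []
          rw [hxL, hmL, hc]
          ring
      have hcard' : {H : Subgroup G | K ≤ H ∧ H.index = n ∧ x' H ≠ 0}.ncard ≤ k := by
        have h1 : {H : Subgroup G | K ≤ H ∧ H.index = n ∧ x' H ≠ 0}.ncard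
            ≤ ({H : Subgroup G | K ≤ H ∧ H.index = n ∧ x H ≠ 0} \ {H0}).ncard :=
          Set.ncard_le_ncard hsub hlatfin.diff
        have h2 := Set.ncard_diff_singleton_of_mem hH0mem
        have h3 := (Set.ncard_pos hlatfin).mpr ⟨H0, hH0mem⟩
        omega
      -- conclude via the inner induction hypothesis
      have hIH : IsVM x' := ihk x' hconj' hKx' hcong' hvan' hcard'
      have hA := isVM_add_mark hIH c (@FiniteGSet.mk G _ (G ⧸ H0) inferInstance inferInstance)
      apply isVM_of_eq hA
      intro L
      rw [hx']
      have hrfl : (Nat.card (fixedPoints (↥L)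
          ((@FiniteGSet.mk G _ (G ⧸ H0) inferInstance inferInstance).carrier)) : ℤ)
          = (Nat.card (fixedPoints (↥L) (G ⧸ H0)) : ℤ) := rfl
      simp only []
      rw [hrfl]
      exact (sub_add_cancel _ _).symm

end Main
end BAux

/-- **Burnside ring congruences for the finite-`G`-set version `\overline{A}(G)`
(sufficiency direction).**  A conjugation-invariant integer-valued function on
the subgroups of an arbitrary group `G` which (i) factors through quotienting
by some finite-index normal subgroup `K` (i.e. `x(H) = x(H·K)` for all `H`) and
(ii) satisfies the Burnside congruences at every finite-index subgroup `H`, is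
of the form `H ↦ |S^H| - |T^H|` for finite `G`-sets `S`, `T`. -/
theorem burnside_congruences_sufficient_infinite
    (G : Type) [Group G] (x : Subgroup G → ℤ)
    (hconj : ∀ (g : G) (H : Subgroup G), x (H.map (MulAut.conj g).toMonoidHom) = x H)
    (hK : ∃ K : Subgroup G, K.Normal ∧ K.FiniteIndex ∧ ∀ H : Subgroup G, x (H ⊔ K) = x H)
    (hcong : ∀ H : Subgroup G, H.FiniteIndex →
      (Nat.card (↥(Subgroup.normalizer (H : Set G)) ⧸ H.subgroupOf (Subgroup.normalizer (H : Set G))) : ℤ) ∣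
        ∑ᶠ (C : Subgroup (↥(Subgroup.normalizer (H : Set G)) ⧸ H.subgroupOf (Subgroup.normalizer (H : Set G)))) (_ : IsCyclic C),
          (Nat.totient (Nat.card C) : ℤ) *
            x ((C.comap (QuotientGroup.mk' (H.subgroupOf (Subgroup.normalizer (H : Set G))))).map
              (Subgroup.normalizer (H : Set G)).subtype)) :
    ∃ S T : FiniteGSet G, ∀ H : Subgroup G,
      x H = (Nat.card (MulAction.fixedPoints H S.carrier) : ℤ)
          - (Nat.card (MulAction.fixedPoints H T.carrier) : ℤ) := by
  obtain ⟨K, hKn, hKf, hKx⟩ := hK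
  haveI := hKn
  exact BAux.main_aux K (K.index + 1) x hconj hKf.index_ne_zero hKx hcong 0 (by omega)
    (fun H _ h => absurd h (Nat.not_lt_zero _))
end

section
/- Let σ be a permutation of a finite set S and let n ≥ 1 be an integer. Then Σ_{m | n} φ(n/m) · |Fix(σ^m)| ≡ 0 (mod n), where the sum runs over the positive divisors m of n, Fix(σ^m) denotes the set of fixed points of σ^m, and φ is Euler's totient function. -/
open Function Finset

section Aux

variable {S : Type*}

private lemma pow_apply_mod (σ : Equiv.Perm S) {n : ℕ} {s : S} (hs : (σ ^ n) s = s) (k : ℕ) :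
    (σ ^ k) s = (σ ^ (k % n)) s := by
  have h1 : (σ ^ (n * (k / n))) s = s := by
    have : Function.IsFixedPt (⇑(σ ^ n)) s := hs
    have h2 := this.iterate (k / n)
    rwa [Equiv.Perm.iterate_eq_pow, ← pow_mul] at h2
  conv_lhs => rw [← Nat.mod_add_div k n]
  rw [pow_add, Equiv.Perm.mul_apply, h1]

private def cyclicAct (σ : Equiv.Perm S) (n : ℕ) [NeZero n] :
    MulAction (Multiplicative (ZMod n)) {s : S // (σ ^ n) s = s} where
  smul j s := ⟨(σ ^ (Multiplicative.toAdd j).val) s.1, by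
    rw [← Equiv.Perm.mul_apply, ← pow_add, add_comm, pow_add, Equiv.Perm.mul_apply, s.2]⟩
  one_smul s := by
    apply Subtype.ext
    show (σ ^ (Multiplicative.toAdd (1 : Multiplicative (ZMod n))).val) s.1 = s.1
    simp
  mul_smul a b s := by
    apply Subtype.ext
    show (σ ^ (Multiplicative.toAdd (a * b)).val) s.1
        = (σ ^ (Multiplicative.toAdd a).val) ((σ ^ (Multiplicative.toAdd b).val) s.1)
    have hb : (σ ^ n) ((σ ^ (Multiplicative.toAdd b).val) s.1)
        = (σ ^ (Multiplicative.toAdd b).val) s.1 := by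
      rw [← Equiv.Perm.mul_apply, ← pow_add, add_comm, pow_add, Equiv.Perm.mul_apply, s.2]
    rw [← Equiv.Perm.mul_apply, ← pow_add]
    have : Multiplicative.toAdd (a * b) = Multiplicative.toAdd a + Multiplicative.toAdd b := rfl
    rw [this, ZMod.val_add]
    rw [← pow_apply_mod σ s.2]

private lemma sum_totient_filter {n : ℕ} (hn : 0 < n) (d : ℕ) :
    (∑ m ∈ n.divisors, if d ∣ m then Nat.totient (n / m) else 0)
      = if d ∣ n then n / d else 0 := by
  split_ifs with hd
  · have hd0 : 0 < d := Nat.pos_of_dvd_of_pos hd hn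
    have hnd0 : 0 < n / d := Nat.div_pos (Nat.le_of_dvd hn hd) hd0
    rw [← Finset.sum_filter]
    have : ∑ m ∈ n.divisors.filter (d ∣ ·), Nat.totient (n / m)
        = ∑ k ∈ (n / d).divisors, Nat.totient ((n / d) / k) := by
      refine Finset.sum_nbij' (fun m => m / d) (fun k => d * k) ?_ ?_ ?_ ?_ ?_
      · intro m hm
        simp only [Finset.mem_filter, Nat.mem_divisors] at hm
        obtain ⟨⟨hmn, _⟩, hdm⟩ := hm
        refine Nat.mem_divisors.mpr ⟨?_, hnd0.ne'⟩
        rw [Nat.dvd_div_iff_mul_dvd hd, Nat.mul_div_cancel' hdm]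
        exact hmn
      · intro k hk
        simp only [Nat.mem_divisors] at hk
        refine Finset.mem_filter.mpr ⟨Nat.mem_divisors.mpr ⟨?_, hn.ne'⟩, Dvd.intro k rfl⟩
        exact (Nat.dvd_div_iff_mul_dvd hd).mp hk.1
      · intro m hm
        simp only [Finset.mem_filter] at hm
        exact Nat.mul_div_cancel' hm.2
      · intro k hk
        exact Nat.mul_div_cancel_left k hd0
      · intro m hm
        simp only [Finset.mem_filter] at hm
        congr 1
        rw [Nat.div_div_eq_div_mul, Nat.mul_div_cancel' hm.2]
    rw [this, Nat.sum_div_divisors, Nat.sum_totient]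
  · refine Finset.sum_eq_zero fun m hm => ?_
    rw [if_neg]
    exact fun hdm => hd (hdm.trans (Nat.dvd_of_mem_divisors hm))

private lemma card_range_filter_dvd {n d : ℕ} (hn : 0 < n) (hd : d ∣ n) :
    ((Finset.range n).filter (fun j => d ∣ j)).card = n / d := by
  have hd0 : 0 < d := Nat.pos_of_dvd_of_pos hd hn
  rw [← Finset.card_range (n / d)]
  refine Finset.card_bij' (fun j _ => j / d) (fun k _ => d * k) ?_ ?_ ?_ ?_
  · intro j hj
    simp only [Finset.mem_filter, Finset.mem_range] at hj
    exact Finset.mem_range.mpr (Nat.div_lt_div_of_lt_of_dvd hd hj.1)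
  · intro k hk
    simp only [Finset.mem_range] at hk
    refine Finset.mem_filter.mpr ⟨Finset.mem_range.mpr ?_, Dvd.intro k rfl⟩
    calc d * k < d * (n / d) := Nat.mul_lt_mul_of_pos_left hk hd0
    _ = n := Nat.mul_div_cancel' hd
  · intro j hj
    simp only [Finset.mem_filter] at hj
    exact Nat.mul_div_cancel' hj.2
  · intro k _
    exact Nat.mul_div_cancel_left k hd0

end Aux

/-- **Burnside ring congruence for the infinite cyclic group ℤ at `nℤ`.**
For a permutation `σ` of a finite set `S` and `n ≥ 1` one has
`Σ_{m ∣ n} φ(n/m) · |Fix(σ^m)| ≡ 0 (mod n)`. -/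
theorem burnside_congruence_perm
    (S : Type*) [Finite S] (σ : Equiv.Perm S) (n : ℕ) (hn : 1 ≤ n) :
    n ∣ ∑ m ∈ n.divisors, Nat.totient (n / m) * Nat.card {s : S // (σ ^ m) s = s} := by
  classical
  cases nonempty_fintype S
  have hn0 : 0 < n := hn
  haveI : NeZero n := ⟨hn0.ne'⟩
  letI act := cyclicAct σ n
  have hiff : ∀ (m : ℕ) (s : S), (σ ^ m) s = s ↔ Function.minimalPeriod (⇑σ) s ∣ m := by
    intro m s
    rw [← Function.isPeriodicPt_iff_minimalPeriod_dvd]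
    unfold Function.IsPeriodicPt Function.IsFixedPt
    rw [Equiv.Perm.iterate_eq_pow]
  have hcard : ∀ m : ℕ, Nat.card {s : S // (σ ^ m) s = s}
      = (Finset.univ.filter (fun s : S => Function.minimalPeriod (⇑σ) s ∣ m)).card := by
    intro m
    rw [Nat.card_eq_fintype_card, Fintype.card_subtype]
    congr 1
    ext s
    simp [hiff m s]
  -- LHS equals per-element sum
  have hL : (∑ m ∈ n.divisors, Nat.totient (n / m) * Nat.card {s : S // (σ ^ m) s = s})
      = ∑ s : S, (if Function.minimalPeriod (⇑σ) s ∣ n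
          then n / Function.minimalPeriod (⇑σ) s else 0) := by
    calc ∑ m ∈ n.divisors, Nat.totient (n / m) * Nat.card {s : S // (σ ^ m) s = s}
        = ∑ m ∈ n.divisors, ∑ s : S,
            (if Function.minimalPeriod (⇑σ) s ∣ m then Nat.totient (n / m) else 0) := by
          refine Finset.sum_congr rfl fun m _ => ?_
          rw [hcard m, Finset.card_filter, Finset.mul_sum]
          simp [mul_ite]
      _ = ∑ s : S, ∑ m ∈ n.divisors,
            (if Function.minimalPeriod (⇑σ) s ∣ m then Nat.totient (n / m) else 0) :=
          Finset.sum_comm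
      _ = _ := Finset.sum_congr rfl fun s _ => sum_totient_filter hn0 _
  rw [hL]
  have burnside := MulAction.sum_card_fixedBy_eq_card_orbits_mul_card_group
    (Multiplicative (ZMod n)) {s : S // (σ ^ n) s = s}
  have hG : Fintype.card (Multiplicative (ZMod n)) = n := by rw [Fintype.card_multiplicative]; exact ZMod.card n
  -- card of fixedBy
  have smul_def : ∀ (j : Multiplicative (ZMod n)) (x : {s : S // (σ ^ n) s = s}),
      (j • x).1 = (σ ^ (Multiplicative.toAdd j).val) x.1 := fun _ _ => rfl
  have hfix : ∀ g : Multiplicative (ZMod n),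
      Fintype.card (MulAction.fixedBy {s : S // (σ ^ n) s = s} g)
        = (Finset.univ.filter (fun s : S =>
            Function.minimalPeriod (⇑σ) s ∣ n ∧
            Function.minimalPeriod (⇑σ) s ∣ (Multiplicative.toAdd g).val)).card := by
    intro g
    have key : ∀ x : {s : S // (σ ^ n) s = s}, x ∈ MulAction.fixedBy {s : S // (σ ^ n) s = s} g ↔
        (σ ^ (Multiplicative.toAdd g).val) x.1 = x.1 := by
      intro x
      rw [MulAction.mem_fixedBy, Subtype.ext_iff, smul_def]
    calc Fintype.card (MulAction.fixedBy {s : S // (σ ^ n) s = s} g)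
        = Fintype.card {x : {s : S // (σ ^ n) s = s} // (σ ^ (Multiplicative.toAdd g).val) x.1 = x.1} :=
          Fintype.card_congr (Equiv.subtypeEquivRight key)
      _ = Fintype.card {s : S // (σ ^ n) s = s ∧ (σ ^ (Multiplicative.toAdd g).val) s = s} :=
          Fintype.card_congr (Equiv.subtypeSubtypeEquivSubtypeInter
            (fun s : S => (σ ^ n) s = s)
            (fun s : S => (σ ^ (Multiplicative.toAdd g).val) s = s))
      _ = _ := by
          rw [Fintype.card_subtype]
          congr 1
          ext s
          simp [hiff]
  -- sum over group = sum over range n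
  have hsum : (∑ g : Multiplicative (ZMod n), Fintype.card (MulAction.fixedBy {s : S // (σ ^ n) s = s} g))
      = ∑ j ∈ Finset.range n, (Finset.univ.filter (fun s : S =>
          Function.minimalPeriod (⇑σ) s ∣ n ∧ Function.minimalPeriod (⇑σ) s ∣ j)).card := by
    refine Finset.sum_nbij' (fun g => (Multiplicative.toAdd g).val)
      (fun j => Multiplicative.ofAdd ((j : ℕ) : ZMod n)) ?_ ?_ ?_ ?_ ?_
    · intro g _; exact Finset.mem_range.mpr (ZMod.val_lt _)
    · intro j _; exact Finset.mem_univ _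
    · intro g _
      show Multiplicative.ofAdd (((Multiplicative.toAdd g).val : ℕ) : ZMod n) = g
      rw [ZMod.natCast_rightInverse (Multiplicative.toAdd g)]
      rfl
    · intro j hj
      show (Multiplicative.toAdd (Multiplicative.ofAdd ((j : ℕ) : ZMod n))).val = j
      rw [toAdd_ofAdd, ZMod.val_cast_of_lt (Finset.mem_range.mp hj)]
    · intro g _
      exact hfix g
  -- evaluate range-sum
  have hR : (∑ j ∈ Finset.range n, (Finset.univ.filter (fun s : S =>
        Function.minimalPeriod (⇑σ) s ∣ n ∧ Function.minimalPeriod (⇑σ) s ∣ j)).card)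
      = ∑ s : S, (if Function.minimalPeriod (⇑σ) s ∣ n
          then n / Function.minimalPeriod (⇑σ) s else 0) := by
    calc ∑ j ∈ Finset.range n, (Finset.univ.filter (fun s : S =>
          Function.minimalPeriod (⇑σ) s ∣ n ∧ Function.minimalPeriod (⇑σ) s ∣ j)).card
        = ∑ j ∈ Finset.range n, ∑ s : S, (if Function.minimalPeriod (⇑σ) s ∣ n ∧
            Function.minimalPeriod (⇑σ) s ∣ j then 1 else 0) := by
          refine Finset.sum_congr rfl fun j _ => ?_
          rw [Finset.card_filter]
      _ = ∑ s : S, ∑ j ∈ Finset.range n, (if Function.minimalPeriod (⇑σ) s ∣ n ∧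
            Function.minimalPeriod (⇑σ) s ∣ j then 1 else 0) := Finset.sum_comm
      _ = _ := by
          refine Finset.sum_congr rfl fun s _ => ?_
          by_cases hd : Function.minimalPeriod (⇑σ) s ∣ n
          · rw [if_pos hd, ← card_range_filter_dvd hn0 hd, Finset.card_filter]
            refine Finset.sum_congr rfl fun j _ => ?_
            simp [hd]
          · rw [if_neg hd]
            refine Finset.sum_eq_zero fun j _ => ?_
            simp [hd]
  rw [← hR, ← hsum, burnside, hG]
  exact dvd_mul_left n _
end

section
/- Let p be a prime number and let x : ℕ → ℤ be a sequence such that for all integers k ≥ 0 and l ≥ 1 one has Σ_{i=0}^{l−1} p^i · (x(k+i) − x(k+i+1)) ≡ 0 (mod p^l). Then x is constant, i.e., x(j) = x(j+1) for all j ≥ 0. (This is the key step in the computation of the inverse-limit Burnside ring A_inv(ℤ/p^∞) of the Prüfer group: the only families satisfying the Burnside congruences for all finite subgroups ℤ/p^m are the constant ones, so A_inv(ℤ/p^∞) ≅ ℤ.) -/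
/-- **Computation of the inverse-limit Burnside ring of the Prüfer group (key step).**
If a sequence `x : ℕ → ℤ` satisfies, for all `k ≥ 0` and `l ≥ 1`, the congruence
`Σ_{i=0}^{l-1} pⁱ·(x(k+i) - x(k+i+1)) ≡ 0 (mod p^l)`, then `x` is constant. -/
theorem pruefer_burnside_congruences_constant
    (p : ℕ) (hp : p.Prime) (x : ℕ → ℤ)
    (h : ∀ (k l : ℕ), 1 ≤ l →
      (p : ℤ) ^ l ∣ ∑ i ∈ Finset.range l, (p : ℤ) ^ i * (x (k + i) - x (k + i + 1))) :
    ∀ j : ℕ, x j = x (j + 1) := by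
  have key : ∀ m : ℕ, ∀ j : ℕ, (p : ℤ) ^ m ∣ x j - x (j + 1) := by
    intro m
    induction m with
    | zero => intro j; simp
    | succ m ih =>
      intro j
      have hsum := h j (m + 1) (Nat.le_add_left 1 m)
      rw [Finset.sum_range_succ'] at hsum
      have htail : (p : ℤ) ^ (m + 1) ∣
          ∑ i ∈ Finset.range m, (p : ℤ) ^ (i + 1) * (x (j + (i + 1)) - x (j + (i + 1) + 1)) := by
        apply Finset.dvd_sum
        intro i _
        have := ih (j + (i + 1))
        calc (p : ℤ) ^ (m + 1) ∣ (p : ℤ) ^ (i + 1) * (p : ℤ) ^ m := by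
              rw [← pow_add]
              exact pow_dvd_pow _ (by omega)
          _ ∣ (p : ℤ) ^ (i + 1) * (x (j + (i + 1)) - x (j + (i + 1) + 1)) :=
              mul_dvd_mul_left _ this
      simpa using (dvd_sub hsum htail)
  intro j
  have h1 : (1 : ℤ) < (p : ℤ) := by exact_mod_cast hp.one_lt
  obtain ⟨m, hm⟩ := pow_unbounded_of_one_lt (|x j - x (j + 1)|) h1
  have := Int.eq_zero_of_abs_lt_dvd (key m j) hm
  omega
end

section
/- Let G be a group, H, K ≤ G subgroups, and g, g' ∈ G elements with g^{-1}Kg ⊆ H and g'^{-1}Kg' ⊆ H. Then the subgroups g^{-1}Kg and g'^{-1}Kg' of H are conjugate by an element of H (i.e., there exists h ∈ H with h^{-1}(g^{-1}Kg)h = g'^{-1}Kg') if and only if there exists n ∈ N_G(K) with n·gH = g'H in G/H. (Consequently the map (G/H)^K → ccs(H), gH ↦ (g^{-1}Kg), induces an injection from the set of W_G(K)-orbits of (G/H)^K into the set of H-conjugacy classes of subgroups of H.) -/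
/-- **Lemma on orbits and Weyl groups, part (2).**  Let `H, K ≤ G` and `g, g' ∈ G`
with `g⁻¹Kg ⊆ H` and `g'⁻¹Kg' ⊆ H`.  Then `g⁻¹Kg` and `g'⁻¹Kg'` are conjugate by
an element of `H` iff the cosets `gH` and `g'H` lie in the same `N_G(K)`-orbit of
`(G/H)^K`.  (Hence `gH ↦ (g⁻¹Kg)` induces an injection
`W_G(K)\(G/H)^K → ccs(H)`.) -/
theorem conjugate_in_H_iff_same_normalizer_orbit
    (G : Type*) [Group G] (H K : Subgroup G) (g g' : G)
    (hg : ∀ k ∈ K, g⁻¹ * k * g ∈ H) (hg' : ∀ k ∈ K, g'⁻¹ * k * g' ∈ H) :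
    (∃ h ∈ H, (K.map (MulAut.conj g⁻¹).toMonoidHom).map (MulAut.conj h⁻¹).toMonoidHom =
        K.map (MulAut.conj g'⁻¹).toMonoidHom) ↔
    ∃ n ∈ Subgroup.normalizer (K : Set G), (QuotientGroup.mk (n * g) : G ⧸ H) = QuotientGroup.mk g' := by
  constructor
  · rintro ⟨h, hh, heq⟩
    have key : ∀ x : G, (∃ k ∈ K, h⁻¹ * (g⁻¹ * k * (g⁻¹)⁻¹) * (h⁻¹)⁻¹ = x) ↔
        (∃ k ∈ K, g'⁻¹ * k * (g'⁻¹)⁻¹ = x) := by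
      intro x
      rw [SetLike.ext_iff] at heq
      have := heq x
      simpa [Subgroup.mem_map, MulAut.conj_apply] using this
    refine ⟨g' * h⁻¹ * g⁻¹, ?_, ?_⟩
    · rw [Subgroup.mem_normalizer_iff]
      intro x
      constructor
      · intro hx
        obtain ⟨k, hk, hk2⟩ := (key (h⁻¹ * (g⁻¹ * x * (g⁻¹)⁻¹) * (h⁻¹)⁻¹)).mp ⟨x, hx, rfl⟩
        have h2 : k = g' * (h⁻¹ * (g⁻¹ * x * (g⁻¹)⁻¹) * (h⁻¹)⁻¹) * g'⁻¹ := by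
          rw [← hk2]; group
        have h3 : g' * h⁻¹ * g⁻¹ * x * (g' * h⁻¹ * g⁻¹)⁻¹ = k := by rw [h2]; group
        rw [h3]; exact hk
      · intro hx
        obtain ⟨k, hk, hk2⟩ := (key (g'⁻¹ * (g' * h⁻¹ * g⁻¹ * x * (g' * h⁻¹ * g⁻¹)⁻¹) * (g'⁻¹)⁻¹)).mpr
          ⟨_, hx, rfl⟩
        have : x = k := by
          have := hk2
          apply mul_left_cancel (a := h⁻¹ * g⁻¹)
          apply mul_right_cancel (b := g * h)
          calc h⁻¹ * g⁻¹ * x * (g * h) = g'⁻¹ * (g' * h⁻¹ * g⁻¹ * x * (g' * h⁻¹ * g⁻¹)⁻¹) * (g'⁻¹)⁻¹ := by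
                group
            _ = h⁻¹ * (g⁻¹ * k * (g⁻¹)⁻¹) * (h⁻¹)⁻¹ := by rw [this]
            _ = h⁻¹ * g⁻¹ * k * (g * h) := by group
        rw [this]; exact hk
    · rw [QuotientGroup.eq]
      have : (g' * h⁻¹ * g⁻¹ * g)⁻¹ * g' = h := by group
      rw [this]; exact hh
  · rintro ⟨n, hn, hng⟩
    rw [QuotientGroup.eq] at hng
    rw [Subgroup.mem_normalizer_iff] at hn
    refine ⟨(n * g)⁻¹ * g', hng, ?_⟩
    ext x
    simp only [Subgroup.mem_map, MulAut.conj_apply, exists_exists_and_eq_and]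
    constructor
    · rintro ⟨k, hk, rfl⟩
      refine ⟨n * k * n⁻¹, (hn k).mp hk, ?_⟩
      simp only [MulEquiv.coe_toMonoidHom, MulAut.conj_apply]
      group
    · rintro ⟨k, hk, rfl⟩
      refine ⟨n⁻¹ * k * n, ?_, ?_⟩
      · have := (hn (n⁻¹ * k * n)).mpr
        apply this
        have : n * (n⁻¹ * k * n) * n⁻¹ = k := by group
        rw [this]; exact hk
      · simp only [MulEquiv.coe_toMonoidHom, MulAut.conj_apply]
        group
end

section
/- Let G be a group, K ≤ G any subgroup, and H ≤ G a finite subgroup. Then the K-fixed point set (G/H)^K of the left translation action decomposes into finitely many orbits under the action of the normalizer N_G(K) — at most as many as there are subgroups of H — and for every gH ∈ (G/H)^K the stabilizer gHg^{-1} ∩ N_G(K) is a finite subgroup of G containing K. (Hence (G/H)^K is a finite union of W_G(K)-orbits of the shape W_G(K)/L for finite subgroups L ≤ W_G(K).) -/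
open Classical in
/-- **Lemma on orbits and Weyl groups, part (4).**  Let `K ≤ G` be any subgroup
and `H ≤ G` a finite subgroup.  Then the `K`-fixed point set `(G/H)^K`
decomposes into finitely many `N_G(K)`-orbits — at most as many as there are
subgroups of `H` — and for each `K`-fixed coset `gH` the stabilizer
`gHg⁻¹ ∩ N_G(K)` is a finite subgroup of `G` containing `K`. -/
theorem coset_fixed_points_finitely_many_orbits
    (G : Type*) [Group G] (H K : Subgroup G) [Finite ↥H] :
    (∃ R : Set (G ⧸ H), R.Finite ∧ Nat.card R ≤ Nat.card (Subgroup ↥H) ∧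
      (∀ r ∈ R, ∀ k ∈ K, k • r = r) ∧
      ∀ q : G ⧸ H, (∀ k ∈ K, k • q = q) → ∃ r ∈ R, ∃ n ∈ Subgroup.normalizer (K : Set G), n • r = q) ∧
    (∀ g : G, (∀ k ∈ K, k • (QuotientGroup.mk g : G ⧸ H) = QuotientGroup.mk g) →
      Finite ↥(H.map (MulAut.conj g).toMonoidHom ⊓ Subgroup.normalizer (K : Set G)) ∧
      K ≤ H.map (MulAut.conj g).toMonoidHom ⊓ Subgroup.normalizer (K : Set G)) := by
  -- the fixed point set
  set F : Set (G ⧸ H) := {q | ∀ k ∈ K, k • q = q} with hFdef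
  -- a fixed coset `q` with representative `g = q.out` satisfies `g⁻¹ k g ∈ H` for `k ∈ K`
  have key : ∀ q ∈ F, ∀ k ∈ K, (Quotient.out q)⁻¹ * k * Quotient.out q ∈ H := by
    intro q hq k hk
    have h1 : k⁻¹ • q = q := hq k⁻¹ (inv_mem hk)
    have h2 : (QuotientGroup.mk (k⁻¹ * Quotient.out q) : G ⧸ H)
        = QuotientGroup.mk (Quotient.out q) := by
      have : (QuotientGroup.mk (Quotient.out q) : G ⧸ H) = q := Quotient.out_eq q
      calc (QuotientGroup.mk (k⁻¹ * Quotient.out q) : G ⧸ H)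
          = k⁻¹ • QuotientGroup.mk (Quotient.out q) := rfl
        _ = k⁻¹ • q := by rw [this]
        _ = q := h1
        _ = QuotientGroup.mk (Quotient.out q) := this.symm
    have := QuotientGroup.eq.mp h2
    simpa [mul_assoc] using this
  -- the conjugate subgroup `g⁻¹ K g ≤ G`
  set c : G ⧸ H → Subgroup G :=
    fun q => K.map (MulAut.conj (Quotient.out q)⁻¹).toMonoidHom with hc
  have hcH : ∀ q ∈ F, c q ≤ H := by
    intro q hq x hx
    rcases hx with ⟨k, hk, rfl⟩
    simpa [MulAut.conj, mul_assoc] using key q hq k hk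
  -- membership in `c q`
  have hmemc : ∀ (q : G ⧸ H) (x : G),
      x ∈ c q ↔ Quotient.out q * x * (Quotient.out q)⁻¹ ∈ K := by
    intro q x
    constructor
    · rintro ⟨k, hk, rfl⟩
      simpa [MulAut.conj, mul_assoc] using hk
    · intro hx
      refine ⟨Quotient.out q * x * (Quotient.out q)⁻¹, hx, ?_⟩
      simp [MulAut.conj, mul_assoc]
  -- the classifying map into subgroups of `H`
  set f : G ⧸ H → Subgroup ↥H := fun q => (c q).subgroupOf H with hf
  -- two fixed points with the same label lie in the same `N_G(K)`-orbit
  have same : ∀ q₁ ∈ F, ∀ q₂ ∈ F, f q₁ = f q₂ →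
      ∃ n ∈ Subgroup.normalizer (K : Set G), n • q₁ = q₂ := by
    intro q₁ hq₁ q₂ hq₂ hfe
    have hcc : c q₁ = c q₂ := by
      ext x
      constructor
      · intro hx
        have hxH : x ∈ H := hcH q₁ hq₁ hx
        have : (⟨x, hxH⟩ : ↥H) ∈ f q₁ := by
          simpa [hf, Subgroup.mem_subgroupOf] using hx
        rw [hfe] at this
        simpa [hf, Subgroup.mem_subgroupOf] using this
      · intro hx
        have hxH : x ∈ H := hcH q₂ hq₂ hx
        have : (⟨x, hxH⟩ : ↥H) ∈ f q₂ := by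
          simpa [hf, Subgroup.mem_subgroupOf] using hx
        rw [← hfe] at this
        simpa [hf, Subgroup.mem_subgroupOf] using this
    set g₁ := Quotient.out q₁
    set g₂ := Quotient.out q₂
    refine ⟨g₂ * g₁⁻¹, ?_, ?_⟩
    · rw [Subgroup.mem_normalizer_iff]
      intro h
      constructor
      · intro hh
        have h1 : g₁⁻¹ * h * g₁ ∈ c q₁ := by
          rw [hmemc]; simpa [mul_assoc, g₁] using hh
        rw [hcc, hmemc] at h1
        simpa [mul_assoc] using h1
      · intro hh
        have h1 : g₂⁻¹ * ((g₂ * g₁⁻¹) * h * (g₂ * g₁⁻¹)⁻¹) * g₂ ∈ c q₂ := by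
          rw [hmemc]; simpa [mul_assoc] using hh
        have h2 : g₁⁻¹ * h * g₁ ∈ c q₂ := by
          simpa [mul_assoc] using h1
        rw [← hcc, hmemc] at h2
        simpa [mul_assoc, g₁] using h2
    · have e1 : (QuotientGroup.mk g₁ : G ⧸ H) = q₁ := Quotient.out_eq q₁
      rw [← e1]
      show (QuotientGroup.mk ((g₂ * g₁⁻¹) * g₁) : G ⧸ H) = q₂
      rw [inv_mul_cancel_right]
      exact Quotient.out_eq q₂
  constructor
  · -- choose one representative per label
    have hne : Nonempty (G ⧸ H) := ⟨QuotientGroup.mk 1⟩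
    set rep : Subgroup ↥H → G ⧸ H := fun s =>
      if h : ∃ q, q ∈ F ∧ f q = s then h.choose else QuotientGroup.mk 1 with hrep
    refine ⟨rep '' (f '' F), ?_, ?_, ?_, ?_⟩
    · exact ((Set.toFinite (f '' F)).image rep)
    · calc Nat.card ↥(rep '' (f '' F)) = (rep '' (f '' F)).ncard :=
            Nat.card_coe_set_eq _
        _ ≤ (f '' F).ncard := Set.ncard_image_le (Set.toFinite _)
        _ ≤ (Set.univ : Set (Subgroup ↥H)).ncard :=
            Set.ncard_le_ncard (Set.subset_univ _) (Set.toFinite _)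
        _ = Nat.card (Subgroup ↥H) := Set.ncard_univ _
    · rintro r ⟨s, ⟨q, hq, rfl⟩, rfl⟩
      have hex : ∃ q', q' ∈ F ∧ f q' = f q := ⟨q, hq, rfl⟩
      intro k hk
      have : rep (f q) = hex.choose := by rw [hrep]; exact dif_pos hex
      rw [this]
      exact hex.choose_spec.1 k hk
    · intro q hq
      have hex : ∃ q', q' ∈ F ∧ f q' = f q := ⟨q, hq, rfl⟩
      have hrepeq : rep (f q) = hex.choose := by rw [hrep]; exact dif_pos hex
      refine ⟨rep (f q), ⟨f q, ⟨q, hq, rfl⟩, rfl⟩, ?_⟩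
      rw [hrepeq]
      exact same hex.choose hex.choose_spec.1 q hq hex.choose_spec.2
  · -- stabilizers
    intro g hg
    have hconj : ∀ k ∈ K, g⁻¹ * k * g ∈ H := by
      intro k hk
      have h2 : (QuotientGroup.mk (k⁻¹ * g) : G ⧸ H) = QuotientGroup.mk g :=
        hg k⁻¹ (inv_mem hk)
      have := QuotientGroup.eq.mp h2
      simpa [mul_assoc] using this
    constructor
    · have h1 : Finite ↥(H.map (MulAut.conj g).toMonoidHom) :=
        Set.Finite.to_subtype (Set.Finite.image _ (Set.toFinite (H : Set G)))
      exact Set.Finite.to_subtype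
        (Set.Finite.subset (Set.toFinite (H.map (MulAut.conj g).toMonoidHom : Set G))
          (fun x hx => hx.1))
    · intro k hk
      refine ⟨⟨g⁻¹ * k * g, hconj k hk, ?_⟩, Subgroup.le_normalizer hk⟩
      simp [MulAut.conj, mul_assoc]
end

section
/- Let G be a group, H, K ≤ G subgroups, S an H-set, and R ⊆ G a complete set of representatives for the double cosets K\G/H. Then there is a K-equivariant bijection G ×_H S ≅ ⨿_{g ∈ R} K ×_{K ∩ gHg^{-1}} S_g, where G ×_H S is the quotient of G × S by the relation (xh, s) ∼ (x, h·s) for h ∈ H, with K acting by left multiplication on the first coordinate; S_g denotes the set S equipped with the action of the subgroup K ∩ gHg^{-1} given by k·s := (g^{-1}kg)·s; and K ×_{K ∩ gHg^{-1}} S_g is defined analogously. (This is the double coset formula res^K ∘ ind^G_H = Σ_{KgH} ind ∘ res realized at the level of G-sets, which underlies the fact that the Burnside ring defines a Green functor.) -/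
/-- The relation generating the balanced product: `(x · f a, s) ∼ (x, a • s)`.
Quotienting `G' × S` by (the equivalence closure of) this relation yields the
induced `G'`-set `G' ×_A S` for a group `A` mapping to `G'` via `f` and acting
on `S` via `act`. -/
def IndRel {G' : Type*} [Group G'] {A : Type*} {S : Type*}
    (f : A → G') (act : A → S → S) : (G' × S) → (G' × S) → Prop :=
  fun p q => ∃ a : A, p.1 = q.1 * f a ∧ q.2 = act a p.2

theorem mem_of_mem_inf_conj {G : Type*} [Group G] {H K : Subgroup G} {g a : G}
    (ha : a ∈ K ⊓ H.map (MulAut.conj g).toMonoidHom) : g⁻¹ * a * g ∈ H := by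
  obtain ⟨h, hh, rfl⟩ := (Subgroup.mem_inf.mp ha).2
  simpa [MulAut.conj_apply, mul_assoc] using hh

namespace DCF
variable {G : Type*} [Group G] {H K : Subgroup G} {S : Type*} [MulAction ↥H S]

/-- The induced `K`-set `K ×_{K ∩ gHg⁻¹} S_g`. -/
abbrev IndK (H K : Subgroup G) (S : Type*) [MulAction ↥H S] (g : G) :=
  Quot (IndRel
    (fun a : ↥(K ⊓ H.map (MulAut.conj g).toMonoidHom) =>
      (⟨(a : G), (Subgroup.mem_inf.mp a.2).1⟩ : ↥K))
    (fun a (s : S) =>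
      (⟨g⁻¹ * (a : G) * g, mem_of_mem_inf_conj a.2⟩ : ↥H) • s))

lemma indK_mk_eq (g : G) (c c' : ↥K) (h h' : ↥H) (s : S)
    (hx : (c : G) * g * h = (c' : G) * g * h') :
    (Quot.mk _ (c, h • s) : IndK H K S g) = (Quot.mk _ (c', h' • s) : IndK H K S g) := by
  have h1 : (c : G) = c' * (g * ((h' : G) * (h : G)⁻¹) * g⁻¹) := by
    rw [show (c' : G) * (g * ((h' : G) * (h : G)⁻¹) * g⁻¹)
        = (c' : G) * g * h' * ((h : G)⁻¹ * g⁻¹) by group, ← hx]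
    group
  have haK : (c' : G)⁻¹ * c ∈ K := mul_mem (inv_mem c'.2) c.2
  have haH : (c' : G)⁻¹ * c ∈ H.map (MulAut.conj g).toMonoidHom := by
    refine ⟨(h' : G) * (h : G)⁻¹, mul_mem h'.2 (inv_mem h.2), ?_⟩
    simp only [MulEquiv.toMonoidHom_eq_coe, MonoidHom.coe_coe, MulAut.conj_apply]
    rw [h1]; group
  refine Quot.sound ⟨⟨(c' : G)⁻¹ * c, Subgroup.mem_inf.mpr ⟨haK, haH⟩⟩, ?_, ?_⟩
  · ext; simp [h1]
  · have hmem := mem_of_mem_inf_conj (H := H) (K := K) (g := g)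
      (Subgroup.mem_inf.mpr ⟨haK, haH⟩)
    have h2 : (⟨g⁻¹ * ((c' : G)⁻¹ * c) * g, hmem⟩ : ↥H) = h' * h⁻¹ := by
      ext; simp only [Subgroup.coe_mul, InvMemClass.coe_inv]; rw [h1]; group
    show h' • s = (⟨g⁻¹ * ((c' : G)⁻¹ * (c : G)) * g, hmem⟩ : ↥H) • (h • s)
    rw [h2, mul_smul, inv_smul_smul]

/-- The target of the double coset formula bijection. -/
abbrev Tgt (H K : Subgroup G) (S : Type*) [MulAction ↥H S] (R : Set G) :=
  Σ g : R, IndK H K S (g : G)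

/-- Left multiplication by `k₀ ∈ K` on `K ×_{K ∩ gHg⁻¹} S_g`. -/
def lmul (g : G) (k₀ : ↥K) : IndK H K S g → IndK H K S g :=
  Quot.lift (fun p => Quot.mk _ (k₀ * p.1, p.2)) <| by
    rintro ⟨c₁, t₁⟩ ⟨c₂, t₂⟩ ⟨a, hc, ht⟩
    exact Quot.sound ⟨a, by simp only at hc ⊢; rw [hc, mul_assoc], ht⟩

/-- The backward map `⟨g, [c, t]⟩ ↦ [c·g, t]`. -/
def bwd (H K : Subgroup G) (S : Type*) [MulAction ↥H S] (R : Set G) :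
    Tgt H K S R → Quot (IndRel (((↑) : ↥H → G)) (fun (h : ↥H) (s : S) => h • s)) := fun p =>
  Quot.lift (fun q : ↥K × S => Quot.mk (IndRel (((↑) : ↥H → G)) (fun (h : ↥H) (s : S) => h • s))
      ((q.1 : G) * ((p.1 : G)), q.2)) (by
    rintro ⟨c₁, t₁⟩ ⟨c₂, t₂⟩ ⟨a, hc, ht⟩
    refine Quot.sound ⟨⟨((p.1 : G))⁻¹ * a * p.1, mem_of_mem_inf_conj a.2⟩, ?_, ht⟩
    simp only at hc ⊢
    rw [show (c₁ : G) = (c₂ : G) * a from congrArg Subtype.val hc]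
    group) p.2

end DCF

/-- **The double coset formula on the level of `G`-sets.**  Let `H, K ≤ G`, let
`S` be an `H`-set and let `R ⊆ G` be a complete set of representatives of the
double cosets `K\G/H`.  Then there is a `K`-equivariant bijection
`G ×_H S ≅ ⨿_{g ∈ R} K ×_{K ∩ gHg⁻¹} S_g`, where `S_g` is `S` with the
`K ∩ gHg⁻¹`-action `k • s = (g⁻¹kg) • s`. -/
theorem double_coset_formula
    (G : Type*) [Group G] (H K : Subgroup G) (S : Type*) [MulAction ↥H S]
    (R : Set G)
    (hR : ∀ x : G, ∃! r, r ∈ R ∧ ∃ k ∈ K, ∃ h ∈ H, x = k * r * h) :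
    ∃ e : Quot (IndRel (((↑) : ↥H → G)) (fun h s => h • s)) ≃
        (Σ g : R, Quot (IndRel
          (fun a : ↥(K ⊓ H.map (MulAut.conj (g : G)).toMonoidHom) =>
            (⟨(a : G), (Subgroup.mem_inf.mp a.2).1⟩ : ↥K))
          (fun a s =>
            (⟨(g : G)⁻¹ * (a : G) * (g : G), mem_of_mem_inf_conj a.2⟩ : ↥H) • s))),
      ∀ (k : ↥K) (x : G) (s : S) (g : R) (c : ↥K) (t : S),
        e (Quot.mk _ (x, s)) = ⟨g, Quot.mk _ (c, t)⟩ →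
        e (Quot.mk _ ((k : G) * x, s)) = ⟨g, Quot.mk _ (k * c, t)⟩ := by
  classical
  choose r hr huniq using hR
  have hrR : ∀ x, r x ∈ R := fun x => (hr x).1
  choose k hkK h hhH hdec using fun x => (hr x).2
  -- the forward map on representatives
  let F0 : G × S → DCF.Tgt H K S R := fun p =>
    ⟨⟨r p.1, hrR p.1⟩,
      Quot.mk _ ((⟨k p.1, hkK p.1⟩ : ↥K), (⟨h p.1, hhH p.1⟩ : ↥H) • p.2)⟩
  have master : ∀ (x : G) (s : S) (g : R) (c : ↥K) (hh : ↥H),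
      x = (c : G) * g * hh → F0 (x, s) = ⟨g, Quot.mk _ (c, hh • s)⟩ := by
    rintro x s ⟨gv, hgv⟩ c hh hdecomp
    have hg : gv = r x := huniq x gv ⟨hgv, c, c.2, hh, hh.2, hdecomp⟩
    subst hg
    exact congrArg (fun q => (⟨⟨r x, hgv⟩, q⟩ : DCF.Tgt H K S R))
      (DCF.indK_mk_eq (r x) (⟨k x, hkK x⟩ : ↥K) c (⟨h x, hhH x⟩ : ↥H) hh s
        ((hdec x).symm.trans hdecomp))
  have Fok : ∀ p q : G × S, IndRel (((↑) : ↥H → G)) (fun h s => h • s) p q →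
      F0 p = F0 q := by
      rintro ⟨x₁, s₁⟩ ⟨x₂, s₂⟩ ⟨h₀, hx, hs⟩
      simp only at hx hs
      subst hx; subst hs
      rw [master (x₂ * h₀) s₁ ⟨r x₂, hrR x₂⟩ ⟨k x₂, hkK x₂⟩ (⟨h x₂, hhH x₂⟩ * h₀)
          (by conv_lhs => rw [hdec x₂]
              push_cast
              group),
        master x₂ (h₀ • s₁) ⟨r x₂, hrR x₂⟩ ⟨k x₂, hkK x₂⟩ ⟨h x₂, hhH x₂⟩ (hdec x₂),
        mul_smul]
  let F : Quot (IndRel (((↑) : ↥H → G)) (fun h s => h • s)) → DCF.Tgt H K S R :=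
    Quot.lift F0 Fok
  let B := DCF.bwd H K S R
  have left : ∀ q, B (F q) = q := by
    intro q
    obtain ⟨⟨x, s⟩, rfl⟩ := Quot.exists_rep q
    have hstep : (Quot.mk (IndRel (((↑) : ↥H → G)) (fun h s => h • s)) (x, s))
        = Quot.mk _ ((k x * r x : G), (⟨h x, hhH x⟩ : ↥H) • s) :=
      Quot.sound ⟨⟨h x, hhH x⟩, hdec x, rfl⟩
    simp only [F, B, F0, DCF.bwd]
    exact hstep.symm
  have right : ∀ t, F (B t) = t := by
    intro t
    obtain ⟨g, q⟩ := t
    obtain ⟨⟨c, t₀⟩, rfl⟩ := Quot.exists_rep q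
    show F0 ((c : G) * (g : G), t₀) = ⟨g, Quot.mk _ (c, t₀)⟩
    rw [master ((c : G) * g) t₀ g c 1 (by simp), one_smul]
  refine ⟨⟨F, B, left, right⟩, ?_⟩
  intro k₀ x s g c t hEq
  show F0 ((k₀ : G) * x, s) = ⟨g, Quot.mk _ (k₀ * c, t)⟩
  rw [master ((k₀ : G) * x) s ⟨r x, hrR x⟩ (k₀ * ⟨k x, hkK x⟩) ⟨h x, hhH x⟩
    (by conv_lhs => rw [hdec x]
        push_cast
        group)]
  have hbase : F0 (x, s) = ⟨g, Quot.mk _ (c, t)⟩ := hEq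
  calc (⟨⟨r x, hrR x⟩, Quot.mk _ (k₀ * ⟨k x, hkK x⟩, (⟨h x, hhH x⟩ : ↥H) • s)⟩ :
          DCF.Tgt H K S R)
      = ⟨(F0 (x, s)).1, DCF.lmul _ k₀ (F0 (x, s)).2⟩ := rfl
    _ = ⟨g, DCF.lmul _ k₀ (Quot.mk _ (c, t))⟩ := by rw [hbase]
    _ = ⟨g, Quot.mk _ (k₀ * c, t)⟩ := rfl
end

section
/- Let p be a prime, V a finite-dimensional vector space over ℚ, and (A_m)_{m ≥ 0} a sequence of linear automorphisms of V such that A_0 = id_V and (A_{m+1})^p = A_m for all m ≥ 0. Then A_m = id_V for all m ≥ 0. (This says precisely that every finite-dimensional rational representation of the Prüfer group ℤ/p^∞ = colim_m ℤ/p^m is trivial, since such a representation is the same as a compatible sequence of automorphisms as above; it is the key computation showing Sw^f(ℤ/p^∞; ℚ) ≅ ℤ.) -/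
open Polynomial Module

/-- Key step: if `g^(p^(k+1)) = 1` and `p^k * (p-1) > dim V`, then `g^(p^k) = 1`. -/
lemma pruefer_aux
    (V : Type*) [AddCommGroup V] [Module ℚ V] [FiniteDimensional ℚ V]
    (p : ℕ) (hp : p.Prime) (g : V ≃ₗ[ℚ] V) (k : ℕ)
    (h1 : g ^ p ^ (k + 1) = 1)
    (hk : Module.finrank ℚ V < (p ^ (k + 1)).totient) :
    g ^ p ^ k = 1 := by
  haveI : Fact p.Prime := ⟨hp⟩
  set φ := LinearEquiv.automorphismGroup.toLinearMapMonoidHom (R := ℚ) (M := V) with hφ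
  have hinj : Function.Injective φ := fun a b h => by
    ext x; exact DFunLike.congr_fun h x
  set f : Module.End ℚ V := φ g with hf
  have hf1 : f ^ p ^ (k + 1) = 1 := by
    rw [hf, ← map_pow, h1, map_one]
  have haev : aeval f (X ^ p ^ (k + 1) - 1 : ℚ[X]) = 0 := by
    simp [hf1]
  have hdvd : minpoly ℚ f ∣ (X ^ p ^ (k + 1) - 1 : ℚ[X]) := minpoly.dvd _ _ haev
  set Φ : ℚ[X] := cyclotomic (p ^ (k + 1)) ℚ with hΦ
  have hfac : Φ * (X ^ p ^ k - 1) = X ^ p ^ (k + 1) - 1 :=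
    cyclotomic_prime_pow_mul_X_pow_sub_one ℚ p k
  have hirr : Irreducible Φ := cyclotomic.irreducible_rat (pow_pos hp.pos _)
  by_cases hc : Φ ∣ minpoly ℚ f
  · -- degree contradiction
    exfalso
    have hint : IsIntegral ℚ f := LinearMap.isIntegral f
    have hne : f.charpoly ≠ 0 := f.charpoly_monic.ne_zero
    have h2 : (minpoly ℚ f).natDegree ≤ Module.finrank ℚ V := by
      calc (minpoly ℚ f).natDegree ≤ f.charpoly.natDegree :=
            natDegree_le_of_dvd (LinearMap.minpoly_dvd_charpoly f) hne
        _ = Module.finrank ℚ V := f.charpoly_natDegree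
    have h3 : Φ.natDegree ≤ (minpoly ℚ f).natDegree :=
      natDegree_le_of_dvd hc (minpoly.ne_zero hint)
    rw [hΦ, natDegree_cyclotomic] at h3
    omega
  · have hcop : IsCoprime Φ (minpoly ℚ f) := (hirr.coprime_iff_not_dvd).mpr hc
    have hdvd2 : minpoly ℚ f ∣ (X ^ p ^ k - 1 : ℚ[X]) := by
      have := hdvd
      rw [← hfac] at this
      exact (hcop.symm).dvd_of_dvd_mul_left this
    obtain ⟨c, hc2⟩ := hdvd2
    have : aeval f (X ^ p ^ k - 1 : ℚ[X]) = 0 := by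
      rw [hc2, map_mul, minpoly.aeval, zero_mul]
    have hf2 : f ^ p ^ k = 1 := by
      have h' : f ^ p ^ k - 1 = 0 := by simpa using this
      rwa [sub_eq_zero] at h'
    apply hinj
    rw [map_pow, map_one]
    exact hf2

/-- **Every finite-dimensional rational representation of the Prüfer group
`ℤ/p^∞` is trivial.**  If `(A_m)` is a sequence of linear automorphisms of a
finite-dimensional `ℚ`-vector space with `A_0 = id` and `(A_{m+1})^p = A_m`,
then every `A_m` is the identity. -/
theorem pruefer_rational_representation_trivial
    (V : Type*) [AddCommGroup V] [Module ℚ V] [FiniteDimensional ℚ V]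
    (p : ℕ) (hp : p.Prime) (A : ℕ → (V ≃ₗ[ℚ] V))
    (h0 : A 0 = LinearEquiv.refl ℚ V)
    (hA : ∀ m : ℕ, (A (m + 1)) ^ p = A m) :
    ∀ m : ℕ, A m = LinearEquiv.refl ℚ V := by
  have hone : (LinearEquiv.refl ℚ V) = (1 : V ≃ₗ[ℚ] V) := rfl
  have hpow : ∀ m k : ℕ, (A (m + k)) ^ p ^ k = A m := by
    intro m k
    induction k with
    | zero => simp
    | succ k ih =>
      have : A (m + (k + 1)) ^ p ^ (k + 1) = (A (m + k + 1) ^ p) ^ p ^ k := by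
        rw [← pow_mul, show m + (k + 1) = m + k + 1 from rfl, mul_comm, pow_succ, mul_comm]
      rw [this, hA (m + k), ih]
  intro m
  induction m with
  | zero => exact h0
  | succ m ih =>
    set k := Module.finrank ℚ V with hk
    have htot : Module.finrank ℚ V < (p ^ (k + 1)).totient := by
      rw [Nat.totient_prime_pow hp (Nat.succ_pos k)]
      have h1 : k < 2 ^ k := Nat.lt_two_pow_self (n := k)
      have h2 : 2 ^ k ≤ p ^ k := Nat.pow_le_pow_left hp.two_le k
      have h3 : 1 ≤ p - 1 := by have := hp.two_le; omega
      calc Module.finrank ℚ V = k := rfl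
        _ < 2 ^ k := h1
        _ ≤ p ^ k := h2
        _ = p ^ k * 1 := (mul_one _).symm
        _ ≤ p ^ (k + 1 - 1) * (p - 1) := by
            apply Nat.mul_le_mul _ h3
            simp
    have hg1 : (A (m + 1 + k)) ^ p ^ (k + 1) = 1 := by
      have : (A (m + 1 + k)) ^ p ^ (k + 1) = ((A (m + 1 + k)) ^ p ^ k) ^ p := by
        rw [← pow_mul, pow_succ]
      rw [this, hpow (m + 1) k, hA m, ← hone, ih]
    have := pruefer_aux V p hp (A (m + 1 + k)) k hg1 htot
    rw [hpow (m + 1) k] at this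
    rw [hone]; exact this
end

section
/- Let p be a prime and let G be a group with a normal subgroup A ⊴ G such that A is a free abelian group of finite rank (A ≅ ℤⁿ) and the quotient G/A is cyclic of order p. Then: (i) every element of G of finite order has order 1 or p; (ii) for every element g ∈ G of order p, the normalizer N_G(⟨g⟩) of the cyclic subgroup ⟨g⟩ equals the centralizer C_G(g) of g, and the map C_A(g) × ℤ/p → C_G(g), (a, k) ↦ a·g^k, is an isomorphism of groups, where C_A(g) = {a ∈ A : gag^{-1} = a}; in particular N_G(⟨g⟩) = C_G(⟨g⟩) = A^{⟨g⟩} × ⟨g⟩. -/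
/-- **Torsion and normalizers in extensions `1 → ℤⁿ → G → ℤ/p → 1`.**
Let `A ⊴ G` be normal, free abelian of finite rank, with `G/A` cyclic of order
`p` (a prime).  Then (i) every element of `G` of finite order has order `1` or
`p`; and (ii) for every `g ∈ G` of order `p` the normalizer of `⟨g⟩` equals the
centralizer of `g`, and `C_A(g) × ℤ/p → C_G(g), (a,k) ↦ a·gᵏ` is a group
isomorphism, i.e. `N_G(⟨g⟩) = C_G(g) = A^{⟨g⟩} × ⟨g⟩`. -/
theorem extension_by_zmod_p_normalizer_eq_centralizer
    (p : ℕ) (hp : p.Prime) (G : Type*) [Group G] (A : Subgroup G) [A.Normal]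
    (hfree : ∃ n : ℕ, Nonempty (↥A ≃* Multiplicative (Fin n → ℤ)))
    (hcyc : IsCyclic (G ⧸ A)) (hcard : Nat.card (G ⧸ A) = p) :
    (∀ g : G, IsOfFinOrder g → orderOf g = 1 ∨ orderOf g = p) ∧
    (∀ g : G, orderOf g = p →
      Subgroup.normalizer (Subgroup.zpowers g : Set G) = Subgroup.centralizer {g} ∧
      ∃ e : (↥(A ⊓ Subgroup.centralizer {g}) × Multiplicative (ZMod p)) ≃*
          ↥(Subgroup.centralizer {g}),
        ∀ (a : ↥(A ⊓ Subgroup.centralizer {g})) (k : Multiplicative (ZMod p)),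
          (e (a, k) : G) = (a : G) * g ^ (Multiplicative.toAdd k).val) := by
  haveI : NeZero p := ⟨hp.ne_zero⟩
  haveI : Finite (G ⧸ A) := Nat.finite_of_card_ne_zero (by rw [hcard]; exact hp.ne_zero)
  -- A is torsion-free
  have tf : ∀ a : G, a ∈ A → IsOfFinOrder a → a = 1 := by
    obtain ⟨n, ⟨e⟩⟩ := hfree
    intro a ha hfin
    obtain ⟨m, hm, hm1⟩ := isOfFinOrder_iff_pow_eq_one.mp hfin
    have h1 : (⟨a, ha⟩ : ↥A) ^ m = 1 := by
      ext; simpa using hm1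
    have h2 : (e ⟨a, ha⟩) ^ m = 1 := by rw [← map_pow, h1, map_one]
    have h3 : e ⟨a, ha⟩ = 1 := by
      have h4 : m • Multiplicative.toAdd (e ⟨a, ha⟩) = 0 := h2
      have h5 : Multiplicative.toAdd (e ⟨a, ha⟩) = 0 := by
        funext i
        have := congrFun h4 i
        simpa [hm.ne'] using this
      simpa using congrArg Multiplicative.ofAdd h5
    have : (⟨a, ha⟩ : ↥A) = 1 := e.injective (by simpa using h3)
    simpa using congrArg (Subtype.val) this
  -- quotient map facts
  have hmk : ∀ x : G, (QuotientGroup.mk x : G ⧸ A) = 1 ↔ x ∈ A := fun x =>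
    QuotientGroup.eq_one_iff x
  have part1 : ∀ g : G, IsOfFinOrder g → orderOf g = 1 ∨ orderOf g = p := by
    intro g hg
    by_cases hgA : g ∈ A
    · left; rw [orderOf_eq_one_iff]; exact tf g hgA hg
    · right
      have hq : (QuotientGroup.mk g : G ⧸ A) ^ p = 1 := by
        rw [← hcard]; exact pow_card_eq_one'
      have hgpA : g ^ p ∈ A := (hmk (g ^ p)).mp (by simpa using hq)
      have hgp1 : g ^ p = 1 := tf _ hgpA (hg.pow)
      have hdvd : orderOf g ∣ p := orderOf_dvd_of_pow_eq_one hgp1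
      rcases (Nat.Prime.eq_one_or_self_of_dvd hp _ hdvd) with h | h
      · exfalso
        exact hgA (by rw [orderOf_eq_one_iff.mp h]; exact A.one_mem)
      · exact h
  refine ⟨part1, ?_⟩
  intro g hg
  have hgfin : IsOfFinOrder g := by
    rw [← orderOf_pos_iff, hg]; exact hp.pos
  have hgA : g ∉ A := by
    intro h
    have h1 := tf g h hgfin
    rw [h1, orderOf_one] at hg
    exact hp.one_lt.ne' hg.symm
  have hgp : g ^ p = 1 := by rw [← hg]; exact pow_orderOf_eq_one g
  -- torsion-free consequence: powers of g in A are trivial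
  have hpowA : ∀ m : ℤ, g ^ m ∈ A → g ^ m = 1 := by
    intro m hm
    exact tf _ hm (hgfin.zpow)
  -- commutativity of the quotient
  have hqcomm : ∀ u v : G ⧸ A, u * v = v * u := by
    obtain ⟨s, hs⟩ := hcyc.exists_generator
    intro u v
    obtain ⟨a, rfl⟩ := hs u
    obtain ⟨b, rfl⟩ := hs v
    exact ((Commute.refl s).zpow_zpow a b).eq
  -- g is in its own centralizer
  have hgC : g ∈ Subgroup.centralizer {g} :=
    Subgroup.mem_centralizer_iff.mpr (fun h hh => by
      rw [Set.mem_singleton_iff] at hh; subst hh; rfl)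
  constructor
  · -- normalizer = centralizer
    ext x
    rw [Subgroup.mem_normalizer_iff, Subgroup.mem_centralizer_iff]
    constructor
    · intro h
      have hx : x * g * x⁻¹ ∈ Subgroup.zpowers g := (h g).mp (Subgroup.mem_zpowers g)
      obtain ⟨k, hk⟩ := hx
      simp only at hk
      -- x g x⁻¹ g⁻¹ ∈ A since G/A is abelian
      have hcomm : x * g * x⁻¹ * g⁻¹ ∈ A := by
        rw [← hmk]
        have h2 : (QuotientGroup.mk (x * g * x⁻¹ * g⁻¹) : G ⧸ A)
            = (QuotientGroup.mk x) * (QuotientGroup.mk g) * (QuotientGroup.mk x)⁻¹ *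
              (QuotientGroup.mk g)⁻¹ := by
          simp
        rw [h2, hqcomm (QuotientGroup.mk x : G ⧸ A) (QuotientGroup.mk g)]
        group
      have hk1 : g ^ (k - 1) ∈ A := by
        have h3 : g ^ (k - 1) = x * g * x⁻¹ * g⁻¹ := by
          rw [← hk, zpow_sub, zpow_one]
        rw [h3]; exact hcomm
      have h4 : g ^ (k - 1) = 1 := hpowA _ hk1
      have hgk : g ^ k = g := by
        calc g ^ k = g ^ (k - 1) * g := by rw [zpow_sub, zpow_one]; group
          _ = g := by rw [h4, one_mul]
      intro h' hh'
      rw [Set.mem_singleton_iff] at hh'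
      rw [hh']
      have h5 : x * g * x⁻¹ = g := by rw [← hk, hgk]
      calc g * x = (x * g * x⁻¹) * x := by rw [h5]
        _ = x * g := by group
    · intro h h'
      have hcx : Commute g x := h g rfl
      have key : ∀ k : ℤ, x * g ^ k * x⁻¹ = g ^ k := by
        intro k
        have h6 : g ^ k * x = x * g ^ k := (hcx.zpow_left k).eq
        rw [← h6]; group
      constructor
      · rintro ⟨k, rfl⟩
        exact ⟨k, (key k).symm⟩
      · rintro ⟨k, hk⟩
        simp only at hk
        have h7 : h' = g ^ k := by
          have h8 : x * h' * x⁻¹ = x * g ^ k * x⁻¹ := by rw [← hk, key]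
          exact mul_left_cancel (mul_right_cancel h8)
        rw [h7]
        exact Subgroup.zpow_mem_zpowers g k
  · -- the isomorphism
    set C := Subgroup.centralizer ({g} : Set G) with hC
    have hpow : ∀ j k : ZMod p, g ^ (j + k).val = g ^ j.val * g ^ k.val := by
      intro j k
      have h9 := pow_mod_orderOf g (j.val + k.val)
      rw [hg] at h9
      rw [ZMod.val_add, h9, pow_add]
    have hcomm' : ∀ b : G, b ∈ C → ∀ m : ℕ, Commute (g ^ m) b := by
      intro b hb m
      exact Commute.pow_left (Subgroup.mem_centralizer_iff.mp hb g rfl) m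
    -- the monoid hom
    let f : ↥(A ⊓ C) × Multiplicative (ZMod p) → ↥C := fun x =>
      ⟨(x.1 : G) * g ^ (Multiplicative.toAdd x.2).val,
        C.mul_mem (Subgroup.mem_inf.mp x.1.2).2 (C.pow_mem hgC _)⟩
    have hmul : ∀ x y : ↥(A ⊓ C) × Multiplicative (ZMod p),
        f (x * y) = f x * f y := by
      rintro ⟨a, j⟩ ⟨b, k⟩
      ext
      show ((a : G) * b) * g ^ ((Multiplicative.toAdd j + Multiplicative.toAdd k).val)
        = ((a : G) * g ^ (Multiplicative.toAdd j).val) *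
          ((b : G) * g ^ (Multiplicative.toAdd k).val)
      rw [hpow, ((hcomm' (b : G) (Subgroup.mem_inf.mp b.2).2
        (Multiplicative.toAdd j).val).mul_mul_mul_comm (a : G)
        (g ^ (Multiplicative.toAdd k).val))]
    set φ : ↥(A ⊓ C) × Multiplicative (ZMod p) →* ↥C :=
      MonoidHom.mk' f hmul with hφ
    have hinj : Function.Injective φ := by
      rw [injective_iff_map_eq_one]
      rintro ⟨a, k⟩ hak
      have h10 : (a : G) * g ^ (Multiplicative.toAdd k).val = 1 :=
        congrArg Subtype.val hak
      have h11 : g ^ (Multiplicative.toAdd k).val ∈ A := by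
        have : g ^ (Multiplicative.toAdd k).val = (a : G)⁻¹ :=
          eq_inv_of_mul_eq_one_right h10
        rw [this]
        exact A.inv_mem (Subgroup.mem_inf.mp a.2).1
      have h12 : g ^ (Multiplicative.toAdd k).val = 1 :=
        tf _ h11 hgfin.pow
      have h13 : p ∣ (Multiplicative.toAdd k).val := by
        have := orderOf_dvd_of_pow_eq_one h12; rwa [hg] at this
      have h14 : (Multiplicative.toAdd k).val = 0 :=
        Nat.eq_zero_of_dvd_of_lt h13 (ZMod.val_lt _)
      have hk0 : k = 1 := by
        have : Multiplicative.toAdd k = 0 := (ZMod.val_eq_zero _).mp h14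
        simpa using congrArg Multiplicative.ofAdd this
      have ha1 : a = 1 := by
        ext
        rw [h14, pow_zero, mul_one] at h10
        simpa using h10
      rw [hk0, ha1]
      rfl
    have hsurj : Function.Surjective φ := by
      rintro ⟨x, hx⟩
      -- the quotient is generated by the image of g
      have hne : (QuotientGroup.mk g : G ⧸ A) ≠ 1 := fun h => hgA ((hmk g).mp h)
      have hod : orderOf (QuotientGroup.mk g : G ⧸ A) = p := by
        have hdvd : orderOf (QuotientGroup.mk g : G ⧸ A) ∣ p := by
          rw [← hcard]; exact orderOf_dvd_natCard _
        rcases hp.eq_one_or_self_of_dvd _ hdvd with h | h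
        · exact absurd (orderOf_eq_one_iff.mp h) hne
        · exact h
      have htop : Subgroup.zpowers (QuotientGroup.mk g : G ⧸ A) = ⊤ :=
        Subgroup.eq_top_of_card_eq _ (by rw [Nat.card_zpowers, hod, hcard])
      obtain ⟨m, hm⟩ : ∃ m : ℤ, (QuotientGroup.mk g : G ⧸ A) ^ m = QuotientGroup.mk x := by
        have : (QuotientGroup.mk x : G ⧸ A) ∈ Subgroup.zpowers (QuotientGroup.mk g) := by
          rw [htop]; exact Subgroup.mem_top _
        exact this
      set k : ZMod p := (m : ZMod p) with hkdef
      have hdvd2 : (p : ℤ) ∣ m - (k.val : ℤ) := by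
        rw [← ZMod.intCast_zmod_eq_zero_iff_dvd]
        push_cast
        rw [ZMod.natCast_val, ZMod.cast_id, sub_self]
      have hgm : g ^ m = g ^ (k.val : ℤ) := by
        have h15 : g ^ (m - (k.val : ℤ)) = 1 := by
          rw [← orderOf_dvd_iff_zpow_eq_one, hg]; exact hdvd2
        rw [zpow_sub] at h15
        rw [mul_inv_eq_one] at h15
        exact h15
      have haA : x * (g ^ k.val)⁻¹ ∈ A := by
        rw [← hmk]
        have h16 : (QuotientGroup.mk (x * (g ^ k.val)⁻¹) : G ⧸ A)
            = QuotientGroup.mk x * (QuotientGroup.mk (g ^ k.val) : G ⧸ A)⁻¹ := by simp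
        rw [h16, ← hm]
        have h17 : (QuotientGroup.mk (g ^ k.val) : G ⧸ A)
            = (QuotientGroup.mk g : G ⧸ A) ^ m := by
          rw [← QuotientGroup.mk_zpow, ← zpow_natCast, ← hgm]
        rw [h17, mul_inv_cancel]
      have haC : x * (g ^ k.val)⁻¹ ∈ C := by
        exact C.mul_mem hx (C.inv_mem (C.pow_mem hgC _))
      refine ⟨⟨⟨x * (g ^ k.val)⁻¹, Subgroup.mem_inf.mpr ⟨haA, haC⟩⟩,
        Multiplicative.ofAdd k⟩, ?_⟩
      ext
      show x * (g ^ k.val)⁻¹ * g ^ (Multiplicative.toAdd (Multiplicative.ofAdd k)).val = x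
      simp
    exact ⟨MulEquiv.ofBijective φ ⟨hinj, hsurj⟩, fun a k => rfl⟩
end

section
/- Let p be a prime and let G be a group with a normal subgroup A ⊴ G such that A is free abelian of finite rank and G/A is cyclic of order p; fix an element g ∈ G of order p. Define homomorphisms of the abelian group A by N(a) = ∏_{i=0}^{p-1} g^i a g^{-i} and T(a) = (gag^{-1})·a^{-1}. Then: T(A) ⊆ ker(N); for every u ∈ ker(N) the element ug has order p; and the assignment u ↦ ⟨ug⟩ induces a well-defined bijection from the quotient group ker(N)/T(A) onto the set of conjugacy classes of subgroups of order p of G (equivalently, of nontrivial finite subgroups of G). (This realizes the bijection μ : H¹(ℤ/p; A) ≅ the set of conjugacy classes of nontrivial finite subgroups of G, where A carries the ℤ/p-module structure given by conjugation.) -/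
/-- The norm map `N(a) = ∏_{i=0}^{p-1} gⁱ a g⁻ⁱ` on a normal subgroup `A ⊴ G`. -/
def normMap {G : Type*} [Group G] (A : Subgroup G) [A.Normal] (g : G) (p : ℕ)
    (a : ↥A) : ↥A :=
  ⟨((List.range p).map fun i => g ^ i * (a : G) * (g ^ i)⁻¹).prod, by
    refine Subgroup.list_prod_mem _ ?_
    intro y hy
    simp only [List.mem_map, List.mem_range] at hy
    obtain ⟨i, -, rfl⟩ := hy
    exact Subgroup.Normal.conj_mem ‹A.Normal› _ a.2 _⟩

/-- The map `T(a) = (g a g⁻¹) · a⁻¹` on a normal subgroup `A ⊴ G`. -/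
def tMap {G : Type*} [Group G] (A : Subgroup G) [A.Normal] (g : G) (a : ↥A) : ↥A :=
  ⟨g * (a : G) * g⁻¹ * (a : G)⁻¹,
    A.mul_mem (Subgroup.Normal.conj_mem ‹A.Normal› _ a.2 g) (A.inv_mem a.2)⟩
/-- Conjugation by `g` as a monoid hom of a normal subgroup. -/
def sigmaMap {G : Type*} [Group G] (A : Subgroup G) [A.Normal] (g : G) : ↥A →* ↥A where
  toFun a := ⟨g * (a : G) * g⁻¹, Subgroup.Normal.conj_mem ‹A.Normal› _ a.2 g⟩
  map_one' := by ext; simp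
  map_mul' a b := by ext; push_cast; group

lemma sigmaMap_coe {G : Type*} [Group G] (A : Subgroup G) [A.Normal] (g : G) (a : ↥A) :
    ((sigmaMap A g a : ↥A) : G) = g * (a : G) * g⁻¹ := rfl

lemma sigmaMap_iterate {G : Type*} [Group G] (A : Subgroup G) [A.Normal] (g : G)
    (j : ℕ) (a : ↥A) :
    (((sigmaMap A g)^[j] a : ↥A) : G) = g ^ j * (a : G) * (g ^ j)⁻¹ := by
  induction j with
  | zero => simp
  | succ j ih =>
    rw [Function.iterate_succ_apply', sigmaMap_coe, ih]
    group

lemma key_pow {G : Type*} [Group G] (g u : G) (n : ℕ) :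
    (u * g) ^ n = ((List.range n).map fun i => g ^ i * u * (g ^ i)⁻¹).prod * g ^ n := by
  induction n with
  | zero => simp
  | succ n ih =>
    rw [pow_succ, ih, List.range_succ, List.map_append, List.prod_append]
    simp only [List.map_cons, List.map_nil, List.prod_cons, List.prod_nil]
    group

/-- **Conjugacy classes of finite subgroups in extensions `1 → ℤⁿ → G → ℤ/p → 1`
via `H¹(ℤ/p; A)`.**  Let `A ⊴ G` be normal, free abelian of finite rank, with
`G/A` cyclic of prime order `p`, and let `g ∈ G` have order `p`.  With
`N(a) = ∏_{i=0}^{p-1} gⁱag⁻ⁱ` and `T(a) = (gag⁻¹)a⁻¹` one has: `T(A) ⊆ ker N`;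
for `u ∈ ker N` the element `ug` has order `p`; and `u ↦ ⟨ug⟩` induces a
well-defined bijection from `ker(N)/T(A) = H¹(ℤ/p; A)` onto the set of
conjugacy classes of subgroups of order `p` of `G`. -/
theorem h1_classifies_finite_subgroups
    (p : ℕ) (hp : p.Prime) (G : Type*) [Group G] (A : Subgroup G) [A.Normal]
    (hfree : ∃ n : ℕ, Nonempty (↥A ≃* Multiplicative (Fin n → ℤ)))
    (hcyc : IsCyclic (G ⧸ A)) (hcard : Nat.card (G ⧸ A) = p)
    (g : G) (hg : orderOf g = p) :
    (∀ a : ↥A, normMap A g p (tMap A g a) = 1) ∧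
    (∀ u : ↥A, normMap A g p u = 1 → orderOf ((u : G) * g) = p) ∧
    (∀ u v : ↥A, normMap A g p u = 1 → normMap A g p v = 1 →
      ((∃ a : ↥A, v = u * tMap A g a) ↔
        ∃ x : G, (Subgroup.zpowers ((u : G) * g)).map (MulAut.conj x).toMonoidHom =
          Subgroup.zpowers ((v : G) * g))) ∧
    (∀ P : Subgroup G, Nat.card P = p →
      ∃ u : ↥A, normMap A g p u = 1 ∧
        ∃ x : G, (Subgroup.zpowers ((u : G) * g)).map (MulAut.conj x).toMonoidHom = P) := by
  haveI : Fact p.Prime := ⟨hp⟩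
  -- A is commutative
  have hAc : ∀ x y : ↥A, x * y = y * x := by
    obtain ⟨n, ⟨e⟩⟩ := hfree
    intro x y
    apply e.injective
    rw [map_mul, map_mul, mul_comm]
  have hAlc : ∀ x y z : ↥A, x * (y * z) = y * (x * z) := by
    intro x y z; rw [← mul_assoc, hAc x y, mul_assoc]
  -- A is torsion-free
  have tf : ∀ a : ↥A, ∀ m : ℕ, m ≠ 0 → a ^ m = 1 → a = 1 := by
    obtain ⟨n, ⟨e⟩⟩ := hfree
    intro a m hm h
    have h2 : (e a) ^ m = 1 := by rw [← map_pow, h, map_one]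
    have h3 : (m : ℤ) • Multiplicative.toAdd (e a) = 0 := by
      have := congrArg Multiplicative.toAdd h2
      simpa [toAdd_pow] using this
    have h4 : Multiplicative.toAdd (e a) = 0 := by
      funext i
      have := congrFun h3 i
      simp only [Pi.smul_apply, Pi.zero_apply, smul_eq_mul] at this
      exact (mul_eq_zero.mp this).resolve_left (by exact_mod_cast hm)
    apply e.injective
    rw [map_one]
    exact Multiplicative.toAdd.injective (by simpa using h4)
  have hgp : g ^ p = 1 := by rw [← hg]; exact pow_orderOf_eq_one g
  have gnA : g ∉ A := by
    intro hgA
    have h1 : (⟨g, hgA⟩ : ↥A) ^ p = 1 := by ext; push_cast; exact hgp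
    have h2 := tf _ p hp.ne_zero h1
    have h3 : g = 1 := congrArg Subtype.val h2
    rw [h3, orderOf_one] at hg
    exact hp.one_lt.ne' hg.symm
  -- tMap in terms of (sigmaMap A g)
  have tMap_eq : ∀ a : ↥A, tMap A g a = (sigmaMap A g) a * a⁻¹ := fun a => rfl
  have hsfix : ∀ a : ↥A, (sigmaMap A g)^[p] a = a := by
    intro a; apply Subtype.ext
    show (((sigmaMap A g)^[p] a : ↥A) : G) = (a : G)
    rw [sigmaMap_iterate, hgp]; group
  have hseq : ∀ a : ↥A, (sigmaMap A g) a = a * tMap A g a := by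
    intro a; rw [tMap_eq, hAc a, inv_mul_cancel_right]
  have tMap_mul : ∀ a b : ↥A, tMap A g (a * b) = tMap A g a * tMap A g b := by
    intro a b
    simp only [tMap_eq, map_mul, mul_inv_rev]
    simp only [mul_assoc, hAc, hAlc]
  -- normMap via (sigmaMap A g)
  have normMap_eq : ∀ a : ↥A,
      normMap A g p a = ((List.range p).map fun i => (sigmaMap A g)^[i] a).prod := by
    intro a
    apply Subtype.ext
    show ((List.range p).map fun i => g ^ i * (a : G) * (g ^ i)⁻¹).prod
        = ((((List.range p).map fun i => (sigmaMap A g)^[i] a).prod : ↥A) : G)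
    rw [SubmonoidClass.coe_list_prod, List.map_map]
    congr 1
    apply List.map_congr_left
    intro i _
    exact (sigmaMap_iterate A g i a).symm
  -- Part 2 (orders)
  have horder : ∀ u : ↥A, normMap A g p u = 1 → orderOf ((u : G) * g) = p := by
    intro u hu
    have hpow : ((u : G) * g) ^ p = 1 := by
      rw [key_pow g (u : G) p]
      have h1 : ((List.range p).map fun i => g ^ i * (u : G) * (g ^ i)⁻¹).prod
          = ((normMap A g p u : ↥A) : G) := rfl
      rw [h1, hu, hgp]
      simp
    refine orderOf_eq_prime hpow ?_
    intro h1
    apply gnA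
    rw [eq_inv_of_mul_eq_one_right h1]
    exact A.inv_mem u.2
  -- Part 1
  have part1 : ∀ a : ↥A, normMap A g p (tMap A g a) = 1 := by
    intro a
    rw [normMap_eq, tMap_eq]
    have htel : ∀ m : ℕ,
        ((List.range m).map fun i => (sigmaMap A g)^[i] ((sigmaMap A g) a * a⁻¹)).prod = (sigmaMap A g)^[m] a * a⁻¹ := by
      intro m
      induction m with
      | zero => simp
      | succ m ih =>
        rw [List.range_succ, List.map_append, List.prod_append, ih]
        simp only [List.map_cons, List.map_nil, List.prod_cons, List.prod_nil, mul_one]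
        rw [iterate_map_mul, iterate_map_inv,
          ← Function.iterate_succ_apply]
        simp only [mul_assoc, hAlc, hAc, inv_mul_cancel_left, mul_inv_cancel_left, inv_mul_cancel, mul_inv_cancel, one_mul, mul_one]
    rw [htel, hsfix, mul_inv_cancel]
  -- claimN
  have claimN : ∀ (j : ℕ) (w : ↥A), ∃ b : ↥A, (sigmaMap A g)^[j] w = w * tMap A g b := by
    intro j
    induction j with
    | zero =>
      intro w
      refine ⟨1, ?_⟩
      rw [tMap_eq, map_one, inv_one, mul_one, mul_one, Function.iterate_zero_apply]
    | succ j ih =>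
      intro w
      obtain ⟨b, hb⟩ := ih w
      refine ⟨w * b * tMap A g b, ?_⟩
      rw [Function.iterate_succ_apply', hb, map_mul, hseq w, hseq (tMap A g b),
        tMap_mul, tMap_mul]
      simp only [mul_assoc]
  -- quotient facts
  have hpig1 : (QuotientGroup.mk' A) g ≠ 1 := by
    simpa [QuotientGroup.mk'_apply, QuotientGroup.eq_one_iff] using gnA
  have hpigord : orderOf ((QuotientGroup.mk' A) g) = p :=
    orderOf_eq_prime (by rw [← map_pow, hgp, map_one]) hpig1
  have hpia : ∀ a : ↥A, (QuotientGroup.mk' A) (a : G) = 1 := by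
    intro a
    rw [QuotientGroup.mk'_apply, QuotientGroup.eq_one_iff]
    exact a.2
  have hQcomm : ∀ x y : G ⧸ A, x * y = y * x := by
    letI := IsCyclic.commGroup (α := G ⧸ A)
    exact fun x y => mul_comm x y
  have conj_eq : ∀ q r : G ⧸ A, q * r * q⁻¹ = r := by
    intro q r; rw [hQcomm q r, mul_assoc, mul_inv_cancel, mul_one]
  refine ⟨part1, horder, ?_, ?_⟩
  · -- Part 3
    intro u v hu hv
    constructor
    · rintro ⟨a, rfl⟩
      refine ⟨(a : G)⁻¹, ?_⟩
      rw [MonoidHom.map_zpowers]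
      congr 1
      show (a : G)⁻¹ * ((u : G) * g) * ((a : G)⁻¹)⁻¹ = ((u * tMap A g a : ↥A) : G) * g
      have h1 : (a⁻¹ * (u * (sigmaMap A g) a) : ↥A) = u * tMap A g a := by
        rw [tMap_eq, hAlc, hAc a⁻¹]
      have h2 := congrArg (Subtype.val) h1
      push_cast [sigmaMap_coe] at h2
      push_cast
      rw [← h2]
      group
    · rintro ⟨x, hx⟩
      have hmem : (MulAut.conj x) ((u : G) * g) ∈ Subgroup.zpowers ((v : G) * g) := by
        rw [← hx]
        exact Subgroup.mem_map_of_mem _ (Subgroup.mem_zpowers _)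
      obtain ⟨k, hk⟩ := Subgroup.mem_zpowers_iff.mp hmem
      -- project to quotient
      have hpik : ((QuotientGroup.mk' A) g) ^ k = (QuotientGroup.mk' A) g := by
        have h1 : (QuotientGroup.mk' A) (((v : G) * g) ^ k) = ((QuotientGroup.mk' A) g) ^ k := by
          rw [map_zpow, map_mul, hpia, one_mul]
        have h2 : (QuotientGroup.mk' A) ((MulAut.conj x) ((u : G) * g)) = (QuotientGroup.mk' A) g := by
          rw [MulAut.conj_apply, map_mul, map_mul, map_mul, map_inv, hpia, one_mul, conj_eq]
        rw [← hk, h1] at h2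
        exact h2
      have hdvd : (p : ℤ) ∣ k - 1 := by
        rw [← hpigord]
        rw [orderOf_dvd_iff_zpow_eq_one, zpow_sub, hpik, zpow_one, mul_inv_cancel]
      have hvk : ((v : G) * g) ^ k = (v : G) * g := by
        have h1 : ((v : G) * g) ^ (k - 1) = 1 := by
          rw [← orderOf_dvd_iff_zpow_eq_one, horder v hv]
          exact hdvd
        calc ((v : G) * g) ^ k = ((v : G) * g) ^ (k - 1) * ((v : G) * g) ^ (1 : ℤ) := by
              rw [← zpow_add]; ring_nf
          _ = (v : G) * g := by rw [h1, one_mul, zpow_one]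
      have hxeq : x * ((u : G) * g) * x⁻¹ = (v : G) * g := by
        rw [← hvk, hk]; rfl
      -- decompose x
      obtain ⟨i, hi⟩ : ∃ i : ℤ, ((QuotientGroup.mk' A) g) ^ i = (QuotientGroup.mk' A) x := by
        have htop : Subgroup.zpowers ((QuotientGroup.mk' A) g) = ⊤ :=
          zpowers_eq_top_of_prime_card hcard hpig1
        have : (QuotientGroup.mk' A) x ∈ Subgroup.zpowers ((QuotientGroup.mk' A) g) := htop ▸ Subgroup.mem_top _
        exact Subgroup.mem_zpowers_iff.mp this
      set j : ℕ := (i % (p : ℤ)).toNat with hj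
      have hij : g ^ i = g ^ j := by
        have h0 : (0 : ℤ) ≤ i % p := Int.emod_nonneg i (by exact_mod_cast hp.ne_zero)
        have h1 : g ^ (i % (p : ℤ)) = g ^ (j : ℤ) := by
          rw [hj, Int.toNat_of_nonneg h0]
        have h2 : g ^ i = g ^ (i % (p : ℤ)) := by
          conv_lhs => rw [← Int.emod_add_mul_ediv i p]
          rw [zpow_add, zpow_mul]
          norm_cast
          rw [hgp, one_zpow, mul_one]
        rw [h2, h1, zpow_natCast]
      have hxA : x * (g ^ j)⁻¹ ∈ A := by
        rw [← QuotientGroup.eq_one_iff (x * (g ^ j)⁻¹)]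
        have : (QuotientGroup.mk' A) x = (QuotientGroup.mk' A) (g ^ j) := by
          rw [← hi, ← hij, map_zpow]
        show (QuotientGroup.mk' A) (x * (g ^ j)⁻¹) = 1
        rw [map_mul, map_inv, this, mul_inv_cancel]
      set a : ↥A := ⟨x * (g ^ j)⁻¹, hxA⟩ with ha
      have hxa : x = (a : G) * g ^ j := by
        rw [ha]; simp
      -- main computation
      have hveq : (v : G) = (a : G) * (g ^ j * (u : G) * (g ^ j)⁻¹) * (g * (a : G)⁻¹ * g⁻¹) := by
        have h1 : (v : G) * g = (a : G) * (g ^ j * (u : G) * (g ^ j)⁻¹) * (g * (a : G)⁻¹ * g⁻¹) * g := by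
          rw [← hxeq, hxa]
          group
        exact mul_right_cancel h1.symm ▸ (mul_right_cancel h1).symm
      have hveq2 : v = a * (sigmaMap A g)^[j] u * (sigmaMap A g) a⁻¹ := by
        apply Subtype.coe_injective
        push_cast [sigmaMap_iterate, sigmaMap_coe]
        exact hveq
      obtain ⟨b, hb⟩ := claimN j u
      refine ⟨b * a⁻¹, ?_⟩
      rw [tMap_mul, hveq2, hb, hseq a⁻¹]
      simp only [mul_assoc, hAlc, hAc, inv_mul_cancel_left, mul_inv_cancel_left, inv_mul_cancel, mul_inv_cancel, one_mul, mul_one]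
  · -- Part 4
    intro P hP
    haveI : Finite ↥P := Nat.finite_of_card_ne_zero (by rw [hP]; exact hp.ne_zero)
    obtain ⟨h, hhP, hh1⟩ : ∃ h ∈ P, h ≠ (1 : G) := by
      rcases P.bot_or_exists_ne_one with hbot | h
      · rw [hbot, Subgroup.card_bot] at hP
        exact absurd hP.symm hp.one_lt.ne'
      · exact h
    have hhord : orderOf h = p := by
      have h1 : orderOf (⟨h, hhP⟩ : ↥P) ∣ Nat.card ↥P := orderOf_dvd_natCard _
      rw [hP, Subgroup.orderOf_mk] at h1
      rcases (Nat.Prime.eq_one_or_self_of_dvd hp _ h1) with h2 | h2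
      · exact absurd (orderOf_eq_one_iff.mp h2) hh1
      · exact h2
    have hhp : h ^ p = 1 := by rw [← hhord]; exact pow_orderOf_eq_one h
    have hhA : h ∉ A := by
      intro hmem
      apply hh1
      have h1 : (⟨h, hmem⟩ : ↥A) ^ p = 1 := by ext; push_cast; exact hhp
      exact congrArg Subtype.val (tf _ p hp.ne_zero h1)
    have hpih1 : (QuotientGroup.mk' A) h ≠ 1 := by
      simpa [QuotientGroup.mk'_apply, QuotientGroup.eq_one_iff] using hhA
    obtain ⟨m, hm⟩ : ∃ m : ℤ, ((QuotientGroup.mk' A) h) ^ m = (QuotientGroup.mk' A) g := by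
      have htop : Subgroup.zpowers ((QuotientGroup.mk' A) h) = ⊤ :=
        zpowers_eq_top_of_prime_card hcard hpih1
      have : (QuotientGroup.mk' A) g ∈ Subgroup.zpowers ((QuotientGroup.mk' A) h) := htop ▸ Subgroup.mem_top _
      exact Subgroup.mem_zpowers_iff.mp this
    set h2el : G := h ^ m with hh2
    have hh2P : h2el ∈ P := Subgroup.zpow_mem P hhP m
    have hh2p : h2el ^ p = 1 := by
      rw [hh2, ← zpow_natCast (h ^ m) p, ← zpow_mul, mul_comm, zpow_mul, zpow_natCast, hhp,
        one_zpow]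
    have hpih2 : (QuotientGroup.mk' A) h2el = (QuotientGroup.mk' A) g := by rw [hh2, map_zpow, hm]
    have huA : h2el * g⁻¹ ∈ A := by
      rw [← QuotientGroup.eq_one_iff (h2el * g⁻¹)]
      show (QuotientGroup.mk' A) (h2el * g⁻¹) = 1
      rw [map_mul, map_inv, hpih2, mul_inv_cancel]
    set u : ↥A := ⟨h2el * g⁻¹, huA⟩ with hu
    have hug : (u : G) * g = h2el := by rw [hu]; simp
    have hunorm : normMap A g p u = 1 := by
      apply Subtype.ext
      show ((normMap A g p u : ↥A) : G) = ((1 : ↥A) : G)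
      have h2 := key_pow g (u : G) p
      rw [hug, hh2p, hgp, mul_one] at h2
      show ((List.range p).map fun i => g ^ i * (u : G) * (g ^ i)⁻¹).prod = ((1 : ↥A) : G)
      rw [← h2]
      rfl
    have hh21 : h2el ≠ 1 := by
      intro h1
      apply hpig1
      rw [← hpih2, h1, map_one]
    have hh2ord : orderOf h2el = p := orderOf_eq_prime hh2p hh21
    have hle : Subgroup.zpowers h2el ≤ P := Subgroup.zpowers_le.mpr hh2P
    have hZP : Subgroup.zpowers h2el = P := by
      apply Subgroup.eq_of_le_of_card_ge hle
      rw [hP, Nat.card_zpowers, hh2ord]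
    refine ⟨u, hunorm, 1, ?_⟩
    rw [MonoidHom.map_zpowers]
    have h3 : (MulAut.conj (1 : G)).toMonoidHom ((u : G) * g) = (u : G) * g := by simp
    rw [h3, hug, hZP]
end
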